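/- arXiv:1211.3106 — 5 statements merged into one kernel-verified Lean document; each statement's English description precedes it below -/
import Mathlib

section
/- For every finite list of graphs H_1, …, H_t there exists an integer N_0 such that for every n > N_0 and every symmetric n×n matrix Π with entries in [0,1] and zero diagonal, there exists an n-vertex graph G* supported on Π such that |d(H_i; G*) − E_{G∼G(Π)}[d(H_i; G)]| ≤ 1/√n for every i = 1, …, t. -/
open Finset

open scoped Classical

/-- The induced density `d(H;G)`: the probability that a uniformly random
`|V(H)|`-element subset of `V(G)` induces a subgraph isomorphic to `H`. -/
noncomputable def inducedDensity {W V : Type*} [Fintype W] [Fintype V] [DecidableEq V]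
    (H : SimpleGraph W) (G : SimpleGraph V) : ℝ :=
  (((univ : Finset V).powersetCard (Fintype.card W)).filter
      (fun S => Nonempty (H ≃g G.induce (S : Set V)))).card /
    ((univ : Finset V).powersetCard (Fintype.card W)).card

/-- The number of edges of `G` spanned by the vertex set `S`. -/
noncomputable def edgesIn {V : Type*} [Fintype V] [DecidableEq V]
    (G : SimpleGraph V) (S : Finset V) : ℕ :=
  ((S.powersetCard 2).filter (fun T => ∀ x ∈ T, ∀ y ∈ T, x ≠ y → G.Adj x y)).card

/-- `localProfile G i = p_i(G)`: the probability that a uniformly random 3-element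
subset of `V(G)` spans exactly `i` edges. -/
noncomputable def localProfile {V : Type*} [Fintype V] [DecidableEq V]
    (G : SimpleGraph V) (i : ℕ) : ℝ :=
  (((univ : Finset V).powersetCard 3).filter (fun S => edgesIn G S = i)).card /
    ((univ : Finset V).powersetCard 3).card

/-- The probability that the random graph `G(Π)` (each pair `{i,j}` an edge independently
with probability `Π i j`) equals the graph `G`. -/
noncomputable def graphProb (n : ℕ) (P : Fin n → Fin n → ℝ) (G : SimpleGraph (Fin n)) : ℝ :=
  ∏ p ∈ (univ : Finset (Fin n × Fin n)).filter (fun p => p.1 < p.2),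
    (if G.Adj p.1 p.2 then P p.1 p.2 else 1 - P p.1 p.2)

/-- The expected induced density `E_{G ∼ G(Π)}[d(H;G)]`. -/
noncomputable def expDensity {W : Type*} [Fintype W] (n : ℕ) (P : Fin n → Fin n → ℝ)
    (H : SimpleGraph W) : ℝ :=
  ∑ G : SimpleGraph (Fin n), graphProb n P G * inducedDensity H G

/-- The probability of the event `E` under the random graph `G(Π)`. -/
noncomputable def eventProb (n : ℕ) (P : Fin n → Fin n → ℝ)
    (E : SimpleGraph (Fin n) → Prop) : ℝ :=
  ∑ G ∈ (univ : Finset (SimpleGraph (Fin n))).filter E, graphProb n P G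

set_option maxHeartbeats 1000000

section ProbLemmas
variable {ι : Type*} [Fintype ι]

lemma sum_prod_bool_eq_one [instP : Fintype (ι → Bool)] (w : ι → Bool → ℝ)
    (hw : ∀ i, w i false + w i true = 1) :
    ∑ f : ι → Bool, ∏ i, w i (f i) = 1 := by
  classical
  cases Subsingleton.elim instP
    (@Pi.instFintype ι (fun _ => Bool) (Classical.decEq ι) _ _)
  rw [← Fintype.prod_sum]
  rw [Finset.prod_eq_one]
  intro i _
  rw [Fintype.sum_bool, add_comm]
  exact hw i

lemma exists_le_expectation {α : Type*} [Fintype α] (p f : α → ℝ)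
    (hp : ∀ a, 0 ≤ p a) (hsum : ∑ a, p a = 1) :
    ∃ a, 0 < p a ∧ f a ≤ ∑ b, p b * f b := by
  by_contra hc
  push_neg at hc
  have h2 : ∃ a, p a ≠ 0 := by
    by_contra h
    push_neg at h
    simp [h] at hsum
  obtain ⟨a₀, ha₀'⟩ := h2
  have ha₀ : 0 < p a₀ := (hp a₀).lt_of_ne (Ne.symm ha₀')
  have h1 : ∀ a ∈ Finset.univ, p a * (∑ b, p b * f b) ≤ p a * f a := by
    intro a _
    rcases (hp a).lt_or_eq with h | h
    · exact le_of_lt (mul_lt_mul_of_pos_left (hc a h) h)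
    · simp [← h]
  have hstrict : ∑ a, p a * (∑ b, p b * f b) < ∑ a, p a * f a :=
    Finset.sum_lt_sum h1 ⟨a₀, Finset.mem_univ _,
      mul_lt_mul_of_pos_left (hc a₀ ha₀) ha₀⟩
  rw [← Finset.sum_mul, hsum, one_mul] at hstrict
  exact lt_irrefl _ hstrict

lemma indep_factor [instP : Fintype (ι → Bool)] (w : ι → Bool → ℝ)
    (hw : ∀ i, w i false + w i true = 1)
    (p : ι → Prop) (φ ψ : (ι → Bool) → ℝ)
    (hφ : ∀ f g : ι → Bool, (∀ i, p i → f i = g i) → φ f = φ g)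
    (hψ : ∀ f g : ι → Bool, (∀ i, ¬ p i → f i = g i) → ψ f = ψ g) :
    ∑ f : ι → Bool, (∏ i, w i (f i)) * (φ f * ψ f)
      = (∑ f : ι → Bool, (∏ i, w i (f i)) * φ f) *
        (∑ f : ι → Bool, (∏ i, w i (f i)) * ψ f) := by
  classical
  cases Subsingleton.elim instP
    (@Pi.instFintype ι (fun _ => Bool) (Classical.decEq ι) _ _)
  set e := Equiv.piEquivPiSubtypeProd p (fun _ : ι => Bool) with he
  have key : ∀ F : (ι → Bool) → ℝ,
      ∑ f : ι → Bool, F f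
        = ∑ gh : (∀ _ : {x // p x}, Bool) × (∀ _ : {x // ¬ p x}, Bool), F (e.symm gh) :=
    fun F => (Fintype.sum_equiv e.symm (fun gh => F (e.symm gh)) F (fun _ => rfl)).symm
  -- reconstruction
  set r : (∀ _ : {x // p x}, Bool) → (∀ _ : {x // ¬ p x}, Bool) → (ι → Bool) :=
    fun g h => e.symm (g, h) with hr
  have hrval : ∀ g h i, r g h i = if hp : p i then g ⟨i, hp⟩ else h ⟨i, hp⟩ := by
    intro g h i; rfl
  have hprod : ∀ g h, (∏ i, w i (r g h i))
      = (∏ a : {x // p x}, w a (g a)) * (∏ b : {x // ¬ p x}, w b (h b)) := by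
    intro g h
    rw [← Fintype.prod_subtype_mul_prod_subtype p (fun i => w i (r g h i))]
    congr 1
    · apply Finset.prod_congr rfl
      intro a _
      rw [hrval]
      rw [dif_pos a.2]
    · apply Finset.prod_congr rfl
      intro b _
      rw [hrval]
      rw [dif_neg b.2]
  have hΦ : ∀ g h h', φ (r g h) = φ (r g h') := by
    intro g h h'
    apply hφ
    intro i hi
    rw [hrval, hrval, dif_pos hi, dif_pos hi]
  have hΨ : ∀ g g' h, ψ (r g h) = ψ (r g' h) := by
    intro g g' h
    apply hψ
    intro i hi
    rw [hrval, hrval, dif_neg hi, dif_neg hi]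
  have hφr : ∀ g h, φ (r g h) = φ (r g (fun _ => false)) := fun g h => hΦ g h (fun _ => false)
  have hψr : ∀ g h, ψ (r g h) = ψ (r (fun _ => false) h) := fun g h => hΨ g (fun _ => false) h
  have hsub1 : ∑ g : (∀ _ : {x // p x}, Bool), ∏ a : {x // p x}, w a (g a) = 1 := by
    have h := sum_prod_bool_eq_one (fun (a : {x // p x}) b => w a.1 b) (fun a => hw a.1)
    exact h
  have hsub2 : ∑ h : (∀ _ : {x // ¬ p x}, Bool), ∏ b : {x // ¬ p x}, w b (h b) = 1 := by
    have h := sum_prod_bool_eq_one (fun (b : {x // ¬ p x}) c => w b.1 c) (fun b => hw b.1)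
    exact h
  have L : ∑ f : ι → Bool, (∏ i, w i (f i)) * (φ f * ψ f)
      = (∑ g : (∀ _ : {x // p x}, Bool), (∏ a : {x // p x}, w a (g a)) * φ (r g (fun _ => false))) *
        (∑ h : (∀ _ : {x // ¬ p x}, Bool), (∏ b : {x // ¬ p x}, w b (h b)) * ψ (r (fun _ => false) h)) := by
    rw [key, Fintype.sum_prod_type, Finset.sum_mul_sum]
    apply Finset.sum_congr rfl
    intro g _
    apply Finset.sum_congr rfl
    intro h _
    have : e.symm (g, h) = r g h := rfl
    rw [this, hprod, hφr, hψr]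
    ring
  have R1 : ∑ f : ι → Bool, (∏ i, w i (f i)) * φ f
      = ∑ g : (∀ _ : {x // p x}, Bool), (∏ a : {x // p x}, w a (g a)) * φ (r g (fun _ => false)) := by
    rw [key, Fintype.sum_prod_type]
    have : ∀ g : (∀ _ : {x // p x}, Bool),
        (∑ h : (∀ _ : {x // ¬ p x}, Bool),
          (∏ i, w i (e.symm (g, h) i)) * φ (e.symm (g, h)))
        = (∏ a : {x // p x}, w a (g a)) * φ (r g (fun _ => false)) := by
      intro g
      have : ∀ h, (∏ i, w i (e.symm (g, h) i)) * φ (e.symm (g, h))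
          = ((∏ a : {x // p x}, w a (g a)) * φ (r g (fun _ => false))) * (∏ b : {x // ¬ p x}, w b (h b)) := by
        intro h
        have h1 : e.symm (g, h) = r g h := rfl
        rw [h1, hprod, hφr]
        ring
      rw [Finset.sum_congr rfl (fun h _ => this h), ← Finset.mul_sum, hsub2, mul_one]
    exact Finset.sum_congr rfl (fun g _ => this g)
  have R2 : ∑ f : ι → Bool, (∏ i, w i (f i)) * ψ f
      = ∑ h : (∀ _ : {x // ¬ p x}, Bool), (∏ b : {x // ¬ p x}, w b (h b)) * ψ (r (fun _ => false) h) := by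
    rw [key, Fintype.sum_prod_type]
    have hx : ∀ g : (∀ _ : {x // p x}, Bool),
        (∑ h : (∀ _ : {x // ¬ p x}, Bool),
          (∏ i, w i (e.symm (g, h) i)) * ψ (e.symm (g, h)))
        = (∏ a : {x // p x}, w a (g a)) *
            ∑ h : (∀ _ : {x // ¬ p x}, Bool), (∏ b : {x // ¬ p x}, w b (h b)) * ψ (r (fun _ => false) h) := by
      intro g
      rw [Finset.mul_sum]
      apply Finset.sum_congr rfl
      intro h _
      have h1 : e.symm (g, h) = r g h := rfl
      rw [h1, hprod, hψr]
      ring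
    rw [Finset.sum_congr rfl (fun g _ => hx g), ← Finset.sum_mul, hsub1, one_mul]
  rw [L, R1, R2]
end ProbLemmas

lemma sum_univ_ext {α M : Type*} [AddCommMonoid M] {i1 i2 : Fintype α} (F G : α → M)
    (h : ∀ a, F a = G a) :
    @Finset.sum α M _ (@Finset.univ α i1) F = @Finset.sum α M _ (@Finset.univ α i2) G := by
  cases Subsingleton.elim i1 i2
  exact Finset.sum_congr rfl (fun a _ => h a)

section GraphEncoding
variable {n : ℕ}


abbrev EdgeIdx (n : ℕ) := {p : Fin n × Fin n // p.1 < p.2}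

noncomputable def wt (n : ℕ) (P : Fin n → Fin n → ℝ) (e : EdgeIdx n) (b : Bool) : ℝ :=
  if b then P e.1.1 e.1.2 else 1 - P e.1.1 e.1.2

lemma wt_sum (P : Fin n → Fin n → ℝ) (e : EdgeIdx n) :
    wt n P e false + wt n P e true = 1 := by
  simp [wt]

def graphOfFun (f : EdgeIdx n → Bool) : SimpleGraph (Fin n) where
  Adj i j := (∃ h : i < j, f ⟨(i, j), h⟩ = true) ∨ (∃ h : j < i, f ⟨(j, i), h⟩ = true)
  symm := by
    constructor
    intro i j h
    exact h.symm
  loopless := by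
    constructor
    intro i h
    rcases h with ⟨h, _⟩ | ⟨h, _⟩ <;> exact lt_irrefl i h

lemma graphOfFun_adj_lt (f : EdgeIdx n → Bool) {i j : Fin n} (h : i < j) :
    (graphOfFun f).Adj i j ↔ f ⟨(i, j), h⟩ = true := by
  constructor
  · rintro (⟨h', hf⟩ | ⟨h', hf⟩)
    · exact hf
    · exact absurd h (lt_asymm h')
  · intro hf
    exact Or.inl ⟨h, hf⟩

noncomputable def graphEquiv (n : ℕ) : (EdgeIdx n → Bool) ≃ SimpleGraph (Fin n) where
  toFun := graphOfFun
  invFun G e := if G.Adj e.1.1 e.1.2 then true else false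
  left_inv f := by
    funext e
    obtain ⟨⟨i, j⟩, hij⟩ := e
    simp only
    cases hb : f ⟨(i, j), hij⟩
    · rw [if_neg]
      rw [graphOfFun_adj_lt f hij, hb]
      simp
    · rw [if_pos ((graphOfFun_adj_lt f hij).2 hb)]
  right_inv G := by
    ext i j
    constructor
    · rintro (⟨h, hf⟩ | ⟨h, hf⟩)
      · simp only at hf
        by_cases hGa : G.Adj i j
        · exact hGa
        · rw [if_neg hGa] at hf; exact absurd hf (by simp)
      · simp only at hf
        by_cases hGa : G.Adj j i
        · exact hGa.symm
        · rw [if_neg hGa] at hf; exact absurd hf (by simp)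
    · intro hadj
      rcases lt_trichotomy i j with h | h | h
      · exact Or.inl ⟨h, by simp only; rw [if_pos hadj]⟩
      · exact absurd (h ▸ hadj) (G.loopless.irrefl i)
      · exact Or.inr ⟨h, by simp only; rw [if_pos hadj.symm]⟩

lemma graphProb_graphOfFun (P : Fin n → Fin n → ℝ) (f : EdgeIdx n → Bool) :
    graphProb n P (graphOfFun f) = ∏ e : EdgeIdx n, wt n P e (f e) := by
  rw [graphProb]
  rw [Finset.prod_subtype (p := fun p : Fin n × Fin n => p.1 < p.2)
    ((univ : Finset (Fin n × Fin n)).filter (fun p => p.1 < p.2))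
    (by intro x; simp) (fun p => if (graphOfFun f).Adj p.1 p.2 then P p.1 p.2 else 1 - P p.1 p.2)]
  apply Finset.prod_congr rfl
  intro e _
  obtain ⟨⟨i, j⟩, hij⟩ := e
  have hadj := graphOfFun_adj_lt f hij
  cases hb : f ⟨(i, j), hij⟩
  · rw [if_neg (by rw [hadj, hb]; simp), wt, if_neg (by simp)]
  · rw [if_pos (hadj.2 hb), wt, if_pos rfl]

lemma sum_graphs_eq (F : SimpleGraph (Fin n) → ℝ) :
    ∑ G : SimpleGraph (Fin n), F G = ∑ f : EdgeIdx n → Bool, F (graphOfFun f) :=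
  (Fintype.sum_equiv (graphEquiv n) (fun f => F (graphOfFun f)) F (fun _ => rfl)).symm

lemma induce_eq_of_agree (f g : EdgeIdx n → Bool) (S : Finset (Fin n))
    (hagree : ∀ e : EdgeIdx n, e.1.1 ∈ S → e.1.2 ∈ S → f e = g e) :
    (graphOfFun f).induce (S : Set (Fin n)) = (graphOfFun g).induce (S : Set (Fin n)) := by
  ext ⟨i, hi⟩ ⟨j, hj⟩
  have hi' : i ∈ S := by simpa using hi
  have hj' : j ∈ S := by simpa using hj
  show (graphOfFun f).Adj i j ↔ (graphOfFun g).Adj i j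
  rcases lt_trichotomy i j with h | h | h
  · rw [graphOfFun_adj_lt f h, graphOfFun_adj_lt g h, hagree ⟨(i, j), h⟩ hi' hj']
  · subst h
    simp [SimpleGraph.irrefl]
  · rw [(graphOfFun f).adj_comm, (graphOfFun g).adj_comm,
      graphOfFun_adj_lt f h, graphOfFun_adj_lt g h, hagree ⟨(j, i), h⟩ hj' hi']

end GraphEncoding

section Expectation
variable {n : ℕ} (P : Fin n → Fin n → ℝ)

noncomputable def gExp (F : SimpleGraph (Fin n) → ℝ) : ℝ :=
  ∑ G : SimpleGraph (Fin n), graphProb n P G * F G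

lemma graphProb_nonneg (hP : ∀ i j, P i j ∈ Set.Icc (0:ℝ) 1) (G : SimpleGraph (Fin n)) :
    0 ≤ graphProb n P G := by
  apply Finset.prod_nonneg
  intro p _
  split
  · exact (hP p.1 p.2).1
  · have := (hP p.1 p.2).2; linarith

lemma sum_graphProb : ∑ G : SimpleGraph (Fin n), graphProb n P G = 1 := by
  rw [sum_graphs_eq]
  have h := sum_prod_bool_eq_one (wt n P) (wt_sum P)
  have h2 : ∑ f : EdgeIdx n → Bool, graphProb n P (graphOfFun f)
      = ∑ f : EdgeIdx n → Bool, ∏ e : EdgeIdx n, wt n P e (f e) :=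
    Finset.sum_congr rfl (fun f _ => graphProb_graphOfFun P f)
  rw [h2]
  exact h

lemma gExp_sum {κ : Type*} (A : Finset κ) (F : κ → SimpleGraph (Fin n) → ℝ) :
    gExp P (fun G => ∑ k ∈ A, F k G) = ∑ k ∈ A, gExp P (F k) := by
  simp only [gExp, Finset.mul_sum]
  rw [Finset.sum_comm]

lemma gExp_mono (hP : ∀ i j, P i j ∈ Set.Icc (0:ℝ) 1) (F₁ F₂ : SimpleGraph (Fin n) → ℝ)
    (h : ∀ G, F₁ G ≤ F₂ G) : gExp P F₁ ≤ gExp P F₂ :=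
  Finset.sum_le_sum (fun G _ => mul_le_mul_of_nonneg_left (h G) (graphProb_nonneg P hP G))

lemma gExp_nonneg (hP : ∀ i j, P i j ∈ Set.Icc (0:ℝ) 1) (F : SimpleGraph (Fin n) → ℝ)
    (hF : ∀ G, 0 ≤ F G) : 0 ≤ gExp P F :=
  Finset.sum_nonneg (fun G _ => mul_nonneg (graphProb_nonneg P hP G) (hF G))

lemma gExp_const (c : ℝ) : gExp P (fun _ => c) = c := by
  rw [gExp, ← Finset.sum_mul, sum_graphProb, one_mul]

lemma gExp_le_one (hP : ∀ i j, P i j ∈ Set.Icc (0:ℝ) 1) (F : SimpleGraph (Fin n) → ℝ)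
    (hF : ∀ G, F G ≤ 1) : gExp P F ≤ 1 := by
  have := gExp_mono P hP F (fun _ => 1) hF
  rwa [gExp_const] at this

lemma gExp_div (F : SimpleGraph (Fin n) → ℝ) (c : ℝ) :
    gExp P (fun G => F G / c) = gExp P F / c := by
  simp only [gExp, Finset.sum_div]
  apply Finset.sum_congr rfl
  intro G _
  ring

lemma gExp_cov (F₁ F₂ : SimpleGraph (Fin n) → ℝ) :
    gExp P (fun G => (F₁ G - gExp P F₁) * (F₂ G - gExp P F₂))
      = gExp P (fun G => F₁ G * F₂ G) - gExp P F₁ * gExp P F₂ := by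
  have hs := sum_graphProb (n := n) P
  simp only [gExp]
  have h : ∀ G, graphProb n P G *
      ((F₁ G - ∑ G' : SimpleGraph (Fin n), graphProb n P G' * F₁ G') *
       (F₂ G - ∑ G' : SimpleGraph (Fin n), graphProb n P G' * F₂ G'))
      = graphProb n P G * (F₁ G * F₂ G)
        - (∑ G' : SimpleGraph (Fin n), graphProb n P G' * F₂ G') * (graphProb n P G * F₁ G)
        - (∑ G' : SimpleGraph (Fin n), graphProb n P G' * F₁ G') * (graphProb n P G * F₂ G)
        + ((∑ G' : SimpleGraph (Fin n), graphProb n P G' * F₁ G') *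
           (∑ G' : SimpleGraph (Fin n), graphProb n P G' * F₂ G')) * graphProb n P G := by
    intro G; ring
  rw [Finset.sum_congr rfl (fun G _ => h G), Finset.sum_add_distrib, Finset.sum_sub_distrib,
    Finset.sum_sub_distrib, ← Finset.mul_sum, ← Finset.mul_sum, ← Finset.mul_sum, hs]
  ring

end Expectation

section Indicator
variable {n : ℕ}

noncomputable def XS {mH : ℕ} (H : SimpleGraph (Fin mH)) (S : Finset (Fin n))
    (G : SimpleGraph (Fin n)) : ℝ :=
  if Nonempty (H ≃g G.induce (S : Set (Fin n))) then 1 else 0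

lemma XS_nonneg {mH : ℕ} (H : SimpleGraph (Fin mH)) (S : Finset (Fin n))
    (G : SimpleGraph (Fin n)) : 0 ≤ XS H S G := by
  rw [XS]; split <;> norm_num

lemma XS_le_one {mH : ℕ} (H : SimpleGraph (Fin mH)) (S : Finset (Fin n))
    (G : SimpleGraph (Fin n)) : XS H S G ≤ 1 := by
  rw [XS]; split <;> norm_num

lemma inducedDensity_eq {mH : ℕ} (H : SimpleGraph (Fin mH)) (G : SimpleGraph (Fin n)) :
    inducedDensity H G
      = (∑ S ∈ (univ : Finset (Fin n)).powersetCard mH, XS H S G) /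
        (((univ : Finset (Fin n)).powersetCard mH).card : ℝ) := by
  rw [inducedDensity]
  simp only [Fintype.card_fin]
  congr 1
  have himg : Finset.filter (fun S => Nonempty (H ≃g G.induce S))
        (do let a ← (univ : Finset (Fin n)).powersetCard mH
            pure (↑a : Set (Fin n)))
      = (((univ : Finset (Fin n)).powersetCard mH).filter
          (fun (A : Finset (Fin n)) => Nonempty (H ≃g G.induce (A : Set (Fin n))))).image
            (fun (A : Finset (Fin n)) => (A : Set (Fin n))) := by
    ext S
    simp only [Finset.mem_filter, Finset.mem_image]
    constructor
    · rintro ⟨hmem, hne⟩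
      have : ∃ a ∈ (univ : Finset (Fin n)).powersetCard mH, (↑a : Set (Fin n)) = S := by
        simpa using hmem
      obtain ⟨a, ha, rfl⟩ := this
      exact ⟨a, ⟨ha, hne⟩, rfl⟩
    · rintro ⟨a, ⟨ha, hne⟩, rfl⟩
      constructor
      · have hx : ∃ b ∈ (univ : Finset (Fin n)).powersetCard mH, (↑b : Set (Fin n)) = ↑a :=
          ⟨a, ha, rfl⟩
        simpa using hx
      · exact hne
  rw [himg, Finset.card_image_of_injOn (Finset.coe_injective.injOn)]
  rw [← Finset.sum_filter_add_sum_filter_not ((univ : Finset (Fin n)).powersetCard mH)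
    (fun (A : Finset (Fin n)) => Nonempty (H ≃g G.induce (A : Set (Fin n)))) (fun S => XS H S G)]
  have h1 : ∑ S ∈ ((univ : Finset (Fin n)).powersetCard mH).filter
      (fun (A : Finset (Fin n)) => Nonempty (H ≃g G.induce (A : Set (Fin n)))), XS H S G
      = ∑ S ∈ ((univ : Finset (Fin n)).powersetCard mH).filter
      (fun (A : Finset (Fin n)) => Nonempty (H ≃g G.induce (A : Set (Fin n)))), (1 : ℝ) := by
    apply Finset.sum_congr rfl
    intro S hS
    simp [XS, (Finset.mem_filter.1 hS).2]
  have h2 : ∑ S ∈ ((univ : Finset (Fin n)).powersetCard mH).filter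
      (fun (A : Finset (Fin n)) => ¬ Nonempty (H ≃g G.induce (A : Set (Fin n)))), XS H S G = 0 := by
    apply Finset.sum_eq_zero
    intro S hS
    simp [XS, (Finset.mem_filter.1 hS).2]
  rw [h1, h2, Finset.sum_const, nsmul_eq_mul, mul_one, add_zero]

lemma gExp_XS_mul_indep (P : Fin n → Fin n → ℝ) {m₁ m₂ : ℕ}
    (H₁ : SimpleGraph (Fin m₁)) (H₂ : SimpleGraph (Fin m₂))
    (S T : Finset (Fin n)) (hST : (S ∩ T).card ≤ 1) :
    gExp P (fun G => XS H₁ S G * XS H₂ T G) = gExp P (XS H₁ S) * gExp P (XS H₂ T) := by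
  simp only [gExp]
  rw [sum_graphs_eq (fun G => graphProb n P G * (XS H₁ S G * XS H₂ T G)),
    sum_graphs_eq (fun G => graphProb n P G * XS H₁ S G),
    sum_graphs_eq (fun G => graphProb n P G * XS H₂ T G)]
  simp only [graphProb_graphOfFun]
  have hφ : ∀ f g : EdgeIdx n → Bool,
      (∀ e : EdgeIdx n, (e.1.1 ∈ S ∧ e.1.2 ∈ S) → f e = g e) →
      XS H₁ S (graphOfFun f) = XS H₁ S (graphOfFun g) := by
    intro f g hfg
    rw [XS, XS, induce_eq_of_agree f g S (fun e h1 h2 => hfg e ⟨h1, h2⟩)]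
  have hψ : ∀ f g : EdgeIdx n → Bool,
      (∀ e : EdgeIdx n, ¬ (e.1.1 ∈ S ∧ e.1.2 ∈ S) → f e = g e) →
      XS H₂ T (graphOfFun f) = XS H₂ T (graphOfFun g) := by
    intro f g hfg
    rw [XS, XS, induce_eq_of_agree f g T]
    intro e h1 h2
    apply hfg
    rintro ⟨hs1, hs2⟩
    have hlt : e.1.1 ≠ e.1.2 := ne_of_lt e.2
    have : 1 < (S ∩ T).card :=
      Finset.one_lt_card.2 ⟨e.1.1, Finset.mem_inter.2 ⟨hs1, h1⟩,
        e.1.2, Finset.mem_inter.2 ⟨hs2, h2⟩, hlt⟩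
    omega
  have h := indep_factor (wt n P) (wt_sum P)
    (fun e : EdgeIdx n => e.1.1 ∈ S ∧ e.1.2 ∈ S)
    (fun f => XS H₁ S (graphOfFun f)) (fun f => XS H₂ T (graphOfFun f)) hφ hψ
  exact h

end Indicator
section Counting

lemma count_supersets {n mH : ℕ} (a b : Fin n) (hab : a ≠ b) :
    (((univ : Finset (Fin n)).powersetCard mH).filter (fun T => a ∈ T ∧ b ∈ T)).card
      ≤ n.choose (mH - 2) := by
  have hle : (((univ : Finset (Fin n)).powersetCard mH).filter (fun T => a ∈ T ∧ b ∈ T)).card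
      ≤ ((univ : Finset (Fin n)).powersetCard (mH - 2)).card := by
    apply Finset.card_le_card_of_injOn (fun T => T \ {a, b})
    · intro T hT
      rw [Finset.mem_coe] at hT ⊢
      rw [Finset.mem_filter] at hT
      obtain ⟨hT1, ha, hb⟩ := hT
      rw [Finset.mem_powersetCard] at hT1 ⊢
      refine ⟨Finset.subset_univ _, ?_⟩
      have hsub : {a, b} ⊆ T :=
        Finset.insert_subset_iff.2 ⟨ha, Finset.singleton_subset_iff.2 hb⟩
      rw [Finset.card_sdiff_of_subset hsub, hT1.2, Finset.card_pair hab]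
    · intro T1 h1 T2 h2 heq
      simp only [Finset.coe_filter, Set.mem_setOf_eq] at h1 h2
      have hs1 : {a, b} ⊆ T1 :=
        Finset.insert_subset_iff.2 ⟨h1.2.1, Finset.singleton_subset_iff.2 h1.2.2⟩
      have hs2 : {a, b} ⊆ T2 :=
        Finset.insert_subset_iff.2 ⟨h2.2.1, Finset.singleton_subset_iff.2 h2.2.2⟩
      simp only at heq
      have : T1 \ {a, b} ∪ {a, b} = T2 \ {a, b} ∪ {a, b} := by rw [heq]
      rwa [Finset.sdiff_union_of_subset hs1, Finset.sdiff_union_of_subset hs2] at this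
  calc (((univ : Finset (Fin n)).powersetCard mH).filter (fun T => a ∈ T ∧ b ∈ T)).card
      ≤ ((univ : Finset (Fin n)).powersetCard (mH - 2)).card := hle
    _ = n.choose (mH - 2) := by
        rw [Finset.card_powersetCard, Finset.card_univ, Fintype.card_fin]

lemma count_bad {n mH : ℕ} (S : Finset (Fin n)) (hS : S.card = mH) :
    (((univ : Finset (Fin n)).powersetCard mH).filter (fun T => 2 ≤ (S ∩ T).card)).card
      ≤ mH ^ 2 * n.choose (mH - 2) := by
  classical
  have hsub : ((univ : Finset (Fin n)).powersetCard mH).filter (fun T => 2 ≤ (S ∩ T).card)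
      ⊆ ((S ×ˢ S).filter (fun ab => ab.1 ≠ ab.2)).biUnion
          (fun ab => ((univ : Finset (Fin n)).powersetCard mH).filter
            (fun T => ab.1 ∈ T ∧ ab.2 ∈ T)) := by
    intro T hT
    rw [Finset.mem_filter] at hT
    obtain ⟨hT1, hcard⟩ := hT
    obtain ⟨x, hx, y, hy, hxy⟩ := Finset.one_lt_card.1 hcard
    rw [Finset.mem_inter] at hx hy
    rw [Finset.mem_biUnion]
    exact ⟨(x, y), Finset.mem_filter.2 ⟨Finset.mem_product.2 ⟨hx.1, hy.1⟩, hxy⟩,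
      Finset.mem_filter.2 ⟨hT1, hx.2, hy.2⟩⟩
  calc (((univ : Finset (Fin n)).powersetCard mH).filter (fun T => 2 ≤ (S ∩ T).card)).card
      ≤ (((S ×ˢ S).filter (fun ab => ab.1 ≠ ab.2)).biUnion
          (fun ab => ((univ : Finset (Fin n)).powersetCard mH).filter
            (fun T => ab.1 ∈ T ∧ ab.2 ∈ T))).card := Finset.card_le_card hsub
    _ ≤ ∑ ab ∈ (S ×ˢ S).filter (fun ab => ab.1 ≠ ab.2),
          (((univ : Finset (Fin n)).powersetCard mH).filter
            (fun T => ab.1 ∈ T ∧ ab.2 ∈ T)).card := Finset.card_biUnion_le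
    _ ≤ ∑ _ab ∈ (S ×ˢ S).filter (fun ab => ab.1 ≠ ab.2), n.choose (mH - 2) := by
        apply Finset.sum_le_sum
        intro ab hab
        exact count_supersets ab.1 ab.2 (Finset.mem_filter.1 hab).2
    _ = ((S ×ˢ S).filter (fun ab => ab.1 ≠ ab.2)).card * n.choose (mH - 2) := by
        rw [Finset.sum_const, smul_eq_mul]
    _ ≤ mH ^ 2 * n.choose (mH - 2) := by
        apply Nat.mul_le_mul_right
        calc ((S ×ˢ S).filter (fun ab => ab.1 ≠ ab.2)).card
            ≤ (S ×ˢ S).card := Finset.card_filter_le _ _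
          _ = mH ^ 2 := by rw [Finset.card_product, hS, pow_two]

lemma choose_ratio (n k : ℕ) :
    n.choose (k + 2) * ((k + 2) * (k + 1)) = n.choose k * ((n - k) * (n - k - 1)) := by
  have A := Nat.choose_succ_right_eq n k
  have B := Nat.choose_succ_right_eq n (k + 1)
  have hnk : n - (k + 1) = n - k - 1 := by omega
  calc n.choose (k + 2) * ((k + 2) * (k + 1))
      = (n.choose (k + 2) * (k + 2)) * (k + 1) := by ring
    _ = (n.choose (k + 1) * (n - (k + 1))) * (k + 1) := by rw [B]
    _ = (n.choose (k + 1) * (k + 1)) * (n - (k + 1)) := by ring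
    _ = (n.choose k * (n - k)) * (n - (k + 1)) := by rw [A]
    _ = n.choose k * ((n - k) * (n - k - 1)) := by rw [hnk]; ring

end Counting
section Variance
variable {n : ℕ}

lemma gExp_congr (P : Fin n → Fin n → ℝ) (F₁ F₂ : SimpleGraph (Fin n) → ℝ)
    (h : ∀ G, F₁ G = F₂ G) : gExp P F₁ = gExp P F₂ := by
  simp only [gExp]
  exact Finset.sum_congr rfl (fun G _ => by rw [h G])

lemma variance_le (P : Fin n → Fin n → ℝ) (hP : ∀ i j, P i j ∈ Set.Icc (0:ℝ) 1)
    {mH : ℕ} (H : SimpleGraph (Fin mH)) (hmn : mH ≤ n) :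
    gExp P (fun G => (inducedDensity H G - expDensity n P H) ^ 2)
      ≤ (mH : ℝ) ^ 4 / ((((n : ℝ) - mH) + 1) * (((n : ℝ) - mH) + 1)) := by
  have hCcard : ((univ : Finset (Fin n)).powersetCard mH).card = n.choose mH := by
    rw [Finset.card_powersetCard, Finset.card_univ, Fintype.card_fin]
  have hCpos : 0 < n.choose mH := Nat.choose_pos hmn
  have hc : (0:ℝ) < (((univ : Finset (Fin n)).powersetCard mH).card : ℝ) := by
    rw [hCcard]; exact_mod_cast hCpos
  set c : ℝ := (((univ : Finset (Fin n)).powersetCard mH).card : ℝ) with hcdef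
  -- expected density as gExp of the sum
  have hED : expDensity n P H
      = gExp P (fun G' => (∑ S ∈ (univ : Finset (Fin n)).powersetCard mH, XS H S G') / c) := by
    rw [expDensity, gExp]
    exact Finset.sum_congr rfl (fun G' _ => by rw [inducedDensity_eq H G'])
  -- difference formula
  have key1 : ∀ G, inducedDensity H G - expDensity n P H
      = ((∑ S ∈ (univ : Finset (Fin n)).powersetCard mH, XS H S G)
          - gExp P (fun G' => ∑ S ∈ (univ : Finset (Fin n)).powersetCard mH, XS H S G')) / c := by
    intro G
    rw [inducedDensity_eq H G, hED, gExp_div, div_sub_div_same]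
  -- variance scaled
  have key2 : gExp P (fun G => (inducedDensity H G - expDensity n P H) ^ 2)
      = gExp P (fun G => ((∑ S ∈ (univ : Finset (Fin n)).powersetCard mH, XS H S G)
          - gExp P (fun G' => ∑ S ∈ (univ : Finset (Fin n)).powersetCard mH, XS H S G')) ^ 2)
            / (c * c) := by
    rw [← gExp_div]
    apply gExp_congr
    intro G
    rw [key1 G, div_pow, show c ^ 2 = c * c from pow_two c]
  -- covariance expansion
  have expand : gExp P (fun G => ((∑ S ∈ (univ : Finset (Fin n)).powersetCard mH, XS H S G)
        - gExp P (fun G' => ∑ S ∈ (univ : Finset (Fin n)).powersetCard mH, XS H S G')) ^ 2)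
      = ∑ S ∈ (univ : Finset (Fin n)).powersetCard mH,
          ∑ T ∈ (univ : Finset (Fin n)).powersetCard mH,
            (gExp P (fun G => XS H S G * XS H T G) - gExp P (XS H S) * gExp P (XS H T)) := by
    have hEY : gExp P (fun G' => ∑ S ∈ (univ : Finset (Fin n)).powersetCard mH, XS H S G')
        = ∑ S ∈ (univ : Finset (Fin n)).powersetCard mH, gExp P (XS H S) :=
      gExp_sum P _ (fun S => XS H S)
    have e1 : ∀ G, ((∑ S ∈ (univ : Finset (Fin n)).powersetCard mH, XS H S G)
        - gExp P (fun G' => ∑ S ∈ (univ : Finset (Fin n)).powersetCard mH, XS H S G')) ^ 2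
        = ∑ S ∈ (univ : Finset (Fin n)).powersetCard mH,
            ∑ T ∈ (univ : Finset (Fin n)).powersetCard mH,
              (XS H S G - gExp P (XS H S)) * (XS H T G - gExp P (XS H T)) := by
      intro G
      rw [hEY, ← Finset.sum_sub_distrib, pow_two, Finset.sum_mul_sum]
    rw [gExp_congr P _ _ e1, gExp_sum]
    apply Finset.sum_congr rfl
    intro S _
    rw [gExp_sum]
    apply Finset.sum_congr rfl
    intro T _
    exact gExp_cov P (XS H S) (XS H T)
  -- per-term bound
  have hterm : ∀ S ∈ (univ : Finset (Fin n)).powersetCard mH,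
      ∀ T ∈ (univ : Finset (Fin n)).powersetCard mH,
      gExp P (fun G => XS H S G * XS H T G) - gExp P (XS H S) * gExp P (XS H T)
        ≤ (if 2 ≤ (S ∩ T).card then (1:ℝ) else 0) := by
    intro S _ T _
    by_cases hst : 2 ≤ (S ∩ T).card
    · rw [if_pos hst]
      have h1 : gExp P (fun G => XS H S G * XS H T G) ≤ 1 :=
        gExp_le_one P hP _ (fun G =>
          mul_le_one₀ (XS_le_one H S G) (XS_nonneg H T G) (XS_le_one H T G))
      have h2 : 0 ≤ gExp P (XS H S) * gExp P (XS H T) :=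
        mul_nonneg (gExp_nonneg P hP _ (fun G => XS_nonneg H S G))
          (gExp_nonneg P hP _ (fun G => XS_nonneg H T G))
      linarith
    · rw [if_neg hst, gExp_XS_mul_indep P H H S T (by omega)]
      simp
  -- sum bound
  have hsum1 : gExp P (fun G => ((∑ S ∈ (univ : Finset (Fin n)).powersetCard mH, XS H S G)
        - gExp P (fun G' => ∑ S ∈ (univ : Finset (Fin n)).powersetCard mH, XS H S G')) ^ 2)
      ≤ c * ((mH : ℝ) ^ 2 * (n.choose (mH - 2) : ℝ)) := by
    rw [expand]
    calc ∑ S ∈ (univ : Finset (Fin n)).powersetCard mH,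
          ∑ T ∈ (univ : Finset (Fin n)).powersetCard mH,
            (gExp P (fun G => XS H S G * XS H T G) - gExp P (XS H S) * gExp P (XS H T))
        ≤ ∑ S ∈ (univ : Finset (Fin n)).powersetCard mH,
            ∑ T ∈ (univ : Finset (Fin n)).powersetCard mH,
              (if 2 ≤ (S ∩ T).card then (1:ℝ) else 0) :=
          Finset.sum_le_sum (fun S hS => Finset.sum_le_sum (fun T hT => hterm S hS T hT))
      _ ≤ ∑ _S ∈ (univ : Finset (Fin n)).powersetCard mH,
            ((mH : ℝ) ^ 2 * (n.choose (mH - 2) : ℝ)) := by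
          apply Finset.sum_le_sum
          intro S hS
          have hScard : S.card = mH := (Finset.mem_powersetCard.1 hS).2
          rw [Finset.sum_boole]
          have := count_bad S hScard
          calc ((((univ : Finset (Fin n)).powersetCard mH).filter
                (fun T => 2 ≤ (S ∩ T).card)).card : ℝ)
              ≤ ((mH ^ 2 * n.choose (mH - 2) : ℕ) : ℝ) := by exact_mod_cast this
            _ = (mH : ℝ) ^ 2 * (n.choose (mH - 2) : ℝ) := by push_cast; ring
      _ = c * ((mH : ℝ) ^ 2 * (n.choose (mH - 2) : ℝ)) := by
          rw [Finset.sum_const, nsmul_eq_mul, hcdef]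
  -- put together
  rw [key2]
  by_cases hm2 : 2 ≤ mH
  · -- main case
    obtain ⟨k, hk⟩ : ∃ k, mH = k + 2 := ⟨mH - 2, by omega⟩
    set a : ℕ := n - mH with hadef
    have hna : (n : ℝ) - mH = (a : ℝ) := by
      rw [hadef]; push_cast [Nat.cast_sub hmn]; ring
    have hid : (n.choose (mH - 2) : ℝ) * (((a : ℝ) + 2) * ((a : ℝ) + 1))
        = c * ((mH : ℝ) * ((mH : ℝ) - 1)) := by
      have h1 : n - k = a + 2 := by omega
      have h2 : n - k - 1 = a + 1 := by omega
      have := choose_ratio n k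
      rw [h2, h1] at this
      have hcast : ((n.choose (k + 2) * ((k + 2) * (k + 1)) : ℕ) : ℝ)
          = ((n.choose k * ((a + 2) * (a + 1)) : ℕ) : ℝ) := by exact_mod_cast this
      push_cast at hcast
      have hmk : mH - 2 = k := by omega
      rw [hmk, hcdef, hCcard, hk]
      push_cast
      nlinarith [hcast]
    have hapos : (0:ℝ) < ((a : ℝ) + 1) * ((a : ℝ) + 1) := by positivity
    have hapos2 : (0:ℝ) < ((a : ℝ) + 2) * ((a : ℝ) + 1) := by positivity
    have hKnn : (0:ℝ) ≤ (n.choose (mH - 2) : ℝ) := Nat.cast_nonneg _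
    have hmnn : (0:ℝ) ≤ (mH : ℝ) := Nat.cast_nonneg _
    have step1 : gExp P (fun G => ((∑ S ∈ (univ : Finset (Fin n)).powersetCard mH, XS H S G)
          - gExp P (fun G' => ∑ S ∈ (univ : Finset (Fin n)).powersetCard mH, XS H S G')) ^ 2)
            / (c * c)
        ≤ ((mH : ℝ) ^ 2 * (n.choose (mH - 2) : ℝ)) / c := by
      rw [div_le_div_iff₀ (by positivity) hc]
      calc gExp P (fun G => ((∑ S ∈ (univ : Finset (Fin n)).powersetCard mH, XS H S G)
            - gExp P (fun G' => ∑ S ∈ (univ : Finset (Fin n)).powersetCard mH, XS H S G')) ^ 2) * c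
          ≤ (c * ((mH : ℝ) ^ 2 * (n.choose (mH - 2) : ℝ))) * c :=
            mul_le_mul_of_nonneg_right hsum1 (le_of_lt hc)
        _ = (mH : ℝ) ^ 2 * (n.choose (mH - 2) : ℝ) * (c * c) := by ring
    refine le_trans step1 ?_
    rw [hna, div_le_div_iff₀ hc hapos]
    -- mH² K (a+1)² ≤ mH⁴ c
    have hstep : (mH : ℝ) ^ 2 * (n.choose (mH - 2) : ℝ) * (((a:ℝ) + 1) * ((a:ℝ) + 1))
        ≤ (mH : ℝ) ^ 2 * ((n.choose (mH - 2) : ℝ) * (((a:ℝ) + 2) * ((a:ℝ) + 1))) := by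
      have h0 : (0:ℝ) ≤ (mH : ℝ) ^ 2 * (n.choose (mH - 2) : ℝ) :=
        mul_nonneg (sq_nonneg _) hKnn
      have h1 : (((a:ℝ) + 1) * ((a:ℝ) + 1)) ≤ (((a:ℝ) + 2) * ((a:ℝ) + 1)) := by
        nlinarith [Nat.cast_nonneg (α := ℝ) a]
      calc (mH : ℝ) ^ 2 * (n.choose (mH - 2) : ℝ) * (((a:ℝ) + 1) * ((a:ℝ) + 1))
          ≤ (mH : ℝ) ^ 2 * (n.choose (mH - 2) : ℝ) * (((a:ℝ) + 2) * ((a:ℝ) + 1)) :=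
            mul_le_mul_of_nonneg_left h1 h0
        _ = (mH : ℝ) ^ 2 * ((n.choose (mH - 2) : ℝ) * (((a:ℝ) + 2) * ((a:ℝ) + 1))) := by ring
    calc (mH : ℝ) ^ 2 * (n.choose (mH - 2) : ℝ) * (((a:ℝ) + 1) * ((a:ℝ) + 1))
        ≤ (mH : ℝ) ^ 2 * ((n.choose (mH - 2) : ℝ) * (((a:ℝ) + 2) * ((a:ℝ) + 1))) := hstep
      _ = (mH : ℝ) ^ 2 * (c * ((mH : ℝ) * ((mH : ℝ) - 1))) := by rw [hid]
      _ ≤ (mH : ℝ) ^ 4 * c := by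
          nlinarith [mul_nonneg hc.le (pow_nonneg hmnn 3)]
  · -- degenerate case mH ≤ 1 : every covariance vanishes
    have hdeg : ∀ S ∈ (univ : Finset (Fin n)).powersetCard mH,
        ∀ T ∈ (univ : Finset (Fin n)).powersetCard mH,
        gExp P (fun G => XS H S G * XS H T G) - gExp P (XS H S) * gExp P (XS H T) = 0 := by
      intro S hS T _
      have hScard : S.card = mH := (Finset.mem_powersetCard.1 hS).2
      have hint : (S ∩ T).card ≤ 1 := by
        have h1 : (S ∩ T).card ≤ S.card := Finset.card_le_card (Finset.inter_subset_left)
        omega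
      rw [gExp_XS_mul_indep P H H S T hint]
      ring
    have hzero : gExp P (fun G => ((∑ S ∈ (univ : Finset (Fin n)).powersetCard mH, XS H S G)
          - gExp P (fun G' => ∑ S ∈ (univ : Finset (Fin n)).powersetCard mH, XS H S G')) ^ 2)
        = 0 := by
      rw [expand]
      apply Finset.sum_eq_zero
      intro S hS
      exact Finset.sum_eq_zero (fun T hT => hdeg S hS T hT)
    rw [hzero, zero_div]
    have hden : (0:ℝ) ≤ (((n : ℝ) - mH) + 1) * (((n : ℝ) - mH) + 1) := mul_self_nonneg _
    exact div_nonneg (by positivity) hden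
end Variance
/-- For every finite list of graphs `H₁,…,H_t` there is `N₀` such that for every `n > N₀`
and every symmetric matrix `Π` with entries in `[0,1]` and zero diagonal, some `n`-vertex
graph `G*` supported on `Π` satisfies `|d(Hᵢ;G*) - E_{G∼G(Π)}[d(Hᵢ;G)]| ≤ 1/√n` for all `i`. -/
theorem random_graph_concentration (t : ℕ) (m : Fin t → ℕ)
    (H : ∀ i, SimpleGraph (Fin (m i))) :
    ∃ N₀ : ℕ, ∀ n : ℕ, N₀ < n → ∀ P : Fin n → Fin n → ℝ,
      (∀ i j, P i j = P j i) → (∀ i j, P i j ∈ Set.Icc (0 : ℝ) 1) → (∀ i, P i i = 0) →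
      ∃ G : SimpleGraph (Fin n), 0 < graphProb n P G ∧
        ∀ i, |inducedDensity (H i) G - expDensity n P (H i)| ≤ 1 / Real.sqrt n := by
  classical
  set M := Finset.univ.sup m with hM
  refine ⟨4 * (t + 1) * (M + 1) ^ 4 + 2 * M + 4, ?_⟩
  intro n hn P _hsymm hP _hdiag
  have hMn : ∀ i, m i ≤ M := fun i => Finset.le_sup (Finset.mem_univ i)
  have hMleN : M ≤ n := by
    obtain ⟨Q, hQ⟩ : ∃ Q, 4 * (t + 1) * (M + 1) ^ 4 = Q := ⟨_, rfl⟩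
    rw [hQ] at hn
    omega
  have hn0 : 0 < n := by
    obtain ⟨Q, hQ⟩ : ∃ Q, 4 * (t + 1) * (M + 1) ^ 4 = Q := ⟨_, rfl⟩
    rw [hQ] at hn
    omega
  have hxcast : 4 * ((t:ℝ) + 1) * ((M:ℝ) + 1) ^ 4 + 2 * M + 5 ≤ (n:ℝ) := by
    have h1 : 4 * (t + 1) * (M + 1) ^ 4 + 2 * M + 4 + 1 ≤ n := Nat.succ_le_of_lt hn
    have h2 : ((4 * (t + 1) * (M + 1) ^ 4 + 2 * M + 4 + 1 : ℕ) : ℝ) ≤ (n:ℝ) := by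
      exact_mod_cast h1
    push_cast at h2
    linarith
  have hMreal : (M:ℝ) ≤ (n:ℝ) := by exact_mod_cast hMleN
  have hD1 : (0:ℝ) < (n:ℝ) - M + 1 := by linarith
  -- per-i variance bound
  have hvar : ∀ i, gExp P (fun G => (inducedDensity (H i) G - expDensity n P (H i)) ^ 2)
      ≤ (M:ℝ) ^ 4 / (((n:ℝ) - M + 1) * ((n:ℝ) - M + 1)) := by
    intro i
    refine le_trans (variance_le P hP (H i) (le_trans (hMn i) hMleN)) ?_
    have hmi : ((m i : ℕ) : ℝ) ≤ (M:ℝ) := by exact_mod_cast hMn i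
    have h2 : (n:ℝ) - M + 1 ≤ (n:ℝ) - m i + 1 := by linarith
    have h3 : (0:ℝ) ≤ (n:ℝ) - m i + 1 := by linarith
    apply div_le_div₀ (by positivity)
      (pow_le_pow_left₀ (Nat.cast_nonneg _) hmi 4)
      (by positivity)
      (mul_le_mul h2 h2 hD1.le h3)
  -- total variance bound
  have hsumvar : gExp P (fun G => ∑ i : Fin t,
        (inducedDensity (H i) G - expDensity n P (H i)) ^ 2)
      ≤ (t:ℝ) * ((M:ℝ) ^ 4 / (((n:ℝ) - M + 1) * ((n:ℝ) - M + 1))) := by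
    rw [gExp_sum]
    calc ∑ i : Fin t, gExp P (fun G => (inducedDensity (H i) G - expDensity n P (H i)) ^ 2)
        ≤ ∑ _i : Fin t, (M:ℝ) ^ 4 / (((n:ℝ) - M + 1) * ((n:ℝ) - M + 1)) :=
          Finset.sum_le_sum (fun i _ => hvar i)
      _ = (t:ℝ) * ((M:ℝ) ^ 4 / (((n:ℝ) - M + 1) * ((n:ℝ) - M + 1))) := by
          rw [Finset.sum_const, Finset.card_univ, Fintype.card_fin, nsmul_eq_mul]
  -- numeric bound
  have hfinal : (t:ℝ) * ((M:ℝ) ^ 4 / (((n:ℝ) - M + 1) * ((n:ℝ) - M + 1))) ≤ 1 / n := by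
    have hx0 : (0:ℝ) ≤ (n:ℝ) := Nat.cast_nonneg n
    have hxpos : (0:ℝ) < (n:ℝ) := by exact_mod_cast hn0
    have hDpos : (0:ℝ) < ((n:ℝ) - M + 1) * ((n:ℝ) - M + 1) := by positivity
    rw [← mul_div_assoc, div_le_div_iff₀ hDpos hxpos]
    have hB : (t:ℝ) * (M:ℝ) ^ 4 ≤ ((t:ℝ) + 1) * ((M:ℝ) + 1) ^ 4 := by
      apply mul_le_mul (by linarith)
        (pow_le_pow_left₀ (Nat.cast_nonneg _) (by linarith) 4)
        (by positivity) (by linarith [Nat.cast_nonneg (α := ℝ) t])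
    have hMge : (0:ℝ) ≤ (M:ℝ) := Nat.cast_nonneg M
    have htge : (0:ℝ) ≤ (t:ℝ) := Nat.cast_nonneg t
    have hprod : (0:ℝ) ≤ 4 * ((t:ℝ) + 1) * ((M:ℝ) + 1) ^ 4 := by positivity
    have h2M : 2 * (M:ℝ) ≤ (n:ℝ) := by linarith
    have hxM : (n:ℝ) / 2 ≤ (n:ℝ) - M + 1 := by linarith
    have h1 : (t:ℝ) * (M:ℝ) ^ 4 * (n:ℝ) ≤ (((t:ℝ) + 1) * ((M:ℝ) + 1) ^ 4) * (n:ℝ) :=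
      mul_le_mul_of_nonneg_right hB hx0
    have h2 : (((t:ℝ) + 1) * ((M:ℝ) + 1) ^ 4) * (n:ℝ) ≤ ((n:ℝ) / 4) * (n:ℝ) := by
      apply mul_le_mul_of_nonneg_right _ hx0
      linarith
    have h4 : ((n:ℝ) / 2) * ((n:ℝ) / 2) ≤ ((n:ℝ) - M + 1) * ((n:ℝ) - M + 1) :=
      mul_le_mul hxM hxM (by linarith) hD1.le
    calc (t:ℝ) * (M:ℝ) ^ 4 * (n:ℝ) ≤ ((n:ℝ) / 4) * (n:ℝ) := le_trans h1 h2
      _ = ((n:ℝ) / 2) * ((n:ℝ) / 2) := by ring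
      _ ≤ ((n:ℝ) - M + 1) * ((n:ℝ) - M + 1) := h4
      _ = 1 * (((n:ℝ) - M + 1) * ((n:ℝ) - M + 1)) := by ring
  -- choose a good graph
  obtain ⟨G, hGpos, hGle⟩ := exists_le_expectation (graphProb n P)
    (fun G => ∑ i : Fin t, (inducedDensity (H i) G - expDensity n P (H i)) ^ 2)
    (graphProb_nonneg P hP) (sum_graphProb P)
  refine ⟨G, hGpos, ?_⟩
  have hfG : ∑ i : Fin t, (inducedDensity (H i) G - expDensity n P (H i)) ^ 2 ≤ 1 / n := by
    refine le_trans hGle (le_trans ?_ (le_trans hsumvar hfinal))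
    exact le_of_eq rfl
  intro i
  have hi : (inducedDensity (H i) G - expDensity n P (H i)) ^ 2 ≤ 1 / n :=
    le_trans (Finset.single_le_sum (f := fun j =>
      (inducedDensity (H j) G - expDensity n P (H j)) ^ 2)
      (fun j _ => sq_nonneg _) (Finset.mem_univ i)) hfG
  have habs : |inducedDensity (H i) G - expDensity n P (H i)| ≤ Real.sqrt (1 / n) := by
    rw [← Real.sqrt_sq_eq_abs]
    exact Real.sqrt_le_sqrt hi
  calc |inducedDensity (H i) G - expDensity n P (H i)| ≤ Real.sqrt (1 / n) := habs
    _ = 1 / Real.sqrt n := by rw [one_div, Real.sqrt_inv, one_div]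
end

section
/- Let F_1, …, F_l be (s,k)-flagged graphs with 0 ≤ k < s. There is a constant C > 0, depending only on F_1, …, F_l, such that for every finite simple graph G on n ≥ 2s − k vertices there exists a positive semidefinite l×l real matrix M with ‖A^G(F_1,…,F_l) − M‖ ≤ C/n, where ‖·‖ denotes the Frobenius (entrywise ℓ_2) norm. -/
open Finset

open scoped Classical

/-- An `(s,k)`-flagged graph: an `s`-vertex graph together with an ordered `k`-tuple of
distinct vertices (the flag). -/
structure FlaggedGraph (s k : ℕ) where
  graph : SimpleGraph (Fin s)
  flag : Fin k ↪ Fin s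

/-- The flagged graph `(G|_S, u)` is isomorphic to `F`: there is a graph isomorphism
from `F.graph` to the subgraph of `G` induced on `S` sending the `i`-th flag vertex of
`F` to `u i`. -/
def FlaggedIsoOn {V : Type*} (G : SimpleGraph V) {s k : ℕ} (F : FlaggedGraph s k)
    (S : Finset V) (u : Fin k → V) : Prop :=
  ∃ φ : F.graph ≃g G.induce (S : Set V), ∀ i, ((φ (F.flag i)) : V) = u i

/-- The sample space of triples `(V₁, V₂, u)` where `V₁, V₂` are `s`-element subsets with
`|V₁ ∩ V₂| = k` and `u` is an ordering of `V₁ ∩ V₂`. -/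
noncomputable def flagSample (V : Type*) [Fintype V] [DecidableEq V] (s k : ℕ) :
    Finset (Finset V × Finset V × (Fin k → V)) :=
  univ.filter (fun T => T.1.card = s ∧ T.2.1.card = s ∧ (T.1 ∩ T.2.1).card = k ∧
    Finset.image T.2.2 univ = T.1 ∩ T.2.1)

/-- `p(F₁,F₂;G)`: the probability, over a uniformly random pair of `s`-element subsets
`V₁,V₂ ⊆ V(G)` with `|V₁ ∩ V₂| = k` and a uniformly random ordering `u` of `V₁ ∩ V₂`,
that `(G|_{Vᵢ}, u) ≅ Fᵢ` for both `i = 1,2`. -/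
noncomputable def flagPairProb {V : Type*} [Fintype V] [DecidableEq V] {s k : ℕ}
    (F₁ F₂ : FlaggedGraph s k) (G : SimpleGraph V) : ℝ :=
  ((flagSample V s k).filter
      (fun T => FlaggedIsoOn G F₁ T.1 T.2.2 ∧ FlaggedIsoOn G F₂ T.2.1 T.2.2)).card /
    (flagSample V s k).card

/-- The matrix `A^G(F₁,…,F_l)` with entries `p(Fᵢ,Fⱼ;G)`. -/
noncomputable def flagMatrix {V : Type*} [Fintype V] [DecidableEq V] {s k l : ℕ}
    (F : Fin l → FlaggedGraph s k) (G : SimpleGraph V) : Matrix (Fin l) (Fin l) ℝ :=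
  fun i j => flagPairProb (F i) (F j) G



section AuxFlag

lemma step1 (m t : ℕ) : ∀ i, 1 ≤ i → i ≤ m →
    (t+1) * (m+t).choose (m - i) ≤ m^i * (m+t).choose m := by
  intro i
  induction i with
  | zero => omega
  | succ i ih =>
    intro _ hi1
    rcases Nat.eq_zero_or_pos i with h0 | hpos
    · subst h0
      have h1 : 1 ≤ m := by omega
      have hident := Nat.choose_succ_right_eq (m+t) (m-1)
      rw [show m - 1 + 1 = m by omega, show m + t - (m-1) = t + 1 by omega] at hident
      calc (t+1) * (m+t).choose (m - 1) = (m+t).choose (m-1) * (t+1) := by ring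
        _ = (m+t).choose m * m := hident.symm
        _ ≤ m^(0+1) * (m+t).choose m := le_of_eq (by ring)
    · have hident := Nat.choose_succ_right_eq (m+t) (m - (i+1))
      rw [show m - (i+1) + 1 = m - i by omega,
          show m + t - (m - (i+1)) = t + i + 1 by omega] at hident
      have hih := ih hpos (by omega)
      have hw : (m+t).choose (m - i) ≤ m^i * (m+t).choose m :=
        le_trans (Nat.le_mul_of_pos_left _ (by omega)) hih
      calc (t+1) * (m+t).choose (m - (i+1))
          ≤ (t+i+1) * (m+t).choose (m - (i+1)) := by
            apply Nat.mul_le_mul_right; omega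
        _ = (m+t).choose (m - i) * (m - i) := by rw [hident]; ring
        _ ≤ (m+t).choose (m - i) * m := by apply Nat.mul_le_mul_left; omega
        _ ≤ (m^i * (m+t).choose m) * m := Nat.mul_le_mul_right _ hw
        _ = m^(i+1) * (m+t).choose m := by ring
lemma step2 (m t : ℕ) (hm : 1 ≤ m) :
    (t+1) * (2*m+t).choose m ≤ ((t+1) + (m+1)^m) * ((m+t).choose m) := by
  have hv : (2*m+t).choose m = ∑ j ∈ range (m+1), m.choose j * (m+t).choose (m - j) := by
    have h := Nat.add_choose_eq m (m+t) m
    rw [Finset.Nat.sum_antidiagonal_eq_sum_range_succ_mk] at h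
    rw [show 2*m+t = m + (m+t) by ring, h]
  have hpow : (m+1)^m = ∑ i ∈ range (m+1), m^i * 1^(m-i) * m.choose i := add_pow m 1 m
  have hpow' : ∑ j ∈ range m, m.choose (j+1) * m^(j+1) ≤ (m+1)^m := by
    rw [hpow, Finset.sum_range_succ']
    simp only [one_pow, mul_one]
    apply Nat.le_add_right_of_le
    apply Finset.sum_le_sum
    intro j _
    exact le_of_eq (by ring)
  calc (t+1) * (2*m+t).choose m
      = ∑ j ∈ range (m+1), (t+1) * (m.choose j * (m+t).choose (m-j)) := by
        rw [hv, Finset.mul_sum]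
    _ = (∑ j ∈ range m, (t+1) * (m.choose (j+1) * (m+t).choose (m-(j+1))))
        + (t+1) * (m.choose 0 * (m+t).choose (m-0)) := Finset.sum_range_succ' _ m
    _ ≤ (∑ j ∈ range m, m.choose (j+1) * m^(j+1) * (m+t).choose m)
        + (t+1) * (m+t).choose m := by
        apply Nat.add_le_add
        · apply Finset.sum_le_sum
          intro j hj
          have := step1 m t (j+1) (by omega) (by simp at hj; omega)
          calc (t+1) * (m.choose (j+1) * (m+t).choose (m-(j+1)))
              = m.choose (j+1) * ((t+1) * (m+t).choose (m-(j+1))) := by ring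
            _ ≤ m.choose (j+1) * (m^(j+1) * (m+t).choose m) := Nat.mul_le_mul_left _ this
            _ = m.choose (j+1) * m^(j+1) * (m+t).choose m := by ring
        · simp
    _ ≤ (m+1)^m * (m+t).choose m + (t+1) * (m+t).choose m := by
        apply Nat.add_le_add_right
        rw [← Finset.sum_mul]
        exact Nat.mul_le_mul_right _ hpow'
    _ = ((t+1) + (m+1)^m) * ((m+t).choose m) := by ring

lemma key_count (s k n : ℕ) (hk : k < s) (hn : 2*s - k ≤ n) :
    n * (n - k).choose (s - k) ≤ n * (n - s).choose (s - k)
      + ((2*s - k) * ((s - k) + 1)^(s-k)) * ((n - s).choose (s-k)) := by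
  set m := s - k with hm
  set t := n - (2*s - k) with ht
  have hm1 : 1 ≤ m := by omega
  have h1 : n - k = 2*m + t := by omega
  have h2 : n - s = m + t := by omega
  have hb : 2*s - k = k + 2*m := by omega
  have hnn : n = (k + 2*m) + t := by omega
  rw [h1, h2, hb]
  set c₁ := (2*m+t).choose m
  set c₂ := (m+t).choose m
  have hcc : c₂ ≤ c₁ := Nat.choose_le_choose m (by omega)
  obtain ⟨X, hX⟩ : ∃ X, c₁ = c₂ + X := ⟨c₁ - c₂, by omega⟩
  have h3 : (t+1) * c₁ ≤ ((t+1) + (m+1)^m) * c₂ := step2 m t hm1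
  rw [hX] at h3
  have h4 : (t+1) * X ≤ (m+1)^m * c₂ := by
    have : (t+1)*c₂ + (t+1)*X ≤ (t+1)*c₂ + (m+1)^m * c₂ := by
      calc (t+1)*c₂ + (t+1)*X = (t+1) * (c₂ + X) := by ring
        _ ≤ ((t+1) + (m+1)^m) * c₂ := h3
        _ = (t+1)*c₂ + (m+1)^m * c₂ := by ring
    omega
  have h5 : n * X ≤ ((k+2*m) * (m+1)^m) * c₂ := by
    calc n * X ≤ ((k+2*m) * (t+1)) * X := by
          apply Nat.mul_le_mul_right
          rw [hnn]
          calc (k+2*m) + t ≤ (k+2*m) + (k+2*m)*t := by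
                apply Nat.add_le_add_left
                exact Nat.le_mul_of_pos_left t (by omega)
            _ = (k+2*m) * (t+1) := by ring
      _ = (k+2*m) * ((t+1) * X) := by ring
      _ ≤ (k+2*m) * ((m+1)^m * c₂) := Nat.mul_le_mul_left _ h4
      _ = ((k+2*m) * (m+1)^m) * c₂ := by ring
  calc n * c₁ = n * c₂ + n * X := by rw [hX]; ring
    _ ≤ n * c₂ + (k+2*m) * (m+1)^m * c₂ := Nat.add_le_add_left h5 _

lemma count_supersets_s7 {n s k : ℕ} (hks : k ≤ s) (U : Finset (Fin n)) (hU : U.card = k) :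
    ((univ : Finset (Finset (Fin n))).filter (fun A => A.card = s ∧ U ⊆ A)).card
      = (n - k).choose (s - k) := by
  have hcard : (Uᶜ : Finset (Fin n)).card = n - k := by
    rw [Finset.card_compl, hU, Fintype.card_fin]
  rw [← hcard, ← Finset.card_powersetCard (s-k) (Uᶜ : Finset (Fin n))]
  apply Finset.card_nbij' (fun A => A \ U) (fun W => W ∪ U)
  · intro A hA
    simp only [Finset.mem_coe, Finset.mem_filter, Finset.mem_univ, true_and] at hA
    rw [Finset.mem_coe, Finset.mem_powersetCard]
    constructor
    · intro x hx
      simp only [Finset.mem_sdiff] at hx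
      simp [Finset.mem_compl, hx.2]
    · rw [Finset.card_sdiff_of_subset hA.2, hA.1, hU]
  · intro W hW
    rw [Finset.mem_coe, Finset.mem_powersetCard] at hW
    simp only [Finset.mem_coe, Finset.mem_filter, Finset.mem_univ, true_and]
    have hdisj : Disjoint W U := by
      rw [Finset.disjoint_right]
      intro x hxU hxW
      have := hW.1 hxW
      simp [Finset.mem_compl] at this
      exact this hxU
    constructor
    · rw [Finset.card_union_of_disjoint hdisj, hW.2, hU]; omega
    · exact Finset.subset_union_right
  · intro A hA
    simp only [Finset.mem_coe, Finset.mem_filter, Finset.mem_univ, true_and] at hA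
    exact Finset.sdiff_union_of_subset hA.2
  · intro W hW
    rw [Finset.mem_coe, Finset.mem_powersetCard] at hW
    have hdisj : Disjoint W U := by
      rw [Finset.disjoint_right]
      intro x hxU hxW
      have := hW.1 hxW
      simp [Finset.mem_compl] at this
      exact this hxU
    dsimp only
    rw [Finset.union_sdiff_right, Finset.sdiff_eq_self_of_disjoint hdisj]

lemma count_exact {n s k : ℕ} (hks : k ≤ s) (U V₁ : Finset (Fin n)) (hU : U.card = k)
    (hV : V₁.card = s) (hUV : U ⊆ V₁) :
    ((univ : Finset (Finset (Fin n))).filter (fun B => B.card = s ∧ B ∩ V₁ = U)).card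
      = (n - s).choose (s - k) := by
  have hcard : (V₁ᶜ : Finset (Fin n)).card = n - s := by
    rw [Finset.card_compl, hV, Fintype.card_fin]
  rw [← hcard, ← Finset.card_powersetCard (s-k) (V₁ᶜ : Finset (Fin n))]
  apply Finset.card_nbij' (fun B => B \ U) (fun W => W ∪ U)
  · intro B hB
    simp only [Finset.mem_coe, Finset.mem_filter, Finset.mem_univ, true_and] at hB
    have hUB : U ⊆ B := by rw [← hB.2]; exact Finset.inter_subset_left
    rw [Finset.mem_coe, Finset.mem_powersetCard]
    constructor
    · intro x hx
      simp only [Finset.mem_sdiff] at hx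
      simp only [Finset.mem_compl]
      intro hxV
      exact hx.2 (by rw [← hB.2]; exact Finset.mem_inter.2 ⟨hx.1, hxV⟩)
    · rw [Finset.card_sdiff_of_subset hUB, hB.1, hU]
  · intro W hW
    rw [Finset.mem_coe, Finset.mem_powersetCard] at hW
    simp only [Finset.mem_coe, Finset.mem_filter, Finset.mem_univ, true_and]
    have hWV : ∀ x ∈ W, x ∉ V₁ := by
      intro x hx
      have := hW.1 hx
      simpa [Finset.mem_compl] using this
    have hdisj : Disjoint W U := by
      rw [Finset.disjoint_right]
      intro x hxU hxW
      exact hWV x hxW (hUV hxU)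
    constructor
    · rw [Finset.card_union_of_disjoint hdisj, hW.2, hU]; omega
    · ext x
      simp only [Finset.mem_inter, Finset.mem_union]
      constructor
      · rintro ⟨h1 | h1, h2⟩
        · exact absurd h2 (hWV x h1)
        · exact h1
      · intro hx
        exact ⟨Or.inr hx, hUV hx⟩
  · intro B hB
    simp only [Finset.mem_coe, Finset.mem_filter, Finset.mem_univ, true_and] at hB
    have hUB : U ⊆ B := by rw [← hB.2]; exact Finset.inter_subset_left
    exact Finset.sdiff_union_of_subset hUB
  · intro W hW
    rw [Finset.mem_coe, Finset.mem_powersetCard] at hW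
    have hdisj : Disjoint W U := by
      rw [Finset.disjoint_right]
      intro x hxU hxW
      have := hW.1 hxW
      simp [Finset.mem_compl] at this
      exact this (hUV hxU)
    dsimp only
    rw [Finset.union_sdiff_right, Finset.sdiff_eq_self_of_disjoint hdisj]
-- iso props
lemma iso_props {n s k : ℕ} (G : SimpleGraph (Fin n)) (F : FlaggedGraph s k)
    {S : Finset (Fin n)} {u : Fin k → Fin n} (h : FlaggedIsoOn G F S u) :
    (Finset.image u univ).card = k ∧ Finset.image u univ ⊆ S := by
  obtain ⟨φ, hφ⟩ := h
  have huinj : Function.Injective u := by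
    intro i j hij
    have h1 : (φ (F.flag i) : Fin n) = (φ (F.flag j) : Fin n) := by rw [hφ, hφ, hij]
    have h2 := φ.toEquiv.injective (Subtype.coe_injective h1)
    exact F.flag.injective h2
  constructor
  · rw [Finset.card_image_of_injective _ huinj, Finset.card_univ, Fintype.card_fin]
  · intro x hx
    obtain ⟨i, _, rfl⟩ := Finset.mem_image.1 hx
    rw [← hφ i]
    exact (φ (F.flag i)).2

noncomputable def Afin {n s k : ℕ} (G : SimpleGraph (Fin n)) (Fi : FlaggedGraph s k)
    (u : Fin k → Fin n) : Finset (Finset (Fin n)) :=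
  univ.filter fun V₁ => V₁.card = s ∧ FlaggedIsoOn G Fi V₁ u

noncomputable def Tset (n s k : ℕ) :
    Finset (Finset (Fin n) × Finset (Fin n) × (Fin k → Fin n)) :=
  univ.filter fun T => T.1.card = s ∧ T.2.1.card = s ∧ (Finset.image T.2.2 univ).card = k ∧
    Finset.image T.2.2 univ ⊆ T.1 ∧ Finset.image T.2.2 univ ⊆ T.2.1

noncomputable def Us (n k : ℕ) : Finset (Fin k → Fin n) :=
  univ.filter fun u => (Finset.image u univ).card = k

noncomputable def SupT (n s k : ℕ) (u : Fin k → Fin n) : Finset (Finset (Fin n)) :=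
  univ.filter fun A => A.card = s ∧ Finset.image u univ ⊆ A

lemma sample_subset_Tset (n s k : ℕ) : flagSample (Fin n) s k ⊆ Tset n s k := by
  intro T hT
  simp only [flagSample, Tset, Finset.mem_filter, Finset.mem_univ, true_and] at *
  refine ⟨hT.1, hT.2.1, ?_, ?_, ?_⟩
  · rw [hT.2.2.2]; exact hT.2.2.1
  · rw [hT.2.2.2]; exact Finset.inter_subset_left
  · rw [hT.2.2.2]; exact Finset.inter_subset_right

lemma Ntilde_eq {n s k : ℕ} (G : SimpleGraph (Fin n)) (F₁ F₂ : FlaggedGraph s k) :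
    ((Tset n s k).filter
        (fun T => FlaggedIsoOn G F₁ T.1 T.2.2 ∧ FlaggedIsoOn G F₂ T.2.1 T.2.2)).card
      = ∑ u : Fin k → Fin n, (Afin G F₁ u).card * (Afin G F₂ u).card := by
  rw [Finset.card_eq_sum_card_fiberwise
    (f := fun T : Finset (Fin n) × Finset (Fin n) × (Fin k → Fin n) => T.2.2)
    (t := univ) (fun x _ => Finset.mem_univ _)]
  apply Finset.sum_congr rfl
  intro u _
  rw [← Finset.card_product]
  apply Finset.card_nbij' (fun T => (T.1, T.2.1)) (fun p => (p.1, p.2, u))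
  · intro T hT
    simp only [Finset.mem_coe, Tset, Finset.mem_filter, Finset.mem_univ, true_and] at hT
    obtain ⟨⟨⟨h1, h2, _, _, _⟩, hi1, hi2⟩, hu⟩ := hT
    subst hu
    simp only [Finset.mem_coe, Finset.mem_product, Afin, Finset.mem_filter, Finset.mem_univ, true_and]
    exact ⟨⟨h1, hi1⟩, ⟨h2, hi2⟩⟩
  · intro p hp
    simp only [Finset.mem_coe, Finset.mem_product, Afin, Finset.mem_filter, Finset.mem_univ, true_and] at hp
    obtain ⟨⟨h1, hi1⟩, h2, hi2⟩ := hp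
    have hp1 := iso_props G F₁ hi1
    have hp2 := iso_props G F₂ hi2
    simp only [Finset.mem_coe, Tset, Finset.mem_filter, Finset.mem_univ, true_and]
    exact ⟨⟨⟨h1, h2, hp1.1, hp1.2, hp2.2⟩, hi1, hi2⟩, trivial⟩
  · intro T hT
    simp only [Finset.mem_coe, Finset.mem_filter] at hT
    obtain ⟨_, hu⟩ := hT
    ext <;> simp [hu.symm]
  · intro p _
    rfl

lemma SupT_card {n s k : ℕ} (hks : k ≤ s) {u : Fin k → Fin n} (hu : u ∈ Us n k) :
    (SupT n s k u).card = (n - k).choose (s - k) := by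
  simp only [Finset.mem_coe, Us, Finset.mem_filter] at hu
  exact count_supersets_s7 hks _ hu.2

lemma Tset_card {n s k : ℕ} (hks : k ≤ s) :
    (Tset n s k).card = (Us n k).card * ((n-k).choose (s-k) * (n-k).choose (s-k)) := by
  rw [Finset.card_eq_sum_card_fiberwise
    (f := fun T : Finset (Fin n) × Finset (Fin n) × (Fin k → Fin n) => T.2.2)
    (t := Us n k) (fun x hx => by
      simp only [Finset.mem_coe, Tset, Finset.mem_filter, Finset.mem_univ, true_and] at hx
      simp only [Finset.mem_coe, Us, Finset.mem_filter, Finset.mem_univ, true_and]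
      exact hx.2.2.1)]
  rw [Finset.sum_congr rfl (fun u hu => ?_), Finset.sum_const, smul_eq_mul]
  rw [← SupT_card hks hu, ← Finset.card_product]
  apply Finset.card_nbij' (fun T => (T.1, T.2.1)) (fun p => (p.1, p.2, u))
  · intro T hT
    simp only [Finset.mem_coe, Tset, Finset.mem_filter, Finset.mem_univ, true_and] at hT
    obtain ⟨⟨h1, h2, _, hs1, hs2⟩, huu⟩ := hT
    subst huu
    simp only [Finset.mem_coe, Finset.mem_product, SupT, Finset.mem_filter, Finset.mem_univ, true_and]
    exact ⟨⟨h1, hs1⟩, h2, hs2⟩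
  · intro p hp
    simp only [Finset.mem_coe, Finset.mem_product, SupT, Finset.mem_filter, Finset.mem_univ, true_and] at hp
    simp only [Finset.mem_coe, Tset, Finset.mem_filter, Finset.mem_univ, true_and]
    simp only [Finset.mem_coe, Us, Finset.mem_filter, Finset.mem_univ, true_and] at hu
    exact ⟨⟨hp.1.1, hp.2.1, hu, hp.1.2, hp.2.2⟩, trivial⟩
  · intro T hT
    simp only [Finset.mem_coe, Finset.mem_filter] at hT
    obtain ⟨_, huu⟩ := hT
    ext <;> simp [huu.symm]
  · intro p _
    rfl

lemma flagSample_card {n s k : ℕ} (hks : k ≤ s) :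
    (flagSample (Fin n) s k).card
      = (Us n k).card * ((n-k).choose (s-k) * (n-s).choose (s-k)) := by
  rw [Finset.card_eq_sum_card_fiberwise
    (f := fun T : Finset (Fin n) × Finset (Fin n) × (Fin k → Fin n) => T.2.2)
    (t := Us n k) (fun x hx => by
      simp only [Finset.mem_coe, flagSample, Finset.mem_filter, Finset.mem_univ, true_and] at hx
      simp only [Finset.mem_coe, Us, Finset.mem_filter, Finset.mem_univ, true_and]
      rw [hx.2.2.2]; exact hx.2.2.1)]
  rw [Finset.sum_congr rfl (fun u hu => ?_), Finset.sum_const, smul_eq_mul]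
  have huk : (Finset.image u univ).card = k := by
    simpa only [Us, Finset.mem_filter, Finset.mem_univ, true_and] using hu
  -- the fiber over u is in bijection with pairs (V₁, V₂) with V₁ ∩ V₂ = image u
  have hfiber : ((flagSample (Fin n) s k).filter (fun T => T.2.2 = u)).card
      = ((univ : Finset (Finset (Fin n) × Finset (Fin n))).filter
          (fun p => p.1.card = s ∧ p.2.card = s ∧ p.1 ∩ p.2 = Finset.image u univ)).card := by
    apply Finset.card_nbij' (fun T => (T.1, T.2.1)) (fun p => (p.1, p.2, u))
    · intro T hT
      simp only [Finset.mem_coe, flagSample, Finset.mem_filter, Finset.mem_univ, true_and] at hT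
      obtain ⟨⟨h1, h2, _, heq⟩, huu⟩ := hT
      subst huu
      simp only [Finset.mem_coe, Finset.mem_filter, Finset.mem_univ, true_and]
      exact ⟨h1, h2, heq.symm⟩
    · intro p hp
      simp only [Finset.mem_coe, Finset.mem_filter, Finset.mem_univ, true_and] at hp
      simp only [Finset.mem_coe, flagSample, Finset.mem_filter, Finset.mem_univ, true_and]
      exact ⟨⟨hp.1, hp.2.1, by rw [hp.2.2]; exact huk, hp.2.2.symm⟩, trivial⟩
    · intro T hT
      simp only [Finset.mem_coe, Finset.mem_filter] at hT
      obtain ⟨_, huu⟩ := hT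
      ext <;> simp [huu.symm]
    · intro p _
      rfl
  rw [hfiber]
  -- now count the pairs fiberwise over V₁
  rw [Finset.card_eq_sum_card_fiberwise
    (f := fun p : Finset (Fin n) × Finset (Fin n) => p.1)
    (t := SupT n s k u) (fun p hp => by
      simp only [Finset.mem_coe, Finset.mem_filter, Finset.mem_univ, true_and] at hp
      simp only [Finset.mem_coe, SupT, Finset.mem_filter, Finset.mem_univ, true_and]
      exact ⟨hp.1, by rw [← hp.2.2]; exact Finset.inter_subset_left⟩)]
  rw [Finset.sum_congr rfl (fun V₁ hV₁ => ?_), Finset.sum_const, smul_eq_mul,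
    SupT_card hks hu]
  -- fiber over V₁: sets B with B.card = s and B ∩ V₁ = image u
  simp only [Finset.mem_coe, SupT, Finset.mem_filter, Finset.mem_univ, true_and] at hV₁
  rw [← count_exact hks (Finset.image u univ) V₁ huk hV₁.1 hV₁.2]
  apply Finset.card_nbij' (fun p => p.2) (fun B => (V₁, B))
  · intro p hp
    simp only [Finset.mem_coe, Finset.mem_filter, Finset.mem_univ, true_and] at hp
    obtain ⟨⟨h1, h2, heq⟩, hV⟩ := hp
    subst hV
    simp only [Finset.mem_coe, Finset.mem_filter, Finset.mem_univ, true_and]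
    constructor
    · exact h2
    · rw [Finset.inter_comm] at heq; exact heq
  · intro B hB
    simp only [Finset.mem_coe, Finset.mem_filter, Finset.mem_univ, true_and] at hB ⊢
    refine ⟨⟨hV₁.1, hB.1, ?_⟩, trivial⟩
    rw [Finset.inter_comm]; exact hB.2
  · intro p hp
    simp only [Finset.mem_coe, Finset.mem_filter] at hp
    obtain ⟨_, hV⟩ := hp
    ext <;> simp [hV.symm]
  · intro B _
    rfl

end AuxFlag

set_option maxHeartbeats 1000000 in
/-- The matrix `A^G(F₁,…,F_l)` is within `C/n` (in Frobenius norm) of a positive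
semidefinite matrix, where `C` depends only on the flagged graphs `F₁,…,F_l`. -/
theorem flagMatrix_almost_psd {s k l : ℕ} (hk : k < s) (F : Fin l → FlaggedGraph s k) :
    ∃ C : ℝ, 0 < C ∧ ∀ n : ℕ, 2 * s - k ≤ n → ∀ G : SimpleGraph (Fin n),
      ∃ M : Matrix (Fin l) (Fin l) ℝ, M.PosSemidef ∧
        Real.sqrt (∑ i, ∑ j, (flagMatrix F G i j - M i j) ^ 2) ≤ C / n := by
  have hks : k ≤ s := le_of_lt hk
  set C' : ℕ := (2*s - k) * ((s - k) + 1)^(s-k) with hC'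
  have hC'pos : 0 < C' := by
    apply Nat.mul_pos (by omega) (Nat.pow_pos (by omega))
  refine ⟨(l : ℝ) * C' + 1, by positivity, ?_⟩
  intro n hn G
  have hn0 : 0 < n := by omega
  set c₁ := (n-k).choose (s-k) with hc₁def
  set c₂ := (n-s).choose (s-k) with hc₂def
  set I := (Us n k).card with hIdef
  have hD : (flagSample (Fin n) s k).card = I * (c₁ * c₂) := flagSample_card hks
  have hT : (Tset n s k).card = I * (c₁ * c₁) := Tset_card hks
  have hI : 0 < I := by
    apply Finset.card_pos.2
    refine ⟨fun i => Fin.castLE (by omega) i, ?_⟩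
    simp only [Us, Finset.mem_filter, Finset.mem_univ, true_and]
    rw [Finset.card_image_of_injective _ (Fin.castLE_injective _), Finset.card_univ,
      Fintype.card_fin]
  have hc₁pos : 0 < c₁ := Nat.choose_pos (by omega)
  have hc₂pos : 0 < c₂ := Nat.choose_pos (by omega)
  set D := (flagSample (Fin n) s k).card with hDdef
  have hDpos : 0 < D := by rw [hD]; positivity
  set a : Fin l → (Fin k → Fin n) → ℕ := fun i u => (Afin G (F i) u).card with ha
  set N : Fin l → Fin l → ℕ := fun i j => ((flagSample (Fin n) s k).filter
      (fun T => FlaggedIsoOn G (F i) T.1 T.2.2 ∧ FlaggedIsoOn G (F j) T.2.1 T.2.2)).card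
    with hN
  set Nt : Fin l → Fin l → ℕ := fun i j => ∑ u : Fin k → Fin n, a i u * a j u with hNt
  have hNtEq : ∀ i j, ((Tset n s k).filter
      (fun T => FlaggedIsoOn G (F i) T.1 T.2.2 ∧ FlaggedIsoOn G (F j) T.2.1 T.2.2)).card
      = Nt i j := fun i j => Ntilde_eq G (F i) (F j)
  have hNle : ∀ i j, N i j ≤ Nt i j := by
    intro i j
    rw [← hNtEq i j]
    exact Finset.card_le_card (Finset.filter_subset_filter _ (sample_subset_Tset n s k))
  set E := ((Tset n s k) \ flagSample (Fin n) s k).card with hE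
  have hED : E + D = (Tset n s k).card :=
    Finset.card_sdiff_add_card_eq_card (sample_subset_Tset n s k)
  have hNle2 : ∀ i j, Nt i j ≤ N i j + E := by
    intro i j
    rw [← hNtEq i j]
    calc ((Tset n s k).filter _).card
        ≤ ((flagSample (Fin n) s k).filter
            (fun T => FlaggedIsoOn G (F i) T.1 T.2.2 ∧ FlaggedIsoOn G (F j) T.2.1 T.2.2)
            ∪ ((Tset n s k) \ flagSample (Fin n) s k)).card := by
          apply Finset.card_le_card
          intro x hx
          simp only [Finset.mem_filter, Finset.mem_union, Finset.mem_sdiff] at hx ⊢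
          by_cases hxs : x ∈ flagSample (Fin n) s k
          · exact Or.inl ⟨hxs, hx.2⟩
          · exact Or.inr ⟨hx.1, hxs⟩
      _ ≤ N i j + E := Finset.card_union_le _ _
  -- the key ratio bound: n * E ≤ C' * D
  have hKey : n * E ≤ C' * D := by
    have h1 : n * c₁ ≤ n * c₂ + C' * c₂ := key_count s k n hk hn
    have h2 : n * E + n * D ≤ n * D + C' * D := by
      calc n * E + n * D = n * (E + D) := by ring
        _ = n * (I * (c₁ * c₁)) := by rw [hED, hT]
        _ = (I * c₁) * (n * c₁) := by ring
        _ ≤ (I * c₁) * (n * c₂ + C' * c₂) := Nat.mul_le_mul_left _ h1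
        _ = n * (I * (c₁ * c₂)) + C' * (I * (c₁ * c₂)) := by ring
        _ = n * D + C' * D := by rw [hD]
    omega
  -- real versions
  have hDposR : (0 : ℝ) < (D : ℝ) := by exact_mod_cast hDpos
  have hnposR : (0 : ℝ) < (n : ℝ) := by exact_mod_cast hn0
  have hEDR : (E : ℝ) / D ≤ (C' : ℝ) / n := by
    rw [div_le_div_iff₀ hDposR hnposR]
    calc (E : ℝ) * n = (n * E : ℕ) := by push_cast; ring
      _ ≤ (C' * D : ℕ) := by exact_mod_cast hKey
      _ = (C' : ℝ) * D := by push_cast; ring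
  -- define the PSD matrix
  set M : Matrix (Fin l) (Fin l) ℝ := fun i j => (Nt i j : ℝ) / D with hM
  have hMA : ∀ i j, flagMatrix F G i j = (N i j : ℝ) / D := fun i j => rfl
  refine ⟨M, Matrix.posSemidef_iff_dotProduct_mulVec.2 ⟨?_, ?_⟩, ?_⟩
  · -- Hermitian
    ext i j
    simp only [Matrix.conjTranspose_apply, hM, star_trivial]
    show (Nt j i : ℝ) / D = (Nt i j : ℝ) / D
    congr 1
    exact_mod_cast congrArg Nat.cast
      (Finset.sum_congr rfl (fun u _ => Nat.mul_comm (a j u) (a i u)))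
  · -- quadratic form nonneg
    intro x
    have hsx : star x = x := by ext t; simp
    rw [hsx]
    have hquad : dotProduct x (M.mulVec x)
        = (∑ u : Fin k → Fin n, (∑ i, x i * (a i u : ℝ))^2) / D := by
      simp only [dotProduct, Matrix.mulVec, dotProduct, hM]
      have hcast : ∀ i j, (Nt i j : ℝ) = ∑ u : Fin k → Fin n, (a i u : ℝ) * (a j u : ℝ) := by
        intro i j
        rw [hNt]
        push_cast
        rfl
      calc ∑ i, x i * ∑ j, (Nt i j : ℝ) / D * x j
          = ∑ i, ∑ j, ∑ u : Fin k → Fin n, x i * ((a i u : ℝ) * (a j u) / D * x j) := by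
            refine Finset.sum_congr rfl fun i _ => ?_
            rw [Finset.mul_sum]
            refine Finset.sum_congr rfl fun j _ => ?_
            rw [hcast, Finset.sum_div, Finset.sum_mul, Finset.mul_sum]
        _ = ∑ i, ∑ u : Fin k → Fin n, ∑ j, x i * ((a i u : ℝ) * (a j u) / D * x j) :=
            Finset.sum_congr rfl fun i _ => Finset.sum_comm
        _ = ∑ u : Fin k → Fin n, ∑ i, ∑ j, x i * ((a i u : ℝ) * (a j u) / D * x j) :=
            Finset.sum_comm
        _ = (∑ u : Fin k → Fin n, (∑ i, x i * (a i u : ℝ))^2) / D := by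
            rw [Finset.sum_div]
            refine Finset.sum_congr rfl fun u _ => ?_
            rw [sq, Finset.sum_mul_sum, Finset.sum_div]
            refine Finset.sum_congr rfl fun i _ => ?_
            rw [Finset.sum_div]
            refine Finset.sum_congr rfl fun j _ => ?_
            ring
    rw [hquad]
    apply div_nonneg (Finset.sum_nonneg fun u _ => sq_nonneg _) (le_of_lt hDposR)
  · -- the norm bound
    have hband : ∀ i j, (flagMatrix F G i j - M i j)^2 ≤ ((C' : ℝ)/n)^2 := by
      intro i j
      have h1 : (N i j : ℝ) ≤ (Nt i j : ℝ) := by exact_mod_cast hNle i j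
      have h2 : (Nt i j : ℝ) ≤ (N i j : ℝ) + E := by exact_mod_cast hNle2 i j
      have hub : M i j - flagMatrix F G i j ≤ (E : ℝ) / D := by
        rw [hMA, hM, div_sub_div_same]
        gcongr
        linarith
      have hlb : (0:ℝ) ≤ M i j - flagMatrix F G i j := by
        rw [hMA, hM, div_sub_div_same]
        apply div_nonneg (by linarith) (le_of_lt hDposR)
      apply sq_le_sq'
      · have : M i j - flagMatrix F G i j ≤ (C' : ℝ)/n := hub.trans hEDR
        linarith
      · have : (0:ℝ) ≤ (C' : ℝ)/n := by positivity
        linarith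
    calc Real.sqrt (∑ i, ∑ j, (flagMatrix F G i j - M i j) ^ 2)
        ≤ Real.sqrt (((l:ℝ) * ((C' : ℝ)/n))^2) := by
          apply Real.sqrt_le_sqrt
          calc ∑ i, ∑ j, (flagMatrix F G i j - M i j) ^ 2
              ≤ ∑ _i : Fin l, ∑ _j : Fin l, ((C' : ℝ)/n)^2 :=
                Finset.sum_le_sum fun i _ => Finset.sum_le_sum fun j _ => hband i j
            _ = (l:ℝ) * ((l:ℝ) * ((C' : ℝ)/n)^2) := by
                simp [Finset.sum_const, Finset.card_univ, mul_assoc]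
            _ = ((l:ℝ) * ((C' : ℝ)/n))^2 := by ring
      _ = (l:ℝ) * ((C' : ℝ)/n) := Real.sqrt_sq (by positivity)
      _ ≤ ((l:ℝ) * C' + 1)/n := by
          rw [mul_div_assoc']
          gcongr
          linarith
end

section
/- Let F_1, …, F_l be (s,k)-flagged graphs with 0 ≤ k < s, and let G be a finite simple graph on n ≥ 2s − k vertices. Define the l×l matrix B^G as follows: choose uniformly at random an ordered k-tuple U of distinct vertices of G, then independently and uniformly at random two (s−k)-element subsets S_1, S_2 ⊆ V(G) \ U, and set B^G_{ij} equal to the probability that (G restricted to S_1 ∪ U, U) is isomorphic as a flagged graph to F_i and (G restricted to S_2 ∪ U, U) is isomorphic as a flagged graph to F_j. Then B^G is positive semidefinite. -/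
open Finset

open scoped Classical

/-- The sample space of triples `(u, S₁, S₂)` where `u` is an ordered `k`-tuple of distinct
vertices and `S₁, S₂` are (independent) `(s-k)`-element subsets of `V ∖ range u`. -/
noncomputable def flagSampleIndep (V : Type*) [Fintype V] [DecidableEq V] (s k : ℕ) :
    Finset ((Fin k → V) × Finset V × Finset V) :=
  univ.filter (fun T => Function.Injective T.1 ∧
    T.2.1 ⊆ univ \ Finset.image T.1 univ ∧ T.2.1.card = s - k ∧
    T.2.2 ⊆ univ \ Finset.image T.1 univ ∧ T.2.2.card = s - k)

/-- The matrix `B^G`: its `(i,j)` entry is the probability, over a uniformly random ordered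
`k`-tuple `u` of distinct vertices and two independent uniformly random `(s-k)`-element
subsets `S₁, S₂ ⊆ V(G) ∖ range u`, that `(G|_{S₁ ∪ u}, u) ≅ Fᵢ` and `(G|_{S₂ ∪ u}, u) ≅ Fⱼ`. -/
noncomputable def flagMatrixIndep {V : Type*} [Fintype V] [DecidableEq V] {s k l : ℕ}
    (F : Fin l → FlaggedGraph s k) (G : SimpleGraph V) : Matrix (Fin l) (Fin l) ℝ :=
  fun i j =>
    ((flagSampleIndep V s k).filter (fun T =>
        FlaggedIsoOn G (F i) (T.2.1 ∪ Finset.image T.1 univ) T.1 ∧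
        FlaggedIsoOn G (F j) (T.2.2 ∪ Finset.image T.1 univ) T.1)).card /
      (flagSampleIndep V s k).card


/-- Number of valid `(s-k)`-subsets `S` (for a fixed tuple `u`) inducing flag-iso to `Fi`. -/
noncomputable def flagCount {V : Type*} [Fintype V] [DecidableEq V] {s k : ℕ}
    (Fi : FlaggedGraph s k) (G : SimpleGraph V) (u : Fin k → V) : ℕ :=
  ((univ : Finset (Finset V)).filter (fun S => Function.Injective u ∧
    S ⊆ univ \ Finset.image u univ ∧ S.card = s - k ∧
    FlaggedIsoOn G Fi (S ∪ Finset.image u univ) u)).card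

lemma flagNum_eq {V : Type*} [Fintype V] [DecidableEq V] {s k : ℕ}
    (Fi Fj : FlaggedGraph s k) (G : SimpleGraph V) :
    ((flagSampleIndep V s k).filter (fun T =>
        FlaggedIsoOn G Fi (T.2.1 ∪ Finset.image T.1 univ) T.1 ∧
        FlaggedIsoOn G Fj (T.2.2 ∪ Finset.image T.1 univ) T.1)).card
    = ∑ u : Fin k → V, flagCount Fi G u * flagCount Fj G u := by
  classical
  rw [flagSampleIndep, Finset.filter_filter, Finset.card_filter]
  rw [Fintype.sum_prod_type]
  refine Finset.sum_congr rfl (fun u _ => ?_)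
  rw [Fintype.sum_prod_type]
  unfold flagCount
  rw [Finset.card_filter, Finset.card_filter, Finset.sum_mul_sum]
  refine Finset.sum_congr rfl (fun S1 _ => Finset.sum_congr rfl (fun S2 _ => ?_))
  by_cases h1 : Function.Injective u ∧ S1 ⊆ univ \ Finset.image u univ ∧ S1.card = s - k ∧
      FlaggedIsoOn G Fi (S1 ∪ Finset.image u univ) u
  · by_cases h2 : Function.Injective u ∧ S2 ⊆ univ \ Finset.image u univ ∧ S2.card = s - k ∧
        FlaggedIsoOn G Fj (S2 ∪ Finset.image u univ) u
    · rw [if_pos h1, if_pos h2, if_pos ⟨⟨h1.1, h1.2.1, h1.2.2.1, h2.2.1, h2.2.2.1⟩,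
        h1.2.2.2, h2.2.2.2⟩, mul_one]
    · rw [if_neg h2, mul_zero, if_neg]
      intro h
      exact h2 ⟨h.1.1, h.1.2.2.2.1, h.1.2.2.2.2, h.2.2⟩
  · rw [if_neg h1, zero_mul, if_neg]
    intro h
    exact h1 ⟨h.1.1, h.1.2.1, h.1.2.2.1, h.2.1⟩

/-- The matrix `B^G` (independent choice of the two subsets) is positive semidefinite. -/
theorem flagMatrixIndep_posSemidef {s k l : ℕ} (hk : k < s) (F : Fin l → FlaggedGraph s k)
    (n : ℕ) (hn : 2 * s - k ≤ n) (G : SimpleGraph (Fin n)) :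
    (flagMatrixIndep F G).PosSemidef := by
  classical
  set D : ℝ := ((flagSampleIndep (Fin n) s k).card : ℝ) with hD
  have hentry : ∀ i j, flagMatrixIndep F G i j
      = (∑ u : Fin k → Fin n, (flagCount (F i) G u : ℝ) * (flagCount (F j) G u : ℝ)) / D := by
    intro i j
    rw [flagMatrixIndep, flagNum_eq]
    push_cast
    rfl
  rw [Matrix.posSemidef_iff_dotProduct_mulVec]
  constructor
  · show (flagMatrixIndep F G).conjTranspose = flagMatrixIndep F G
    ext i j
    simp only [Matrix.conjTranspose_apply, star_trivial]
    rw [hentry, hentry]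
    congr 1
    exact Finset.sum_congr rfl (fun u _ => mul_comm _ _)
  · intro x
    have hx : dotProduct (star x) ((flagMatrixIndep F G).mulVec x)
        = (∑ u : Fin k → Fin n, (∑ i, x i * (flagCount (F i) G u : ℝ)) ^ 2) / D := by
      have h1 : dotProduct (star x) ((flagMatrixIndep F G).mulVec x)
          = ∑ i, ∑ j, (∑ u : Fin k → Fin n,
              (x i * (flagCount (F i) G u : ℝ)) * (x j * (flagCount (F j) G u : ℝ))) / D := by
        simp only [dotProduct, Matrix.mulVec, Pi.star_apply, star_trivial, hentry]
        refine Finset.sum_congr rfl fun i _ => ?_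
        rw [Finset.mul_sum]
        refine Finset.sum_congr rfl fun j _ => ?_
        rw [div_mul_eq_mul_div, ← mul_div_assoc]
        congr 1
        simp only [Finset.sum_mul, Finset.mul_sum]
        exact Finset.sum_congr rfl fun u _ => by ring
      rw [h1]
      simp only [← Finset.sum_div]
      congr 1
      calc ∑ i, ∑ j, ∑ u : Fin k → Fin n,
              (x i * (flagCount (F i) G u : ℝ)) * (x j * (flagCount (F j) G u : ℝ))
          = ∑ i, ∑ u : Fin k → Fin n, ∑ j,
              (x i * (flagCount (F i) G u : ℝ)) * (x j * (flagCount (F j) G u : ℝ)) :=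
            Finset.sum_congr rfl fun i _ => Finset.sum_comm
        _ = ∑ u : Fin k → Fin n, ∑ i, ∑ j,
              (x i * (flagCount (F i) G u : ℝ)) * (x j * (flagCount (F j) G u : ℝ)) :=
            Finset.sum_comm
        _ = ∑ u : Fin k → Fin n, (∑ i, x i * (flagCount (F i) G u : ℝ)) ^ 2 :=
            Finset.sum_congr rfl fun u _ => by rw [sq, Finset.sum_mul_sum]
    rw [hx]
    apply div_nonneg
    · exact Finset.sum_nonneg (fun u _ => sq_nonneg _)
    · exact Nat.cast_nonneg _
end

section
/- Let 𝒢 be an infinite class of finite simple graphs closed under taking induced subgraphs, let r ≥ 2s − k with 0 ≤ k < s, let ℋ = (H_1, …, H_t) be a complete list of the isomorphism types of r-vertex graphs in 𝒢, and let F_1, …, F_l be (s,k)-flagged graphs. Then for every (p_1, …, p_t) ∈ Δ_𝒢(ℋ), the matrix Σ_{α=1}^{t} p_α · A^{H_α}(F_1,…,F_l) is positive semidefinite. -/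
open Finset

open scoped Classical

/-- A class of finite simple graphs, given by a set of graphs on `Fin n` for each `n`. -/
abbrev GraphClass : Type := ∀ n : ℕ, Set (SimpleGraph (Fin n))

/-- The class `𝒢` is closed under taking induced subgraphs (up to isomorphism). -/
def ClosedUnderInduced (𝒢 : GraphClass) : Prop :=
  ∀ n : ℕ, ∀ G ∈ 𝒢 n, ∀ m : ℕ, ∀ G' : SimpleGraph (Fin m),
    (∃ S : Finset (Fin n), Nonempty (G' ≃g G.induce (S : Set (Fin n)))) → G' ∈ 𝒢 m

/-- The class `𝒢` is infinite: it contains graphs on arbitrarily many vertices. -/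
def InfiniteClass (𝒢 : GraphClass) : Prop :=
  ∀ N : ℕ, ∃ n : ℕ, N ≤ n ∧ (𝒢 n).Nonempty

/-- Membership of `(p₁,…,p_t)` in `Δ_𝒢(H₁,…,H_t)`: there is a sequence of graphs
`G_j ∈ 𝒢` with `|V(G_j)| → ∞` and `d(Hᵢ;G_j) → pᵢ` for each `i`. -/
def memDeltaClass (𝒢 : GraphClass) {t : ℕ} {ms : Fin t → ℕ}
    (H : ∀ i, SimpleGraph (Fin (ms i))) (p : Fin t → ℝ) : Prop :=
  ∃ (m : ℕ → ℕ) (Gs : ∀ j, SimpleGraph (Fin (m j))),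
    (∀ j, Gs j ∈ 𝒢 (m j)) ∧
    Filter.Tendsto m Filter.atTop Filter.atTop ∧
    ∀ i, Filter.Tendsto (fun j => inducedDensity (H i) (Gs j)) Filter.atTop (nhds (p i))



set_option linter.unusedSectionVars false

section Aux

variable {V : Type*} [Fintype V] [DecidableEq V] {V' : Type*} [Fintype V'] [DecidableEq V']
  {s k : ℕ}

def tmap (f : V ↪ V') (T : Finset V × Finset V × (Fin k → V)) :
    Finset V' × Finset V' × (Fin k → V') := (T.1.map f, T.2.1.map f, ⇑f ∘ T.2.2)

lemma mem_flagSample {T : Finset V × Finset V × (Fin k → V)} :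
    T ∈ flagSample V s k ↔ T.1.card = s ∧ T.2.1.card = s ∧ (T.1 ∩ T.2.1).card = k ∧
      Finset.image T.2.2 univ = T.1 ∩ T.2.1 := by
  simp [flagSample]

lemma tmap_mem (f : V ↪ V') {T : Finset V × Finset V × (Fin k → V)} :
    tmap f T ∈ flagSample V' s k ↔ T ∈ flagSample V s k := by
  simp only [mem_flagSample, tmap, Finset.card_map, ← Finset.map_inter]
  constructor
  · rintro ⟨h1, h2, h3, h4⟩
    refine ⟨h1, h2, h3, ?_⟩
    have : Finset.image (⇑f ∘ T.2.2) univ = (Finset.image T.2.2 univ).map f := by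
      rw [Finset.map_eq_image, Finset.image_image]
    rw [this] at h4
    exact Finset.map_inj.mp h4
  · rintro ⟨h1, h2, h3, h4⟩
    refine ⟨h1, h2, h3, ?_⟩
    rw [← h4, Finset.map_eq_image, Finset.image_image]

/-- The induced-subgraph isomorphism along an adjacency-reflecting embedding. -/
noncomputable def induceIsoMap (f : V ↪ V') {G : SimpleGraph V} {G' : SimpleGraph V'}
    (hf : ∀ a b, G'.Adj (f a) (f b) ↔ G.Adj a b) (S : Finset V) :
    G.induce (S : Set V) ≃g G'.induce ((S.map f : Finset V') : Set V') where
  toEquiv := (Equiv.Set.image ⇑f (S : Set V) f.injective).trans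
      (Equiv.setCongr (Finset.coe_map f S).symm)
  map_rel_iff' := by
    intro a b
    exact hf a b

@[simp] lemma induceIsoMap_coe (f : V ↪ V') {G : SimpleGraph V} {G' : SimpleGraph V'}
    (hf : ∀ a b, G'.Adj (f a) (f b) ↔ G.Adj a b) (S : Finset V) (x : (S : Set V)) :
    ((induceIsoMap f hf S x : V') ) = f x := rfl

lemma induceIsoMap_symm_coe (f : V ↪ V') {G : SimpleGraph V} {G' : SimpleGraph V'}
    (hf : ∀ a b, G'.Adj (f a) (f b) ↔ G.Adj a b) (S : Finset V)
    (y : ((S.map f : Finset V') : Set V')) :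
    f (((induceIsoMap f hf S).symm y : (S : Set V)) : V) = (y : V') :=
  congrArg Subtype.val ((induceIsoMap f hf S).apply_symm_apply y)

lemma flaggedIsoOn_map (f : V ↪ V') {G : SimpleGraph V} {G' : SimpleGraph V'}
    (hf : ∀ a b, G'.Adj (f a) (f b) ↔ G.Adj a b) (F : FlaggedGraph s k)
    (S : Finset V) (u : Fin k → V) :
    FlaggedIsoOn G' F (S.map f) (⇑f ∘ u) ↔ FlaggedIsoOn G F S u := by
  constructor
  · rintro ⟨ψ, hψ⟩
    refine ⟨ψ.trans (induceIsoMap f hf S).symm, fun i => f.injective ?_⟩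
    rw [show (((ψ.trans (induceIsoMap f hf S).symm) (F.flag i) : (S : Set V)) : V)
        = (((induceIsoMap f hf S).symm (ψ (F.flag i)) : (S : Set V)) : V) from rfl,
      induceIsoMap_symm_coe]
    exact hψ i
  · rintro ⟨φ, hφ⟩
    exact ⟨φ.trans (induceIsoMap f hf S), fun i => congrArg f (hφ i)⟩

end Aux


section Aux2

variable {V : Type*} [Fintype V] [DecidableEq V] {V' : Type*} [Fintype V'] [DecidableEq V']
  {s k : ℕ}

lemma tmap_tmap {V'' : Type*} (f : V ↪ V') (g : V' ↪ V'') (T : Finset V × Finset V × (Fin k → V)) :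
    tmap g (tmap f T) = tmap (f.trans g) T := by
  simp only [tmap, Finset.map_map, Prod.mk.injEq]
  exact ⟨trivial, trivial, rfl⟩

lemma tmap_refl (T : Finset V × Finset V × (Fin k → V)) :
    tmap (Function.Embedding.refl V) T = T := by
  simp [tmap]
  rfl

lemma tmap_injective (f : V ↪ V') : Function.Injective (tmap (k := k) f) := by
  rintro ⟨A, B, u⟩ ⟨A', B', u'⟩ h
  simp only [tmap, Prod.mk.injEq] at h
  obtain ⟨h1, h2, h3⟩ := h
  refine Prod.ext (Finset.map_inj.mp h1) (Prod.ext (Finset.map_inj.mp h2) ?_)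
  funext i
  exact f.injective (congrFun h3 i)

lemma card_filter_flagSample_equiv (e : V ≃ V')
    (P : Finset V × Finset V × (Fin k → V) → Prop)
    (P' : Finset V' × Finset V' × (Fin k → V') → Prop)
    [DecidablePred P] [DecidablePred P']
    (hPP : ∀ T ∈ flagSample V s k, (P' (tmap e.toEmbedding T) ↔ P T)) :
    ((flagSample V s k).filter P).card = ((flagSample V' s k).filter P').card := by
  have hco : e.toEmbedding.trans e.symm.toEmbedding = Function.Embedding.refl V := by
    ext x; simp
  have hco' : e.symm.toEmbedding.trans e.toEmbedding = Function.Embedding.refl V' := by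
    ext x; simp
  refine Finset.card_bij' (fun T _ => tmap e.toEmbedding T)
    (fun T _ => tmap e.symm.toEmbedding T) ?_ ?_ ?_ ?_
  · intro T hT
    rw [Finset.mem_filter] at hT ⊢
    exact ⟨(tmap_mem _).mpr hT.1, (hPP T hT.1).mpr hT.2⟩
  · intro T hT
    rw [Finset.mem_filter] at hT ⊢
    have hmem : tmap e.symm.toEmbedding T ∈ flagSample V s k := (tmap_mem _).mpr hT.1
    refine ⟨hmem, ?_⟩
    have := hPP _ hmem
    rw [tmap_tmap, hco', tmap_refl] at this
    exact this.mp hT.2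
  · intro T _
    show tmap e.symm.toEmbedding (tmap e.toEmbedding T) = T
    rw [tmap_tmap, hco, tmap_refl]
  · intro T _
    show tmap e.toEmbedding (tmap e.symm.toEmbedding T) = T
    rw [tmap_tmap, hco', tmap_refl]

lemma card_flagSample_equiv (e : V ≃ V') :
    (flagSample V s k).card = (flagSample V' s k).card := by
  have := card_filter_flagSample_equiv (s := s) (k := k) e (fun _ => True) (fun _ => True)
    (fun _ _ => Iff.rfl)
  simpa using this

lemma flagPairProb_iso {G : SimpleGraph V} {G' : SimpleGraph V'} (e : G ≃g G')
    (F₁ F₂ : FlaggedGraph s k) : flagPairProb F₁ F₂ G = flagPairProb F₁ F₂ G' := by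
  unfold flagPairProb
  rw [card_flagSample_equiv (s := s) (k := k) e.toEquiv]
  congr 2
  refine card_filter_flagSample_equiv e.toEquiv _ _ (fun T _ => ?_)
  have hf : ∀ a b, G'.Adj (e.toEquiv.toEmbedding a) (e.toEquiv.toEmbedding b) ↔ G.Adj a b :=
    fun a b => e.map_rel_iff
  exact and_congr (flaggedIsoOn_map e.toEquiv.toEmbedding hf F₁ T.1 T.2.2)
    (flaggedIsoOn_map e.toEquiv.toEmbedding hf F₂ T.2.1 T.2.2)

lemma flagPairProb_comm (F₁ F₂ : FlaggedGraph s k) (G : SimpleGraph V) :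
    flagPairProb F₁ F₂ G = flagPairProb F₂ F₁ G := by
  unfold flagPairProb
  congr 2
  refine Finset.card_bij' (fun T _ => (T.2.1, T.1, T.2.2)) (fun T _ => (T.2.1, T.1, T.2.2))
    ?_ ?_ ?_ ?_
  · rintro ⟨A, B, u⟩ hT
    rw [Finset.mem_filter] at hT ⊢
    obtain ⟨hs, h1, h2⟩ := hT
    rw [mem_flagSample] at hs ⊢
    exact ⟨⟨hs.2.1, hs.1, by rw [Finset.inter_comm]; exact hs.2.2.1,
      by rw [Finset.inter_comm]; exact hs.2.2.2⟩, h2, h1⟩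
  · rintro ⟨A, B, u⟩ hT
    rw [Finset.mem_filter] at hT ⊢
    obtain ⟨hs, h1, h2⟩ := hT
    rw [mem_flagSample] at hs ⊢
    exact ⟨⟨hs.2.1, hs.1, by rw [Finset.inter_comm]; exact hs.2.2.1,
      by rw [Finset.inter_comm]; exact hs.2.2.2⟩, h2, h1⟩
  · intro T _; rfl
  · intro T _; rfl

lemma card_flagSample_restrict (R : Finset V)
    (P : Finset V × Finset V × (Fin k → V) → Prop) [DecidablePred P] :
    ((flagSample ((R : Set V)) s k).filter
        (fun T => P (tmap (Function.Embedding.subtype _) T))).card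
      = ((flagSample V s k).filter (fun T => P T ∧ T.1 ∪ T.2.1 ⊆ R)).card := by
  set f : ((R : Set V)) ↪ V := Function.Embedding.subtype _ with hfdef
  refine Finset.card_bij (fun T _ => tmap f T) ?_ ?_ ?_
  · intro T hT
    rw [Finset.mem_filter] at hT ⊢
    refine ⟨(tmap_mem f).mpr hT.1, hT.2, ?_⟩
    intro x hx
    rw [Finset.mem_union] at hx
    simp only [tmap] at hx
    rcases hx with hx | hx <;>
    · rw [Finset.mem_map] at hx
      obtain ⟨a, _, rfl⟩ := hx
      exact Finset.mem_coe.mp a.2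
  · intro T₁ h₁ T₂ h₂ h
    exact tmap_injective f h
  · rintro ⟨S₁, S₂, u⟩ hT
    rw [Finset.mem_filter] at hT
    obtain ⟨hs, hP, hsub⟩ := hT
    have hS₁ : S₁ ⊆ R := fun x hx => hsub (Finset.mem_union_left _ hx)
    have hS₂ : S₂ ⊆ R := fun x hx => hsub (Finset.mem_union_right _ hx)
    have hu : ∀ i, u i ∈ (R : Set V) := by
      intro i
      have : u i ∈ Finset.image u Finset.univ := Finset.mem_image_of_mem u (Finset.mem_univ i)
      rw [mem_flagSample.mp hs |>.2.2.2] at this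
      exact Finset.mem_coe.mpr (hS₁ (Finset.mem_of_mem_inter_left this))
    refine ⟨(S₁.subtype _, S₂.subtype _, fun i => ⟨u i, hu i⟩), ?_, ?_⟩
    · have htm : tmap f ((S₁.subtype (· ∈ (R : Set V)), S₂.subtype (· ∈ (R : Set V)),
          fun i => (⟨u i, hu i⟩ : (R : Set V)))) = (S₁, S₂, u) := by
        simp only [tmap, hfdef, Finset.subtype_map, Prod.mk.injEq]
        refine ⟨Finset.filter_true_of_mem (fun x hx => Finset.mem_coe.mpr (hS₁ hx)),
          Finset.filter_true_of_mem (fun x hx => Finset.mem_coe.mpr (hS₂ hx)), rfl⟩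
      rw [Finset.mem_filter, htm]
      constructor
      · rw [← htm] at hs
        exact (tmap_mem f).mp hs
      · exact hP
    · simp only [tmap, hfdef, Finset.subtype_map, Prod.mk.injEq]
      refine ⟨Finset.filter_true_of_mem (fun x hx => Finset.mem_coe.mpr (hS₁ hx)),
        Finset.filter_true_of_mem (fun x hx => Finset.mem_coe.mpr (hS₂ hx)), rfl⟩

end Aux2

section Aux3

variable {V : Type*} [Fintype V] [DecidableEq V] {s k : ℕ}

lemma card_supersets {A W : Finset V} (hAW : A ⊆ W) {m : ℕ} (hm : A.card ≤ m) :
    ((W.powersetCard m).filter (fun S => A ⊆ S)).card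
      = (W.card - A.card).choose (m - A.card) := by
  rw [← Finset.card_sdiff_of_subset hAW, ← Finset.card_powersetCard (m - A.card) (W \ A)]
  refine Finset.card_bij (fun S _ => S \ A) ?_ ?_ ?_
  · intro S hS
    rw [Finset.mem_filter, Finset.mem_powersetCard] at hS
    obtain ⟨⟨hSW, hScard⟩, hAS⟩ := hS
    rw [Finset.mem_powersetCard]
    exact ⟨Finset.sdiff_subset_sdiff hSW (subset_refl A),
      by rw [Finset.card_sdiff_of_subset hAS, hScard]⟩
  · intro S₁ h₁ S₂ h₂ h
    rw [Finset.mem_filter] at h₁ h₂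
    rw [← Finset.sdiff_union_of_subset h₁.2, ← Finset.sdiff_union_of_subset h₂.2, h]
  · intro T hT
    rw [Finset.mem_powersetCard] at hT
    obtain ⟨hTW, hTcard⟩ := hT
    have hdisj : Disjoint T A := Finset.disjoint_of_subset_left hTW Finset.sdiff_disjoint
    refine ⟨T ∪ A, ?_, ?_⟩
    · rw [Finset.mem_filter, Finset.mem_powersetCard]
      refine ⟨⟨Finset.union_subset (hTW.trans Finset.sdiff_subset) hAW, ?_⟩,
        Finset.subset_union_right⟩
      rw [Finset.card_union_of_disjoint hdisj, hTcard]
      omega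
    · show (T ∪ A) \ A = T
      rw [Finset.union_sdiff_cancel_right hdisj]

lemma card_union_of_mem_flagSample {T : Finset V × Finset V × (Fin k → V)}
    (hT : T ∈ flagSample V s k) : (T.1 ∪ T.2.1).card = 2 * s - k := by
  have h := mem_flagSample.mp hT
  have := Finset.card_union_add_card_inter T.1 T.2.1
  rw [h.1, h.2.1, h.2.2.1] at this
  omega

lemma sum_card_restrict (r : ℕ) (hw : 2 * s - k ≤ r)
    (P : Finset V × Finset V × (Fin k → V) → Prop) [DecidablePred P] :
    ∑ R ∈ (univ : Finset V).powersetCard r,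
        ((flagSample V s k).filter (fun T => P T ∧ T.1 ∪ T.2.1 ⊆ R)).card
      = ((flagSample V s k).filter P).card
          * (Fintype.card V - (2 * s - k)).choose (r - (2 * s - k)) := by
  have hstep : ∀ R, ((flagSample V s k).filter (fun T => P T ∧ T.1 ∪ T.2.1 ⊆ R))
      = ((flagSample V s k).filter P).filter (fun T => T.1 ∪ T.2.1 ⊆ R) := by
    intro R
    rw [Finset.filter_filter]
  calc ∑ R ∈ (univ : Finset V).powersetCard r,
        ((flagSample V s k).filter (fun T => P T ∧ T.1 ∪ T.2.1 ⊆ R)).card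
      = ∑ R ∈ (univ : Finset V).powersetCard r,
          ∑ T ∈ (flagSample V s k).filter P, if T.1 ∪ T.2.1 ⊆ R then 1 else 0 := by
        refine Finset.sum_congr rfl (fun R _ => ?_)
        rw [hstep, Finset.card_filter]
    _ = ∑ T ∈ (flagSample V s k).filter P,
          ∑ R ∈ (univ : Finset V).powersetCard r, if T.1 ∪ T.2.1 ⊆ R then 1 else 0 :=
        Finset.sum_comm
    _ = ∑ T ∈ (flagSample V s k).filter P,
          (Fintype.card V - (2 * s - k)).choose (r - (2 * s - k)) := by
        refine Finset.sum_congr rfl (fun T hT => ?_)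
        rw [← Finset.card_filter]
        have hTs : T ∈ flagSample V s k := Finset.mem_of_mem_filter T hT
        have hcu : (T.1 ∪ T.2.1).card = 2 * s - k := card_union_of_mem_flagSample hTs
        have := card_supersets (A := T.1 ∪ T.2.1) (W := (univ : Finset V))
          (Finset.subset_univ _) (m := r) (by omega)
        rw [this, Finset.card_univ, hcu]
    _ = _ := by rw [Finset.sum_const, smul_eq_mul]

lemma flagSample_injective {T : Finset V × Finset V × (Fin k → V)}
    (hT : T ∈ flagSample V s k) : Function.Injective T.2.2 := by
  have h := mem_flagSample.mp hT
  have hc : (Finset.image T.2.2 univ).card = (univ : Finset (Fin k)).card := by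
    rw [h.2.2.2, h.2.2.1, Finset.card_univ, Fintype.card_fin]
  have hinj : Set.InjOn T.2.2 ↑(univ : Finset (Fin k)) := Finset.card_image_iff.mp hc
  intro a b hab
  exact hinj (by simp) (by simp) hab

lemma card_fiber (u : Fin k → V) (hu : Function.Injective u) (hk : k ≤ s) :
    ((flagSample V s k).filter (fun T => T.2.2 = u)).card
      = (Fintype.card V - k).choose (s - k) * (Fintype.card V - s).choose (s - k) := by
  set U : Finset V := Finset.image u univ with hUdef
  have hUcard : U.card = k := by
    rw [hUdef, Finset.card_image_of_injective _ hu, Finset.card_univ, Fintype.card_fin]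
  have step1 : ((flagSample V s k).filter (fun T => T.2.2 = u)).card
      = ((((univ : Finset V).powersetCard s) ×ˢ ((univ : Finset V).powersetCard s)).filter
          (fun q => q.1 ∩ q.2 = U)).card := by
    refine Finset.card_bij (fun T _ => (T.1, T.2.1)) ?_ ?_ ?_
    · rintro ⟨A, B, w⟩ hT
      rw [Finset.mem_filter] at hT
      obtain ⟨hTs, hw⟩ := hT
      have h := mem_flagSample.mp hTs
      rw [Finset.mem_filter, Finset.mem_product]
      refine ⟨⟨Finset.mem_powersetCard_univ.mpr h.1, Finset.mem_powersetCard_univ.mpr h.2.1⟩, ?_⟩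
      dsimp only at hw ⊢
      rw [← h.2.2.2, hw]
    · rintro ⟨A, B, w⟩ h₁ ⟨A', B', w'⟩ h₂ h
      rw [Finset.mem_filter] at h₁ h₂
      simp only [Prod.mk.injEq] at h ⊢
      exact ⟨h.1, h.2, h₁.2.trans h₂.2.symm⟩
    · rintro ⟨A, B⟩ hq
      rw [Finset.mem_filter, Finset.mem_product] at hq
      obtain ⟨⟨hA, hB⟩, hAB⟩ := hq
      refine ⟨(A, B, u), ?_, rfl⟩
      rw [Finset.mem_filter, mem_flagSample]
      refine ⟨⟨Finset.mem_powersetCard_univ.mp hA, Finset.mem_powersetCard_univ.mp hB, ?_, ?_⟩, rfl⟩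
      · dsimp only at hAB ⊢; rw [hAB, hUcard]
      · dsimp only at hAB ⊢; rw [hAB]
  rw [step1]
  have hsupers : (((univ : Finset V).powersetCard s).filter (fun S => U ⊆ S)).card
      = (Fintype.card V - k).choose (s - k) := by
    have := card_supersets (A := U) (W := (univ : Finset V)) (Finset.subset_univ _)
      (m := s) (by omega)
    rw [this, Finset.card_univ, hUcard]
  rw [Finset.card_eq_sum_card_fiberwise
    (f := fun q => q.1) (t := ((univ : Finset V).powersetCard s).filter (fun S => U ⊆ S))
    (by
      rintro ⟨A, B⟩ hq
      rw [Finset.mem_coe, Finset.mem_filter, Finset.mem_product] at hq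
      rw [Finset.mem_coe, Finset.mem_filter]
      exact ⟨hq.1.1, by rw [← hq.2]; exact Finset.inter_subset_left⟩)]
  have hfib : ∀ A ∈ ((univ : Finset V).powersetCard s).filter (fun S => U ⊆ S),
      ((((((univ : Finset V).powersetCard s) ×ˢ ((univ : Finset V).powersetCard s)).filter
          (fun q => q.1 ∩ q.2 = U))).filter (fun q => q.1 = A)).card
        = (Fintype.card V - s).choose (s - k) := by
    intro A hA
    rw [Finset.mem_filter, Finset.mem_powersetCard_univ] at hA
    obtain ⟨hAcard, hUA⟩ := hA
    have step2 : (((((univ : Finset V).powersetCard s) ×ˢ ((univ : Finset V).powersetCard s)).filter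
          (fun q => q.1 ∩ q.2 = U)).filter (fun q => q.1 = A)).card
        = (((univ : Finset V).powersetCard s).filter (fun B => A ∩ B = U)).card := by
      refine Finset.card_bij (fun q _ => q.2) ?_ ?_ ?_
      · rintro ⟨A', B⟩ hq
        simp only [Finset.mem_filter, Finset.mem_product] at hq
        obtain ⟨⟨⟨h1, h2⟩, h3⟩, h4⟩ := hq
        rw [Finset.mem_filter]
        dsimp only at h3 h4 ⊢
        subst h4
        exact ⟨h2, h3⟩
      · rintro ⟨A₁, B₁⟩ h₁ ⟨A₂, B₂⟩ h₂ h
        simp only [Finset.mem_filter, Finset.mem_product] at h₁ h₂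
        dsimp only at h ⊢
        rw [Prod.mk.injEq]
        exact ⟨h₁.2.trans h₂.2.symm, h⟩
      · intro B hB
        rw [Finset.mem_filter] at hB
        refine ⟨(A, B), ?_, rfl⟩
        simp only [Finset.mem_filter, Finset.mem_product]
        exact ⟨⟨⟨Finset.mem_powersetCard_univ.mpr hAcard, hB.1⟩, hB.2⟩, trivial⟩
    rw [step2]
    have hset : (((univ : Finset V).powersetCard s).filter (fun B => A ∩ B = U))
        = (((univ \ A) ∪ U).powersetCard s).filter (fun B => U ⊆ B) := by
      ext B
      simp only [Finset.mem_filter, Finset.mem_powersetCard, Finset.mem_powersetCard_univ]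
      constructor
      · rintro ⟨⟨_, hBcard⟩, hABU⟩
        refine ⟨⟨?_, hBcard⟩, by rw [← hABU]; exact Finset.inter_subset_right⟩
        intro x hx
        rw [Finset.mem_union, Finset.mem_sdiff]
        by_cases hxA : x ∈ A
        · right; rw [← hABU]; exact Finset.mem_inter.mpr ⟨hxA, hx⟩
        · left; exact ⟨Finset.mem_univ x, hxA⟩
      · rintro ⟨⟨hBW, hBcard⟩, hUB⟩
        refine ⟨⟨Finset.subset_univ B, hBcard⟩, ?_⟩
        apply Finset.Subset.antisymm
        · intro x hx
          rw [Finset.mem_inter] at hx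
          have := hBW hx.2
          rw [Finset.mem_union, Finset.mem_sdiff] at this
          rcases this with h | h
          · exact absurd hx.1 h.2
          · exact h
        · exact Finset.subset_inter hUA hUB
    rw [hset]
    have hdisj : Disjoint (univ \ A) U :=
      Finset.disjoint_of_subset_right hUA Finset.sdiff_disjoint
    have hWcard : ((univ \ A) ∪ U).card = Fintype.card V - s + k := by
      rw [Finset.card_union_of_disjoint hdisj, Finset.card_sdiff_of_subset (Finset.subset_univ A),
        Finset.card_univ, hAcard, hUcard]
    have := card_supersets (A := U) (W := (univ \ A) ∪ U) Finset.subset_union_right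
      (m := s) (by omega)
    rw [this, hWcard, hUcard]
    congr 1
    omega
  rw [Finset.sum_congr rfl hfib, Finset.sum_const, hsupers, smul_eq_mul]

lemma card_bad_le (u : Fin k → V) (hu : Function.Injective u) (hks : k < s) :
    ((((univ : Finset V).powersetCard s) ×ˢ ((univ : Finset V).powersetCard s)).filter
        (fun q => Finset.image u univ ⊆ q.1 ∧ Finset.image u univ ⊆ q.2 ∧
          q.1 ∩ q.2 ≠ Finset.image u univ)).card
      ≤ Fintype.card V * ((Fintype.card V - (k + 1)).choose (s - (k + 1)))^2 := by
  set U : Finset V := Finset.image u univ with hUdef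
  have hUcard : U.card = k := by
    rw [hUdef, Finset.card_image_of_injective _ hu, Finset.card_univ, Fintype.card_fin]
  have hsub : ((((univ : Finset V).powersetCard s) ×ˢ ((univ : Finset V).powersetCard s)).filter
        (fun q => U ⊆ q.1 ∧ U ⊆ q.2 ∧ q.1 ∩ q.2 ≠ U))
      ⊆ (univ \ U).biUnion (fun v =>
          (((univ : Finset V).powersetCard s) ×ˢ ((univ : Finset V).powersetCard s)).filter
            (fun q => insert v U ⊆ q.1 ∧ insert v U ⊆ q.2)) := by
    rintro ⟨A, B⟩ hq
    simp only [Finset.mem_filter] at hq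
    obtain ⟨hmem, hUA, hUB, hne⟩ := hq
    have hss : U ⊂ A ∩ B := by
      rw [Finset.ssubset_iff_subset_ne]
      exact ⟨Finset.subset_inter hUA hUB, fun h => hne h.symm⟩
    obtain ⟨v, hv, hvU⟩ := Finset.exists_of_ssubset hss
    rw [Finset.mem_biUnion]
    refine ⟨v, Finset.mem_sdiff.mpr ⟨Finset.mem_univ v, hvU⟩, ?_⟩
    rw [Finset.mem_filter]
    rw [Finset.mem_inter] at hv
    exact ⟨hmem, Finset.insert_subset hv.1 hUA, Finset.insert_subset hv.2 hUB⟩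
  refine (Finset.card_le_card hsub).trans ((Finset.card_biUnion_le).trans ?_)
  have hterm : ∀ v ∈ univ \ U,
      ((((univ : Finset V).powersetCard s) ×ˢ ((univ : Finset V).powersetCard s)).filter
        (fun q => insert v U ⊆ q.1 ∧ insert v U ⊆ q.2)).card
      = ((Fintype.card V - (k + 1)).choose (s - (k + 1)))^2 := by
    intro v hv
    rw [Finset.mem_sdiff] at hv
    have hic : (insert v U).card = k + 1 := by
      rw [Finset.card_insert_of_notMem hv.2, hUcard]
    rw [Finset.filter_product, Finset.card_product]
    have := card_supersets (A := insert v U) (W := (univ : Finset V))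
      (Finset.subset_univ _) (m := s) (by omega)
    rw [this, Finset.card_univ, hic, sq]
  rw [Finset.sum_congr rfl hterm, Finset.sum_const, smul_eq_mul]
  have : (univ \ U).card ≤ Fintype.card V := by
    refine (Finset.card_le_card (Finset.subset_univ _)).trans_eq Finset.card_univ
  exact Nat.mul_le_mul_right _ this

end Aux3

section Aux4

variable {V : Type*} [Fintype V] [DecidableEq V] {s k : ℕ}

lemma card_filter_pred_iso {V' : Type*} [Fintype V'] [DecidableEq V']
    {G : SimpleGraph V} {G' : SimpleGraph V'} (e : G ≃g G') (F₁ F₂ : FlaggedGraph s k) :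
    ((flagSample V s k).filter
        (fun T => FlaggedIsoOn G F₁ T.1 T.2.2 ∧ FlaggedIsoOn G F₂ T.2.1 T.2.2)).card
      = ((flagSample V' s k).filter
        (fun T => FlaggedIsoOn G' F₁ T.1 T.2.2 ∧ FlaggedIsoOn G' F₂ T.2.1 T.2.2)).card := by
  refine card_filter_flagSample_equiv e.toEquiv _ _ (fun T _ => ?_)
  have hf : ∀ a b, G'.Adj (e.toEquiv.toEmbedding a) (e.toEquiv.toEmbedding b) ↔ G.Adj a b :=
    fun a b => e.map_rel_iff
  exact and_congr (flaggedIsoOn_map e.toEquiv.toEmbedding hf F₁ T.1 T.2.2)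
    (flaggedIsoOn_map e.toEquiv.toEmbedding hf F₂ T.2.1 T.2.2)

lemma flagSample_card_pos (hks : k < s) (hn : 2 * s - k ≤ Fintype.card V) :
    0 < (flagSample V s k).card := by
  have hk_le : k ≤ Fintype.card V := by omega
  set u : Fin k → V := fun i => (Fintype.equivFin V).symm (Fin.castLE hk_le i) with hudef
  have hu : Function.Injective u := by
    intro a b hab
    have := (Fintype.equivFin V).symm.injective hab
    exact Fin.castLE_injective hk_le this
  have hfib := card_fiber u hu (le_of_lt hks)
  have hpos : 0 < (Fintype.card V - k).choose (s - k) * (Fintype.card V - s).choose (s - k) :=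
    Nat.mul_pos (Nat.choose_pos (by omega)) (Nat.choose_pos (by omega))
  calc 0 < ((flagSample V s k).filter (fun T => T.2.2 = u)).card := by rw [hfib]; exact hpos
    _ ≤ (flagSample V s k).card := Finset.card_le_card (Finset.filter_subset _ _)

lemma inducedDensity_eq_s10 {W V' : Type*} [Fintype W] [Fintype V'] [DecidableEq V']
    (H : SimpleGraph W) (G : SimpleGraph V') :
    inducedDensity H G = ((((univ : Finset V').powersetCard (Fintype.card W)).filter
        (fun R : Finset V' => Nonempty (H ≃g G.induce (R : Set V')))).card : ℝ)
      / (((univ : Finset V').powersetCard (Fintype.card W)).card : ℝ) := by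
  unfold inducedDensity
  congr 2
  have h1 : ((((univ : Finset V').powersetCard (Fintype.card W)) >>= (fun a => pure ((a : Set V'))))
        : Finset (Set V'))
      = ((univ : Finset V').powersetCard (Fintype.card W)).image
          (fun R : Finset V' => (R : Set V')) := by
    simp only [Bind.bind, Pure.pure, Finset.sup_eq_biUnion, Finset.biUnion_singleton]
    rfl
  rw [h1, Finset.filter_image, Finset.card_image_of_injective _ Finset.coe_injective]

lemma flagPairProb_eq_sum {r t : ℕ} (F₁ F₂ : FlaggedGraph s k) (hks : k < s)
    (hw : 2 * s - k ≤ r) (G : SimpleGraph V) (hn : r ≤ Fintype.card V)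
    (H : Fin t → SimpleGraph (Fin r))
    (hcl : ∀ R ∈ (univ : Finset V).powersetCard r,
      ∃ α, Nonempty (H α ≃g G.induce (R : Set V)) ∧
        ∀ β, Nonempty (H β ≃g G.induce (R : Set V)) → β = α) :
    flagPairProb F₁ F₂ G = ∑ α, inducedDensity (H α) G * flagPairProb F₁ F₂ (H α) := by
  set n := Fintype.card V with hndef
  set w := 2 * s - k with hwdef
  set NG := ((flagSample V s k).filter
      (fun T => FlaggedIsoOn G F₁ T.1 T.2.2 ∧ FlaggedIsoOn G F₂ T.2.1 T.2.2)).card with hNG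
  set DG := (flagSample V s k).card with hDG
  set Nα := fun α => ((flagSample (Fin r) s k).filter
      (fun T => FlaggedIsoOn (H α) F₁ T.1 T.2.2 ∧ FlaggedIsoOn (H α) F₂ T.2.1 T.2.2)).card
    with hNα
  set Dr := (flagSample (Fin r) s k).card with hDr
  set dα := fun α => (((univ : Finset V).powersetCard r).filter
      (fun R : Finset V => Nonempty (H α ≃g G.induce (R : Set V)))).card with hdα
  -- per-R reduction
  have hkeyNum : ∀ R ∈ (univ : Finset V).powersetCard r,
      ((flagSample V s k).filter (fun T =>
          (FlaggedIsoOn G F₁ T.1 T.2.2 ∧ FlaggedIsoOn G F₂ T.2.1 T.2.2)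
            ∧ T.1 ∪ T.2.1 ⊆ R)).card
        = ∑ α, if Nonempty (H α ≃g G.induce (R : Set V)) then Nα α else 0 := by
    intro R hR
    obtain ⟨α₀, hex, huniq⟩ := hcl R hR
    -- restrict to R
    have hrestrict := card_flagSample_restrict (s := s) (k := k) R
      (fun T => FlaggedIsoOn G F₁ T.1 T.2.2 ∧ FlaggedIsoOn G F₂ T.2.1 T.2.2)
    have hcongr : ((flagSample ((R : Set V)) s k).filter (fun T =>
        FlaggedIsoOn G F₁ (tmap (Function.Embedding.subtype _) T).1
            (tmap (Function.Embedding.subtype _) T).2.2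
          ∧ FlaggedIsoOn G F₂ (tmap (Function.Embedding.subtype _) T).2.1
            (tmap (Function.Embedding.subtype _) T).2.2))
        = ((flagSample ((R : Set V)) s k).filter (fun T =>
          FlaggedIsoOn (G.induce (R : Set V)) F₁ T.1 T.2.2
            ∧ FlaggedIsoOn (G.induce (R : Set V)) F₂ T.2.1 T.2.2)) := by
      refine Finset.filter_congr (fun T _ => ?_)
      simp only [tmap]
      have hf : ∀ a b : ((R : Set V)), G.Adj ((Function.Embedding.subtype _) a)
          ((Function.Embedding.subtype _) b) ↔ (G.induce (R : Set V)).Adj a b :=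
        fun a b => Iff.rfl
      exact and_congr (flaggedIsoOn_map _ hf F₁ T.1 T.2.2) (flaggedIsoOn_map _ hf F₂ T.2.1 T.2.2)
    have hiso0 := Classical.choice hex
    have hnum_r : ((flagSample ((R : Set V)) s k).filter (fun T =>
        FlaggedIsoOn (G.induce (R : Set V)) F₁ T.1 T.2.2
          ∧ FlaggedIsoOn (G.induce (R : Set V)) F₂ T.2.1 T.2.2)).card = Nα α₀ :=
      card_filter_pred_iso hiso0.symm F₁ F₂
    have hLHS : ((flagSample V s k).filter (fun T =>
        (FlaggedIsoOn G F₁ T.1 T.2.2 ∧ FlaggedIsoOn G F₂ T.2.1 T.2.2)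
          ∧ T.1 ∪ T.2.1 ⊆ R)).card = Nα α₀ := by
      rw [← hrestrict]
      exact (congrArg Finset.card hcongr).trans hnum_r
    rw [hLHS]
    rw [Finset.sum_eq_single_of_mem α₀ (Finset.mem_univ α₀)
      (fun β _ hβ => if_neg (fun hne => hβ (huniq β hne)))]
    rw [if_pos hex]
  have hkeyDen : ∀ R ∈ (univ : Finset V).powersetCard r,
      ((flagSample V s k).filter (fun T => True ∧ T.1 ∪ T.2.1 ⊆ R)).card = Dr := by
    intro R hR
    obtain ⟨α₀, hex, _⟩ := hcl R hR
    have hrestrict := card_flagSample_restrict (s := s) (k := k) R (fun _ => True)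
    have : ((flagSample ((R : Set V)) s k).filter (fun _ => True)).card
        = (flagSample ((R : Set V)) s k).card := by
      rw [Finset.filter_true_of_mem (fun _ _ => trivial)]
    rw [← hrestrict, this, hDr]
    exact card_flagSample_equiv (Classical.choice hex).symm.toEquiv
  -- the two counting identities
  have hEq1 : NG * (n - w).choose (r - w) = ∑ α, dα α * Nα α := by
    rw [← sum_card_restrict (s := s) (k := k) r hw
      (fun T => FlaggedIsoOn G F₁ T.1 T.2.2 ∧ FlaggedIsoOn G F₂ T.2.1 T.2.2)]
    rw [Finset.sum_congr rfl hkeyNum, Finset.sum_comm]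
    refine Finset.sum_congr rfl (fun α _ => ?_)
    rw [← Finset.sum_filter, Finset.sum_const, smul_eq_mul, hdα]
  have hEq2 : DG * (n - w).choose (r - w) = n.choose r * Dr := by
    have h0 := sum_card_restrict (s := s) (k := k) r hw
      (fun _ : Finset V × Finset V × (Fin k → V) => True)
    rw [Finset.filter_true_of_mem (fun _ _ => trivial)] at h0
    rw [← h0, Finset.sum_congr rfl hkeyDen, Finset.sum_const, smul_eq_mul,
      Finset.card_powersetCard, Finset.card_univ]
  -- positivity
  have hDGpos : 0 < DG := flagSample_card_pos hks (by omega)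
  have hDrpos : 0 < Dr := by
    have := flagSample_card_pos (V := Fin r) hks (by simp [Fintype.card_fin]; omega)
    exact this
  have hNrpos : 0 < n.choose r := Nat.choose_pos hn
  have hc₁pos : 0 < (n - w).choose (r - w) := Nat.choose_pos (by omega)
  -- assemble in ℝ
  have hprob : flagPairProb F₁ F₂ G = (NG : ℝ) / DG := rfl
  have hprobα : ∀ α, flagPairProb F₁ F₂ (H α) = (Nα α : ℝ) / Dr := fun α => rfl
  have hdens : ∀ α, inducedDensity (H α) G = (dα α : ℝ) / (n.choose r) := by
    intro α
    rw [inducedDensity_eq_s10, Finset.card_powersetCard, Finset.card_univ]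
    simp only [Fintype.card_fin, hdα, hndef]
  have h1 : (NG : ℝ) * ((n - w).choose (r - w)) = ∑ α, (dα α : ℝ) * (Nα α) := by
    have := congrArg (Nat.cast (R := ℝ)) hEq1
    push_cast at this
    exact this
  have h2 : (DG : ℝ) * ((n - w).choose (r - w)) = (n.choose r : ℝ) * Dr := by
    have := congrArg (Nat.cast (R := ℝ)) hEq2
    push_cast at this
    exact this
  have hsum : ∑ α, inducedDensity (H α) G * flagPairProb F₁ F₂ (H α)
      = (∑ α, (dα α : ℝ) * (Nα α)) / ((n.choose r : ℝ) * Dr) := by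
    rw [Finset.sum_div]
    refine Finset.sum_congr rfl (fun α _ => ?_)
    rw [hdens α, hprobα α, div_mul_div_comm]
  rw [hprob, hsum]
  have hDG' : (0 : ℝ) < DG := by exact_mod_cast hDGpos
  have hNrDr : (0 : ℝ) < (n.choose r : ℝ) * Dr := by
    have h3 : (0 : ℝ) < (n.choose r : ℝ) := by exact_mod_cast hNrpos
    have h4 : (0 : ℝ) < (Dr : ℝ) := by exact_mod_cast hDrpos
    exact mul_pos h3 h4
  rw [div_eq_div_iff hDG'.ne' hNrDr.ne', ← h1, ← h2]
  ring

end Aux4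

section Aux5

variable {V : Type*} [Fintype V] [DecidableEq V] {s k l : ℕ}

lemma fib_card_eq (F : Fin l → FlaggedGraph s k) (G : SimpleGraph V) (i j : Fin l)
    (u : Fin k → V) (hu : Function.Injective u) :
    ((flagSample V s k).filter (fun T =>
        (FlaggedIsoOn G (F i) T.1 T.2.2 ∧ FlaggedIsoOn G (F j) T.2.1 T.2.2) ∧ T.2.2 = u)).card
      = (((((univ : Finset V).powersetCard s).filter
            (fun S => Finset.image u univ ⊆ S ∧ FlaggedIsoOn G (F i) S u)) ×ˢ
          ((((univ : Finset V).powersetCard s)).filter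
            (fun S => Finset.image u univ ⊆ S ∧ FlaggedIsoOn G (F j) S u))).filter
          (fun q => q.1 ∩ q.2 = Finset.image u univ)).card := by
  have hUcard : (Finset.image u univ).card = k := by
    rw [Finset.card_image_of_injective _ hu, Finset.card_univ, Fintype.card_fin]
  refine Finset.card_bij (fun T _ => (T.1, T.2.1)) ?_ ?_ ?_
  · rintro ⟨A, B, w⟩ hT
    rw [Finset.mem_filter] at hT
    obtain ⟨hTs, hP⟩ := hT
    dsimp only at hP
    obtain ⟨⟨hp1, hp2⟩, hw⟩ := hP
    subst hw
    have h := mem_flagSample.mp hTs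
    have hU : Finset.image w univ = A ∩ B := h.2.2.2
    refine Finset.mem_filter.mpr ⟨Finset.mem_product.mpr ⟨?_, ?_⟩, hU.symm⟩
    · exact Finset.mem_filter.mpr ⟨Finset.mem_powersetCard_univ.mpr h.1,
        by rw [hU]; exact Finset.inter_subset_left, hp1⟩
    · exact Finset.mem_filter.mpr ⟨Finset.mem_powersetCard_univ.mpr h.2.1,
        by rw [hU]; exact Finset.inter_subset_right, hp2⟩
  · rintro ⟨A, B, w⟩ h₁ ⟨A', B', w'⟩ h₂ h
    rw [Finset.mem_filter] at h₁ h₂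
    simp only [Prod.mk.injEq] at h ⊢
    exact ⟨h.1, h.2, h₁.2.2.trans h₂.2.2.symm⟩
  · rintro ⟨A, B⟩ hq
    simp only [Finset.mem_filter, Finset.mem_product] at hq
    obtain ⟨⟨hA, hB⟩, hAB⟩ := hq
    refine ⟨(A, B, u), ?_, ?_⟩
    · rw [Finset.mem_filter, mem_flagSample]
      refine ⟨⟨Finset.mem_powersetCard_univ.mp hA.1, Finset.mem_powersetCard_univ.mp hB.1, ?_, ?_⟩,
        ⟨hA.2.2, hB.2.2⟩, rfl⟩
      · dsimp only at hAB ⊢; rw [hAB, hUcard]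
      · dsimp only at hAB ⊢; rw [hAB]
    · rfl

lemma fib_empty (P : Finset V × Finset V × (Fin k → V) → Prop) (u : Fin k → V)
    (hu : ¬ Function.Injective u) :
    ((flagSample V s k).filter (fun T => P T ∧ T.2.2 = u)) = ∅ := by
  rw [Finset.eq_empty_iff_forall_notMem]
  intro T hT
  rw [Finset.mem_filter] at hT
  exact hu (hT.2.2 ▸ flagSample_injective hT.1)

lemma fib_empty_plain (u : Fin k → V) (hu : ¬ Function.Injective u) :
    ((flagSample V s k).filter (fun T => T.2.2 = u)) = ∅ := by
  rw [Finset.eq_empty_iff_forall_notMem]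
  intro T hT
  rw [Finset.mem_filter] at hT
  exact hu (hT.2 ▸ flagSample_injective hT.1)

lemma flagSample_card_eq_inj_mul (hks : k < s) :
    (flagSample V s k).card
      = ((univ : Finset (Fin k → V)).filter Function.Injective).card
        * ((Fintype.card V - k).choose (s - k) * (Fintype.card V - s).choose (s - k)) := by
  rw [Finset.card_eq_sum_card_fiberwise (f := fun T => T.2.2)
    (t := (univ : Finset (Fin k → V))) (fun T _ => Finset.mem_univ _)]
  rw [← Finset.sum_filter_add_sum_filter_not (univ : Finset (Fin k → V)) Function.Injective]
  have h2 : ∑ u ∈ (univ : Finset (Fin k → V)).filter (fun u => ¬ Function.Injective u),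
      ((flagSample V s k).filter (fun T => T.2.2 = u)).card = 0 := by
    refine Finset.sum_eq_zero (fun u hu => ?_)
    rw [Finset.mem_filter] at hu
    rw [fib_empty_plain u hu.2, Finset.card_empty]
  rw [h2, add_zero]
  have h1 : ∀ u ∈ (univ : Finset (Fin k → V)).filter Function.Injective,
      ((flagSample V s k).filter (fun T => T.2.2 = u)).card
        = (Fintype.card V - k).choose (s - k) * (Fintype.card V - s).choose (s - k) := by
    intro u hu
    rw [Finset.mem_filter] at hu
    exact card_fiber u hu.2 (le_of_lt hks)
  rw [Finset.sum_congr rfl h1, Finset.sum_const, smul_eq_mul]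

lemma quadform_lower (F : Fin l → FlaggedGraph s k) (G : SimpleGraph V) (x : Fin l → ℝ)
    (hks : k < s) (hn : 2 * s - k ≤ Fintype.card V) :
    -((∑ i, |x i|)^2 *
        ((Fintype.card V * ((Fintype.card V - (k+1)).choose (s-(k+1)))^2 : ℕ) : ℝ)
        / (((Fintype.card V - k).choose (s-k) * (Fintype.card V - s).choose (s-k) : ℕ) : ℝ))
      ≤ ∑ i, ∑ j, x i * x j * flagPairProb (F i) (F j) G := by
  classical
  set n := Fintype.card V with hn_def
  set X := ∑ i, |x i| with hX
  have hXnn : 0 ≤ X := Finset.sum_nonneg (fun i _ => abs_nonneg _)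
  set Bbd : ℕ := n * ((n - (k+1)).choose (s-(k+1)))^2 with hBbd
  set D₀ : ℕ := (n - k).choose (s-k) * (n - s).choose (s-k) with hD₀
  have hD₀pos : 0 < D₀ := Nat.mul_pos (Nat.choose_pos (by omega)) (Nat.choose_pos (by omega))
  set DG := (flagSample V s k).card with hDG
  have hDGpos : 0 < DG := flagSample_card_pos hks hn
  set Injc := ((univ : Finset (Fin k → V)).filter Function.Injective).card with hInjc
  have hDGeq : DG = Injc * D₀ := flagSample_card_eq_inj_mul hks
  have hInjpos : 0 < Injc := by
    rcases Nat.eq_zero_or_pos Injc with h | h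
    · rw [h, zero_mul] at hDGeq; omega
    · exact h
  set fib : Fin l → Fin l → (Fin k → V) → ℕ := fun i j u => ((flagSample V s k).filter (fun T =>
      (FlaggedIsoOn G (F i) T.1 T.2.2 ∧ FlaggedIsoOn G (F j) T.2.1 T.2.2) ∧ T.2.2 = u)).card
    with hfib
  set Num : Fin l → Fin l → ℕ := fun i j => ((flagSample V s k).filter (fun T =>
      FlaggedIsoOn G (F i) T.1 T.2.2 ∧ FlaggedIsoOn G (F j) T.2.1 T.2.2)).card with hNum
  have hprob : ∀ i j, flagPairProb (F i) (F j) G = (Num i j : ℝ) / DG := fun i j => rfl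
  have hNumfib : ∀ i j, Num i j = ∑ u : Fin k → V, fib i j u := by
    intro i j
    show ((flagSample V s k).filter (fun T =>
        FlaggedIsoOn G (F i) T.1 T.2.2 ∧ FlaggedIsoOn G (F j) T.2.1 T.2.2)).card = _
    rw [Finset.card_eq_sum_card_fiberwise (f := fun T => T.2.2)
      (t := (univ : Finset (Fin k → V))) (fun T _ => Finset.mem_univ _)]
    refine Finset.sum_congr rfl (fun u _ => ?_)
    rw [Finset.filter_filter]
  -- the key per-fiber bound
  have key : ∀ u : Fin k → V, Function.Injective u →
      -(X^2 * (Bbd : ℝ)) ≤ ∑ i, ∑ j, x i * x j * (fib i j u : ℝ) := by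
    intro u hu
    set U := Finset.image u univ with hU
    set A : Fin l → Finset (Finset V) := fun i => (((univ : Finset V).powersetCard s).filter
      (fun S => U ⊆ S ∧ FlaggedIsoOn G (F i) S u)) with hA
    set e : Fin l → Fin l → ℕ := fun i j =>
      ((A i ×ˢ A j).filter (fun q => ¬ (q.1 ∩ q.2 = U))).card with he
    have hsplit : ∀ i j, fib i j u + e i j = (A i).card * (A j).card := by
      intro i j
      have hfe : fib i j u = ((A i ×ˢ A j).filter (fun q => q.1 ∩ q.2 = U)).card :=
        fib_card_eq F G i j u hu
      have hee : e i j = ((A i ×ˢ A j).filter (fun q => ¬ (q.1 ∩ q.2 = U))).card := rfl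
      rw [hfe, hee, ← Finset.card_product]
      exact Finset.card_filter_add_card_filter_not _
    have hcast : ∀ i j, (fib i j u : ℝ) = ((A i).card : ℝ) * ((A j).card : ℝ) - (e i j : ℝ) := by
      intro i j
      have := hsplit i j
      have h2 := congrArg (Nat.cast (R := ℝ)) this
      push_cast at h2
      linarith
    have hebound : ∀ i j, (e i j : ℝ) ≤ (Bbd : ℝ) := by
      intro i j
      have hsub : ((A i ×ˢ A j).filter (fun q => ¬ (q.1 ∩ q.2 = U)))
          ⊆ ((((univ : Finset V).powersetCard s) ×ˢ (((univ : Finset V)).powersetCard s)).filter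
              (fun q => U ⊆ q.1 ∧ U ⊆ q.2 ∧ q.1 ∩ q.2 ≠ U)) := by
        rintro ⟨S₁, S₂⟩ hq
        simp only [Finset.mem_filter, Finset.mem_product, hA] at hq
        obtain ⟨⟨h1, h2⟩, hne⟩ := hq
        simp only [Finset.mem_filter, Finset.mem_product]
        exact ⟨⟨h1.1, h2.1⟩, h1.2.1, h2.2.1, hne⟩
      have := (Finset.card_le_card hsub).trans (card_bad_le u hu hks)
      exact_mod_cast this
    have hAnn : ∀ i : Fin l, (0:ℝ) ≤ ((A i).card : ℝ) := fun i => Nat.cast_nonneg _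
    have step1 : ∑ i, ∑ j, x i * x j * (fib i j u : ℝ)
        = (∑ i, x i * ((A i).card : ℝ))^2 - ∑ i, ∑ j, x i * x j * (e i j : ℝ) := by
      have hexp : (∑ i, x i * ((A i).card : ℝ))^2
          = ∑ i, ∑ j, x i * x j * (((A i).card : ℝ) * ((A j).card : ℝ)) := by
        rw [sq, Finset.sum_mul_sum]
        exact Finset.sum_congr rfl (fun i _ => Finset.sum_congr rfl (fun j _ => by ring))
      rw [hexp, ← Finset.sum_sub_distrib]
      refine Finset.sum_congr rfl (fun i _ => ?_)
      rw [← Finset.sum_sub_distrib]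
      refine Finset.sum_congr rfl (fun j _ => ?_)
      rw [hcast i j]
      ring
    have step2 : ∑ i, ∑ j, x i * x j * (e i j : ℝ) ≤ X^2 * (Bbd : ℝ) := by
      have hXB : X^2 * (Bbd : ℝ) = ∑ i, ∑ j, |x i| * |x j| * (Bbd : ℝ) := by
        rw [hX, sq, Finset.sum_mul_sum, Finset.sum_mul]
        refine Finset.sum_congr rfl (fun i _ => ?_)
        rw [Finset.sum_mul]
      rw [hXB]
      refine Finset.sum_le_sum (fun i _ => Finset.sum_le_sum (fun j _ => ?_))
      calc x i * x j * (e i j : ℝ) ≤ |x i * x j * (e i j : ℝ)| := le_abs_self _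
        _ = |x i| * |x j| * (e i j : ℝ) := by
            rw [abs_mul, abs_mul, Nat.abs_cast]
        _ ≤ |x i| * |x j| * (Bbd : ℝ) := by
            refine mul_le_mul_of_nonneg_left (hebound i j) ?_
            positivity
    rw [step1]
    nlinarith [sq_nonneg (∑ i, x i * ((A i).card : ℝ))]
  -- sum over fibers
  have hsum_eq : ∑ i, ∑ j, x i * x j * (Num i j : ℝ)
      = ∑ u : Fin k → V, ∑ i, ∑ j, x i * x j * (fib i j u : ℝ) := by
    have h1 : ∀ i j, (Num i j : ℝ) = ∑ u : Fin k → V, (fib i j u : ℝ) := by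
      intro i j
      rw [hNumfib i j]
      push_cast
      rfl
    calc ∑ i, ∑ j, x i * x j * (Num i j : ℝ)
        = ∑ i, ∑ j, ∑ u : Fin k → V, x i * x j * (fib i j u : ℝ) := by
          refine Finset.sum_congr rfl (fun i _ => Finset.sum_congr rfl (fun j _ => ?_))
          rw [h1 i j, Finset.mul_sum]
      _ = ∑ i, ∑ u : Fin k → V, ∑ j, x i * x j * (fib i j u : ℝ) := by
          refine Finset.sum_congr rfl (fun i _ => ?_)
          exact Finset.sum_comm
      _ = ∑ u : Fin k → V, ∑ i, ∑ j, x i * x j * (fib i j u : ℝ) := Finset.sum_comm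
  have htotal : -((Injc : ℝ) * (X^2 * (Bbd : ℝ))) ≤ ∑ i, ∑ j, x i * x j * (Num i j : ℝ) := by
    rw [hsum_eq]
    rw [← Finset.sum_filter_add_sum_filter_not (univ : Finset (Fin k → V)) Function.Injective]
    have hzero : ∑ u ∈ (univ : Finset (Fin k → V)).filter (fun u => ¬ Function.Injective u),
        ∑ i, ∑ j, x i * x j * (fib i j u : ℝ) = 0 := by
      refine Finset.sum_eq_zero (fun u hu => ?_)
      rw [Finset.mem_filter] at hu
      refine Finset.sum_eq_zero (fun i _ => Finset.sum_eq_zero (fun j _ => ?_))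
      have hz : fib i j u = 0 := by
        have h0 : fib i j u = ((flagSample V s k).filter (fun T =>
            (FlaggedIsoOn G (F i) T.1 T.2.2 ∧ FlaggedIsoOn G (F j) T.2.1 T.2.2)
              ∧ T.2.2 = u)).card := rfl
        rw [h0, Finset.card_eq_zero, Finset.eq_empty_iff_forall_notMem]
        intro T hT
        rw [Finset.mem_filter] at hT
        exact hu.2 (hT.2.2 ▸ flagSample_injective hT.1)
      rw [hz]
      norm_num
    rw [hzero, add_zero]
    calc -((Injc : ℝ) * (X^2 * (Bbd : ℝ)))
        = ∑ _u ∈ (univ : Finset (Fin k → V)).filter Function.Injective,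
            -(X^2 * (Bbd : ℝ)) := by
          rw [Finset.sum_const, ← hInjc, nsmul_eq_mul]
          ring
      _ ≤ _ := by
          refine Finset.sum_le_sum (fun u hu => ?_)
          rw [Finset.mem_filter] at hu
          exact key u hu.2
  -- conclude
  have hform : ∑ i, ∑ j, x i * x j * flagPairProb (F i) (F j) G
      = (∑ i, ∑ j, x i * x j * (Num i j : ℝ)) / DG := by
    rw [Finset.sum_div]
    refine Finset.sum_congr rfl (fun i _ => ?_)
    rw [Finset.sum_div]
    refine Finset.sum_congr rfl (fun j _ => ?_)
    rw [hprob i j, mul_div_assoc]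
  rw [hform]
  have hDG' : (0:ℝ) < (DG : ℝ) := by exact_mod_cast hDGpos
  have hstep : -((Injc : ℝ) * (X^2 * (Bbd : ℝ))) / (DG : ℝ)
      ≤ (∑ i, ∑ j, x i * x j * (Num i j : ℝ)) / DG := by
    gcongr
  refine le_trans (le_of_eq ?_) hstep
  have hInj' : (Injc : ℝ) ≠ 0 := Nat.cast_ne_zero.mpr hInjpos.ne'
  have hDGcast : (DG : ℝ) = (Injc : ℝ) * (D₀ : ℝ) := by
    rw [hDGeq]
    push_cast
    rfl
  rw [hDGcast]
  rw [show -((Injc : ℝ) * (X^2 * (Bbd : ℝ))) / ((Injc : ℝ) * (D₀ : ℝ))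
      = -(((Injc : ℝ) * (X^2 * (Bbd : ℝ))) / ((Injc : ℝ) * (D₀ : ℝ))) from neg_div _ _,
    mul_div_mul_left _ _ hInj']

end Aux5

section Aux6

lemma key_nat {s k n : ℕ} (hks : k < s) (hn : 4 * s ≤ n) :
    n * (n * ((n - (k+1)).choose (s-(k+1)))^2)
      ≤ 4^(s-k) * ((s-k).factorial)^2
          * ((n - k).choose (s-k) * (n - s).choose (s-k)) := by
  set a := s - k with ha
  have ha1 : 1 ≤ a := by omega
  have h1 : (n - (k+1)).choose (s-(k+1)) ≤ n^(a-1) := by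
    have hs : s - (k+1) = a - 1 := by omega
    rw [hs]
    exact (Nat.choose_le_pow _ _).trans (Nat.pow_le_pow_left (by omega) _)
  have h2 : n * (n * ((n - (k+1)).choose (s-(k+1)))^2) ≤ n^(2*a) := by
    calc n * (n * ((n - (k+1)).choose (s-(k+1)))^2)
        ≤ n * (n * (n^(a-1))^2) :=
          Nat.mul_le_mul_left _ (Nat.mul_le_mul_left _ (Nat.pow_le_pow_left h1 2))
      _ = n^(2*a) := by
          rw [← pow_mul]
          have he : 2*a = (a-1)*2 + 2 := by omega
          rw [he, pow_add]
          ring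
  have h3 : n^(2*a) ≤ 4^a * ((n - 2*s)^a * (n - 2*s)^a) := by
    have hle : n ≤ 2 * (n - 2*s) := by omega
    calc n^(2*a) ≤ (2*(n - 2*s))^(2*a) := Nat.pow_le_pow_left hle _
      _ = 4^a * ((n - 2*s)^a * (n - 2*s)^a) := by
          rw [mul_pow, show 2*a = a + a from by omega, pow_add, pow_add,
            show (2:ℕ)^a * 2^a = 4^a from by rw [← mul_pow]; norm_num]
  have h5 : (n - 2*s)^a ≤ a.factorial * ((n - k).choose a) := by
    have hd := Nat.pow_sub_le_descFactorial (n - k) a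
    rw [Nat.descFactorial_eq_factorial_mul_choose] at hd
    exact le_trans (Nat.pow_le_pow_left (by omega) a) hd
  have h6 : (n - 2*s)^a ≤ a.factorial * ((n - s).choose a) := by
    have hd := Nat.pow_sub_le_descFactorial (n - s) a
    rw [Nat.descFactorial_eq_factorial_mul_choose] at hd
    exact le_trans (Nat.pow_le_pow_left (by omega) a) hd
  calc n * (n * ((n - (k+1)).choose (s-(k+1)))^2)
      ≤ n^(2*a) := h2
    _ ≤ 4^a * ((n - 2*s)^a * (n - 2*s)^a) := h3
    _ ≤ 4^a * ((a.factorial * ((n - k).choose a)) * (a.factorial * ((n - s).choose a))) :=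
        Nat.mul_le_mul_left _ (Nat.mul_le_mul h5 h6)
    _ = 4^a * (a.factorial)^2 * ((n - k).choose a * (n - s).choose a) := by ring

variable {V : Type*} [Fintype V] [DecidableEq V] {s k l : ℕ}

lemma quadform_lower' (F : Fin l → FlaggedGraph s k) (G : SimpleGraph V) (x : Fin l → ℝ)
    (hks : k < s) (hn : 4 * s ≤ Fintype.card V) (hn0 : 0 < Fintype.card V) :
    -((∑ i, |x i|)^2 * ((4^(s-k) * ((s-k).factorial)^2 : ℕ) : ℝ) / (Fintype.card V : ℝ))
      ≤ ∑ i, ∑ j, x i * x j * flagPairProb (F i) (F j) G := by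
  refine le_trans ?_ (quadform_lower F G x hks (by omega))
  rw [neg_le_neg_iff]
  set n := Fintype.card V with hndef
  have hD₀pos : (0:ℝ) < (((n-k).choose (s-k) * (n-s).choose (s-k) : ℕ) : ℝ) := by
    have : 0 < (n-k).choose (s-k) * (n-s).choose (s-k) :=
      Nat.mul_pos (Nat.choose_pos (by omega)) (Nat.choose_pos (by omega))
    exact_mod_cast this
  have hnpos : (0:ℝ) < (n:ℝ) := by exact_mod_cast hn0
  rw [mul_div_assoc, mul_div_assoc]
  refine mul_le_mul_of_nonneg_left ?_ (sq_nonneg _)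
  rw [div_le_div_iff₀ hD₀pos hnpos]
  have hkey := key_nat (n := n) hks hn
  have hcast : ((n * (n * ((n - (k+1)).choose (s-(k+1)))^2) : ℕ) : ℝ)
      ≤ ((4^(s-k) * ((s-k).factorial)^2
          * ((n - k).choose (s-k) * (n - s).choose (s-k)) : ℕ) : ℝ) := by
    exact_mod_cast hkey
  push_cast at hcast ⊢
  nlinarith [hcast]

end Aux6

/-- Corollary (flag-algebra SDP constraint): let `𝒢` be an infinite class of graphs closed
under induced subgraphs, `H₁,…,H_t` a complete list of the isomorphism types of `r`-vertex
graphs in `𝒢` (`r ≥ 2s - k`), and `F₁,…,F_l` some `(s,k)`-flagged graphs. Then for every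
`(p₁,…,p_t) ∈ Δ_𝒢(H₁,…,H_t)`, the matrix `∑_α p_α ⬝ A^{H_α}(F₁,…,F_l)` is positive
semidefinite. -/
theorem deltaClass_flag_psd (𝒢 : GraphClass)
    (hclosed : ClosedUnderInduced 𝒢) (hinf : InfiniteClass 𝒢)
    {s k l : ℕ} (hk : k < s) (F : Fin l → FlaggedGraph s k)
    (r t : ℕ) (hr : 2 * s - k ≤ r) (H : Fin t → SimpleGraph (Fin r))
    (hmem : ∀ α, H α ∈ 𝒢 r)
    (hcomplete : ∀ G' ∈ 𝒢 r, ∃! α : Fin t, Nonempty (G' ≃g H α))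
    (p : Fin t → ℝ) (hp : memDeltaClass 𝒢 (ms := fun _ => r) H p) :
    (∑ α, p α • flagMatrix F (H α)).PosSemidef := by
  obtain ⟨m, Gs, hGmem, hmtop, hdens⟩ := hp
  refine Matrix.posSemidef_iff_dotProduct_mulVec.mpr ⟨?_, ?_⟩
  · -- Hermitian
    apply Matrix.ext
    intro i j
    simp only [Matrix.conjTranspose_apply, Matrix.sum_apply, Matrix.smul_apply, smul_eq_mul,
      star_trivial]
    refine Finset.sum_congr rfl (fun α _ => ?_)
    rw [show flagMatrix F (H α) j i = flagPairProb (F j) (F i) (H α) from rfl,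
      show flagMatrix F (H α) i j = flagPairProb (F i) (F j) (H α) from rfl,
      flagPairProb_comm]
  · intro x
    have hform : dotProduct (star x) ((∑ α, p α • flagMatrix F (H α)).mulVec x)
        = ∑ α, p α * (∑ i, ∑ j, x i * x j * flagPairProb (F i) (F j) (H α)) := by
      have hsx : star x = x := by
        funext i
        exact star_trivial _
      rw [hsx]
      calc dotProduct x ((∑ α, p α • flagMatrix F (H α)).mulVec x)
          = ∑ i, x i * (∑ j, (∑ α, p α * flagPairProb (F i) (F j) (H α)) * x j) := by
            simp only [dotProduct, Matrix.mulVec, Matrix.sum_apply, Matrix.smul_apply,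
              smul_eq_mul]
            rfl
        _ = ∑ i, ∑ j, ∑ α, p α * (x i * x j * flagPairProb (F i) (F j) (H α)) := by
            refine Finset.sum_congr rfl (fun i _ => ?_)
            rw [Finset.mul_sum]
            refine Finset.sum_congr rfl (fun j _ => ?_)
            rw [Finset.sum_mul, Finset.mul_sum]
            refine Finset.sum_congr rfl (fun α _ => ?_)
            ring
        _ = ∑ α, ∑ i, ∑ j, p α * (x i * x j * flagPairProb (F i) (F j) (H α)) := by
            rw [show (∑ i, ∑ j, ∑ α, p α * (x i * x j * flagPairProb (F i) (F j) (H α)))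
                = ∑ i, ∑ α, ∑ j, p α * (x i * x j * flagPairProb (F i) (F j) (H α)) from
              Finset.sum_congr rfl (fun i _ => Finset.sum_comm)]
            exact Finset.sum_comm
        _ = ∑ α, p α * (∑ i, ∑ j, x i * x j * flagPairProb (F i) (F j) (H α)) := by
            refine Finset.sum_congr rfl (fun α _ => ?_)
            rw [Finset.mul_sum]
            refine Finset.sum_congr rfl (fun i _ => ?_)
            rw [Finset.mul_sum]
    rw [hform]
    set Qα : Fin t → ℝ := fun α => ∑ i, ∑ j, x i * x j * flagPairProb (F i) (F j) (H α)
      with hQα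
    have htend : Filter.Tendsto (fun j => ∑ α, inducedDensity (H α) (Gs j) * Qα α)
        Filter.atTop (nhds (∑ α, p α * Qα α)) := by
      refine tendsto_finset_sum _ (fun α _ => ?_)
      exact (hdens α).mul_const _
    have hclassify : ∀ j, r ≤ m j → ∀ R ∈ (univ : Finset (Fin (m j))).powersetCard r,
        ∃ α, Nonempty (H α ≃g (Gs j).induce (R : Set (Fin (m j)))) ∧
          ∀ β, Nonempty (H β ≃g (Gs j).induce (R : Set (Fin (m j)))) → β = α := by
      intro j hj R hR
      have hRcard : R.card = r := Finset.mem_powersetCard_univ.mp hR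
      have hcard2 : Fintype.card ((R : Set (Fin (m j)))) = r := by
        rw [Fintype.card_congr (Equiv.subtypeEquivRight (fun x => Finset.mem_coe))]
        rw [Fintype.card_coe]
        exact hRcard
      have e := Fintype.equivFinOfCardEq hcard2
      set GR : SimpleGraph (Fin r) :=
        SimpleGraph.comap (⇑e.symm) ((Gs j).induce (R : Set (Fin (m j)))) with hGR
      have hisoR : GR ≃g (Gs j).induce (R : Set (Fin (m j))) := ⟨e.symm, Iff.rfl⟩
      have hGRmem : GR ∈ 𝒢 r := hclosed (m j) (Gs j) (hGmem j) r GR ⟨R, ⟨hisoR⟩⟩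
      obtain ⟨α, hα, huniq⟩ := hcomplete GR hGRmem
      refine ⟨α, ⟨((Classical.choice hα).symm).trans hisoR⟩, ?_⟩
      intro β hβ
      obtain ⟨φ⟩ := hβ
      exact huniq β ⟨hisoR.trans φ.symm⟩
    have heq : (fun j => ∑ α, inducedDensity (H α) (Gs j) * Qα α)
        =ᶠ[Filter.atTop] (fun j => ∑ i, ∑ j', x i * x j' * flagPairProb (F i) (F j') (Gs j)) := by
      filter_upwards [hmtop.eventually_ge_atTop r] with j hj
      have hent : ∀ i i', flagPairProb (F i) (F i') (Gs j)
          = ∑ α, inducedDensity (H α) (Gs j) * flagPairProb (F i) (F i') (H α) := by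
        intro i i'
        exact flagPairProb_eq_sum (F i) (F i') hk hr (Gs j) (by simpa using hj) H
          (hclassify j hj)
      symm
      calc ∑ i, ∑ i', x i * x i' * flagPairProb (F i) (F i') (Gs j)
          = ∑ i, ∑ i', ∑ α, inducedDensity (H α) (Gs j)
              * (x i * x i' * flagPairProb (F i) (F i') (H α)) := by
            refine Finset.sum_congr rfl (fun i _ => Finset.sum_congr rfl (fun i' _ => ?_))
            rw [hent i i', Finset.mul_sum]
            refine Finset.sum_congr rfl (fun α _ => ?_)
            ring
        _ = ∑ α, ∑ i, ∑ i', inducedDensity (H α) (Gs j)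
              * (x i * x i' * flagPairProb (F i) (F i') (H α)) := by
            rw [show (∑ i, ∑ i', ∑ α, inducedDensity (H α) (Gs j)
                  * (x i * x i' * flagPairProb (F i) (F i') (H α)))
                = ∑ i, ∑ α, ∑ i', inducedDensity (H α) (Gs j)
                  * (x i * x i' * flagPairProb (F i) (F i') (H α)) from
              Finset.sum_congr rfl (fun i _ => Finset.sum_comm)]
            exact Finset.sum_comm
        _ = ∑ α, inducedDensity (H α) (Gs j) * Qα α := by
            refine Finset.sum_congr rfl (fun α _ => ?_)
            rw [hQα]
            dsimp only
            rw [Finset.mul_sum]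
            refine Finset.sum_congr rfl (fun i _ => ?_)
            rw [Finset.mul_sum]
    have htend2 : Filter.Tendsto
        (fun j => ∑ i, ∑ j', x i * x j' * flagPairProb (F i) (F j') (Gs j))
        Filter.atTop (nhds (∑ α, p α * Qα α)) := htend.congr' heq
    have hfin : ∀ δ : ℝ, 0 < δ → -δ ≤ ∑ α, p α * Qα α := by
      intro δ hδ
      obtain ⟨N, hN⟩ := exists_nat_ge
        ((∑ i, |x i|)^2 * ((4^(s-k) * ((s-k).factorial)^2 : ℕ) : ℝ) / δ)
      refine ge_of_tendsto htend2 ?_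
      filter_upwards [hmtop.eventually_ge_atTop (max (4*s) (N+1))] with j hj
      have h4s : 4*s ≤ m j := le_trans (le_max_left _ _) hj
      have hNj : N + 1 ≤ m j := le_trans (le_max_right _ _) hj
      have hq := quadform_lower' F (Gs j) x hk (by simpa using h4s) (by simp; omega)
      refine le_trans ?_ hq
      rw [neg_le_neg_iff]
      have hX2Cnn : (0:ℝ) ≤ (∑ i, |x i|)^2 * ((4^(s-k) * ((s-k).factorial)^2 : ℕ) : ℝ) :=
        mul_nonneg (sq_nonneg _) (Nat.cast_nonneg _)
      have hmj : (0:ℝ) < ((Fintype.card (Fin (m j))) : ℝ) := by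
        simp only [Fintype.card_fin]
        have : 0 < m j := by omega
        exact_mod_cast this
      rw [div_le_iff₀ hmj]
      calc (∑ i, |x i|)^2 * ((4^(s-k) * ((s-k).factorial)^2 : ℕ) : ℝ)
          = ((∑ i, |x i|)^2 * ((4^(s-k) * ((s-k).factorial)^2 : ℕ) : ℝ) / δ) * δ := by
            field_simp
        _ ≤ (N : ℝ) * δ := mul_le_mul_of_nonneg_right hN hδ.le
        _ ≤ δ * ((Fintype.card (Fin (m j))) : ℝ) := by
            rw [mul_comm]
            refine mul_le_mul_of_nonneg_left ?_ hδ.le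
            simp only [Fintype.card_fin]
            have : (N : ℝ) ≤ (m j : ℝ) := by exact_mod_cast (by omega : N ≤ m j)
            exact this
    by_contra hneg
    push_neg at hneg
    have := hfin (-(∑ α, p α * Qα α)/2) (by linarith)
    linarith
end

section
/- If (p_0, p_1, p_2) ∈ Δ_TF(K̄_3, P̄_3, P_3), then the 2×2 matrix p_0·[[1,0],[0,0]] + p_1·[[1/3,1/3],[1/3,0]] + p_2·[[0,1/3],[1/3,1/3]] is positive semidefinite. -/
open Finset

open scoped Classical

/-- The path `P₃` on three vertices (edges `01` and `12`). -/
def path3 : SimpleGraph (Fin 3) :=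
  SimpleGraph.fromRel (fun x y => (x = 0 ∧ y = 1) ∨ (x = 1 ∧ y = 2))

/-- The class of triangle-free graphs. -/
def triangleFreeClass : GraphClass := fun n => {G : SimpleGraph (Fin n) | G.CliqueFree 3}

/-- The class of bipartite graphs. -/
def bipartiteClass : GraphClass := fun n => {G : SimpleGraph (Fin n) | G.Colorable 2}

/-- The matrix `p₀·[[1,0],[0,0]] + p₁·[[1/3,1/3],[1/3,0]] + p₂·[[0,1/3],[1/3,1/3]]`. -/
noncomputable def profileMatrix (p₀ p₁ p₂ : ℝ) : Matrix (Fin 2) (Fin 2) ℝ :=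
  p₀ • !![(1 : ℝ), 0; 0, 0] + p₁ • !![(1 : ℝ)/3, 1/3; 1/3, 0] +
    p₂ • !![(0 : ℝ), 1/3; 1/3, 1/3]


lemma path3_adj (x y : Fin 3) : path3.Adj x y ↔
    x ≠ y ∧ ((x = 0 ∧ y = 1) ∨ (x = 1 ∧ y = 2) ∨ (y = 0 ∧ x = 1) ∨ (y = 1 ∧ x = 2)) := by
  simp [path3, SimpleGraph.fromRel_adj]; tauto

lemma powersetCard_two_triple {V : Type*} [DecidableEq V] {p q r : V}
    (hpq : p ≠ q) (hpr : p ≠ r) (hqr : q ≠ r) :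
    ({p, q, r} : Finset V).powersetCard 2 = {{p, q}, {p, r}, {q, r}} := by
  ext T
  simp only [mem_powersetCard, mem_insert, mem_singleton]
  constructor
  · rintro ⟨hsub, hcard⟩
    obtain ⟨a, b, hab, rfl⟩ := Finset.card_eq_two.mp hcard
    have ha : a ∈ ({p,q,r} : Finset V) := hsub (by simp)
    have hb : b ∈ ({p,q,r} : Finset V) := hsub (by simp)
    simp only [mem_insert, mem_singleton] at ha hb
    rcases ha with rfl|rfl|rfl <;> rcases hb with rfl|rfl|rfl <;>
      simp_all [Finset.pair_comm] <;> tauto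
  · rintro (rfl|rfl|rfl) <;>
      refine ⟨?_, Finset.card_eq_two.mpr ⟨_, _, by assumption, rfl⟩⟩ <;>
      intro x hx <;> simp at hx ⊢ <;> tauto

lemma filter_pair_adj {V : Type*} [DecidableEq V] (G : SimpleGraph V) {x y : V} (hxy : x ≠ y) :
    (∀ a ∈ ({x, y} : Finset V), ∀ b ∈ ({x, y} : Finset V), a ≠ b → G.Adj a b) ↔ G.Adj x y := by
  constructor
  · intro h; exact h x (by simp) y (by simp) hxy
  · intro h a ha b hb hab
    simp only [mem_insert, mem_singleton] at ha hb
    rcases ha with rfl|rfl <;> rcases hb with rfl|rfl <;> first | exact h | exact h.symm | exact absurd rfl hab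

lemma edgesIn_triple {V : Type*} [Fintype V] [DecidableEq V] (G : SimpleGraph V) {p q r : V}
    (hpq : p ≠ q) (hpr : p ≠ r) (hqr : q ≠ r) :
    edgesIn G {p, q, r} = (if G.Adj p q then 1 else 0) + (if G.Adj p r then 1 else 0)
      + (if G.Adj q r then 1 else 0) := by
  unfold edgesIn
  rw [powersetCard_two_triple hpq hpr hqr]
  have h1 : ({p,q} : Finset V) ≠ {p,r} := by
    intro h; apply hqr; have : q ∈ ({p,r} : Finset V) := h ▸ (by simp)
    simp at this; tauto
  have h2 : ({p,q} : Finset V) ≠ {q,r} := by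
    intro h; apply hpr; have : p ∈ ({q,r} : Finset V) := h ▸ (by simp)
    simp at this; tauto
  have h3 : ({p,r} : Finset V) ≠ {q,r} := by
    intro h; apply hpq; have : p ∈ ({q,r} : Finset V) := h ▸ (by simp)
    simp at this; tauto
  rw [Finset.filter_insert, Finset.filter_insert, Finset.filter_singleton]
  simp only [filter_pair_adj G hpq, filter_pair_adj G hpr, filter_pair_adj G hqr]
  by_cases b1 : G.Adj p q <;> by_cases b2 : G.Adj p r <;> by_cases b3 : G.Adj q r <;>
    simp [b1, b2, b3, h1, h2, h3, Finset.card_insert_of_notMem, Finset.mem_insert,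
      Finset.mem_singleton]

lemma coe_mem_triple {V : Type*} [DecidableEq V] {p q r : V} {u : V}
    (hu : u ∈ (({p, q, r} : Finset V) : Set V)) : u = p ∨ u = q ∨ u = r := by
  simpa using hu

set_option maxHeartbeats 1000000 in
/-- Builds an isomorphism `H ≃g G.induce {p,q,r}` given matching adjacencies. -/
noncomputable def mkIso {V : Type*} [DecidableEq V] (G : SimpleGraph V) (H : SimpleGraph (Fin 3))
    {p q r : V} (hpq : p ≠ q) (hpr : p ≠ r) (hqr : q ≠ r)
    (a1 : H.Adj 0 1 ↔ G.Adj p q) (a2 : H.Adj 0 2 ↔ G.Adj p r) (a3 : H.Adj 1 2 ↔ G.Adj q r) :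
    H ≃g G.induce ((({p, q, r} : Finset V)) : Set V) where
  toFun := fun i =>
    if i = 0 then ⟨p, by simp⟩ else if i = 1 then ⟨q, by simp⟩ else ⟨r, by simp⟩
  invFun := fun u => if u.1 = p then 0 else if u.1 = q then 1 else 2
  left_inv := by
    intro i
    fin_cases i <;> simp [hpq.symm, hpr.symm, hqr.symm, hpq, hpr, hqr]
  right_inv := by
    rintro ⟨u, hu⟩
    rcases coe_mem_triple hu with rfl|rfl|rfl <;>
      simp [hpq.symm, hpr.symm, hqr.symm, hpq, hpr, hqr]
  map_rel_iff' := by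
    intro a b
    have e1 : H.Adj 1 0 ↔ G.Adj q p := by rw [H.adj_comm, G.adj_comm]; exact a1
    have e2 : H.Adj 2 0 ↔ G.Adj r p := by rw [H.adj_comm, G.adj_comm]; exact a2
    have e3 : H.Adj 2 1 ↔ G.Adj r q := by rw [H.adj_comm, G.adj_comm]; exact a3
    have h2 : (⟨2, by omega⟩ : Fin 3) = 2 := rfl
    fin_cases a <;> fin_cases b <;>
      simp only [h2, Equiv.coe_fn_mk, SimpleGraph.comap_adj, Function.Embedding.coe_subtype] <;>
      norm_num [a1, a2, a3, e1, e2, e3, Fin.ext_iff] <;>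
      first
        | (intro h; exact absurd rfl h.ne)
        | (intro h; exact absurd rfl (G.irrefl h ▸ h).ne)
        | exact fun h => (H.irrefl h).elim
        | exact fun h => (G.irrefl h).elim

lemma nonempty_iso_iff {V : Type*} [Fintype V] [DecidableEq V] (G : SimpleGraph V)
    (H : SimpleGraph (Fin 3)) {S : Finset V} (hS : S.card = 3) :
    Nonempty (H ≃g G.induce (S : Set V)) ↔
      ∃ p q r : V, p ≠ q ∧ p ≠ r ∧ q ≠ r ∧ S = {p, q, r} ∧
        (H.Adj 0 1 ↔ G.Adj p q) ∧ (H.Adj 0 2 ↔ G.Adj p r) ∧ (H.Adj 1 2 ↔ G.Adj q r) := by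
  constructor
  · rintro ⟨φ⟩
    refine ⟨↑(φ 0), ↑(φ 1), ↑(φ 2), ?_, ?_, ?_, ?_, ?_, ?_, ?_⟩
    · simpa [Subtype.ext_iff] using fun h => absurd (φ.toEquiv.injective (Subtype.ext h)) (by decide)
    · simpa [Subtype.ext_iff] using fun h => absurd (φ.toEquiv.injective (Subtype.ext h)) (by decide)
    · simpa [Subtype.ext_iff] using fun h => absurd (φ.toEquiv.injective (Subtype.ext h)) (by decide)
    · have hsub : ({↑(φ 0), ↑(φ 1), ↑(φ 2)} : Finset V) ⊆ S := by
        intro x hx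
        simp only [mem_insert, mem_singleton] at hx
        rcases hx with rfl|rfl|rfl <;> exact (φ _).2
      have hc : ({↑(φ 0), ↑(φ 1), ↑(φ 2)} : Finset V).card = 3 := by
        rw [Finset.card_insert_of_notMem, Finset.card_insert_of_notMem, Finset.card_singleton]
        · simp only [mem_singleton, Subtype.ext_iff]
          exact fun h => absurd (φ.toEquiv.injective (Subtype.ext h)) (by decide)
        · simp only [mem_insert, mem_singleton]
          rintro (h|h) <;> exact absurd (φ.toEquiv.injective (Subtype.ext h)) (by decide)
      exact (Finset.eq_of_subset_of_card_le hsub (by omega)).symm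
    · simpa [SimpleGraph.comap_adj] using (φ.map_adj_iff (v := 0) (w := 1)).symm
    · simpa [SimpleGraph.comap_adj] using (φ.map_adj_iff (v := 0) (w := 2)).symm
    · simpa [SimpleGraph.comap_adj] using (φ.map_adj_iff (v := 1) (w := 2)).symm
  · rintro ⟨p, q, r, hpq, hpr, hqr, rfl, a1, a2, a3⟩
    exact ⟨mkIso G H hpq hpr hqr a1 a2 a3⟩

lemma path3_01 : path3.Adj 0 1 := by rw [path3_adj]; decide
lemma path3_12 : path3.Adj 1 2 := by rw [path3_adj]; decide
lemma path3_not02 : ¬ path3.Adj 0 2 := by rw [path3_adj]; decide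
lemma path3c_not01 : ¬ path3ᶜ.Adj 0 1 := fun h => h.2 path3_01
lemma path3c_not12 : ¬ path3ᶜ.Adj 1 2 := fun h => h.2 path3_12
lemma path3c_02 : path3ᶜ.Adj 0 2 := ⟨by decide, path3_not02⟩

section triple
variable {V : Type*} [Fintype V] [DecidableEq V] (G : SimpleGraph V) {S : Finset V}

lemma iso_bot_iff (hS : S.card = 3) :
    Nonempty ((⊥ : SimpleGraph (Fin 3)) ≃g G.induce (S : Set V)) ↔ edgesIn G S = 0 := by
  rw [nonempty_iso_iff G _ hS]
  constructor
  · rintro ⟨p, q, r, hpq, hpr, hqr, rfl, a1, a2, a3⟩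
    rw [edgesIn_triple G hpq hpr hqr]
    simp only [SimpleGraph.bot_adj, false_iff] at a1 a2 a3
    simp [a1, a2, a3]
  · intro he
    obtain ⟨p, q, r, hpq, hpr, hqr, rfl⟩ := Finset.card_eq_three.mp hS
    rw [edgesIn_triple G hpq hpr hqr] at he
    refine ⟨p, q, r, hpq, hpr, hqr, rfl, ?_, ?_, ?_⟩ <;> simp only [SimpleGraph.bot_adj, false_iff] <;>
      intro hadj <;> simp [hadj] at he <;> omega

lemma iso_path3_iff (hS : S.card = 3) :
    Nonempty (path3 ≃g G.induce (S : Set V)) ↔ edgesIn G S = 2 := by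
  rw [nonempty_iso_iff G _ hS]
  constructor
  · rintro ⟨p, q, r, hpq, hpr, hqr, rfl, a1, a2, a3⟩
    rw [edgesIn_triple G hpq hpr hqr]
    have h1 := a1.mp path3_01
    have h3 := a3.mp path3_12
    have h2 : ¬ G.Adj p r := fun h => path3_not02 (a2.mpr h)
    simp [h1, h2, h3]
  · intro he
    obtain ⟨p, q, r, hpq, hpr, hqr, rfl⟩ := Finset.card_eq_three.mp hS
    rw [edgesIn_triple G hpq hpr hqr] at he
    by_cases b1 : G.Adj p q <;> by_cases b2 : G.Adj p r <;> by_cases b3 : G.Adj q r <;>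
      simp only [b1, b2, b3, if_true, if_false, if_pos, if_neg, not_false_iff] at he <;>
      try omega
    · exact ⟨q, p, r, hpq.symm, hqr, hpr, by ext x; simp; tauto,
        iff_of_true path3_01 b1.symm, iff_of_false path3_not02 b3, iff_of_true path3_12 b2⟩
    · exact ⟨p, q, r, hpq, hpr, hqr, rfl,
        iff_of_true path3_01 b1, iff_of_false path3_not02 b2, iff_of_true path3_12 b3⟩
    · exact ⟨p, r, q, hpr, hpq, hqr.symm, by ext x; simp; tauto,
        iff_of_true path3_01 b2, iff_of_false path3_not02 b1, iff_of_true path3_12 b3.symm⟩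

lemma iso_path3c_iff (hS : S.card = 3) :
    Nonempty (path3ᶜ ≃g G.induce (S : Set V)) ↔ edgesIn G S = 1 := by
  rw [nonempty_iso_iff G _ hS]
  constructor
  · rintro ⟨p, q, r, hpq, hpr, hqr, rfl, a1, a2, a3⟩
    rw [edgesIn_triple G hpq hpr hqr]
    have h2 := a2.mp path3c_02
    have h1 : ¬ G.Adj p q := fun h => path3c_not01 (a1.mpr h)
    have h3 : ¬ G.Adj q r := fun h => path3c_not12 (a3.mpr h)
    simp [h1, h2, h3]
  · intro he
    obtain ⟨p, q, r, hpq, hpr, hqr, rfl⟩ := Finset.card_eq_three.mp hS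
    rw [edgesIn_triple G hpq hpr hqr] at he
    by_cases b1 : G.Adj p q <;> by_cases b2 : G.Adj p r <;> by_cases b3 : G.Adj q r <;>
      simp only [b1, b2, b3, if_true, if_false, if_pos, if_neg, not_false_iff] at he <;>
      try omega
    · exact ⟨p, r, q, hpr, hpq, hqr.symm, by ext x; simp; tauto,
        iff_of_false path3c_not01 b2, iff_of_true path3c_02 b1,
        iff_of_false path3c_not12 (fun h => b3 h.symm)⟩
    · exact ⟨p, q, r, hpq, hpr, hqr, rfl,
        iff_of_false path3c_not01 b1, iff_of_true path3c_02 b2, iff_of_false path3c_not12 b3⟩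
    · exact ⟨q, p, r, hpq.symm, hqr, hpr, by ext x; simp; tauto,
        iff_of_false path3c_not01 (fun h => b1 h.symm), iff_of_true path3c_02 b3,
        iff_of_false path3c_not12 b2⟩

end triple

section auxvars
variable {V : Type*} [Fintype V] [DecidableEq V]


lemma filter_mem_triple {v a b : V} (hva : v ≠ a) (hvb : v ≠ b) (hab : a ≠ b) :
    ((univ : Finset V).powersetCard 3).filter (fun T => v ∈ T ∧ a ∈ T ∧ b ∈ T)
      = {({v, a, b} : Finset V)} := by
  ext T
  simp only [mem_filter, mem_powersetCard, mem_singleton]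
  constructor
  · rintro ⟨⟨-, hcard⟩, hv, ha, hb⟩
    have hsub : ({v, a, b} : Finset V) ⊆ T := by
      intro x hx; simp only [mem_insert, mem_singleton] at hx
      rcases hx with rfl|rfl|rfl <;> assumption
    have hc3 : ({v, a, b} : Finset V).card = 3 := by
      rw [Finset.card_insert_of_notMem (by simp [hva, hvb]),
        Finset.card_insert_of_notMem (by simp [hab]), Finset.card_singleton]
    exact (Finset.eq_of_subset_of_card_le hsub (by omega)).symm
  · rintro rfl
    refine ⟨⟨Finset.subset_univ _, ?_⟩, by simp, by simp, by simp⟩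
    rw [Finset.card_insert_of_notMem (by simp [hva, hvb]),
      Finset.card_insert_of_notMem (by simp [hab]), Finset.card_singleton]

lemma sum_exchange (f : V → V → V → ℝ) :
    ∑ T ∈ (univ : Finset V).powersetCard 3,
      ∑ v ∈ T, ∑ a ∈ T.erase v, ∑ b ∈ (T.erase v).erase a, f v a b
    = ∑ v, ∑ a ∈ univ.erase v, ∑ b ∈ (univ.erase v).erase a, f v a b := by
  have step1 : ∀ T ∈ (univ : Finset V).powersetCard 3,
      (∑ v ∈ T, ∑ a ∈ T.erase v, ∑ b ∈ (T.erase v).erase a, f v a b)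
      = ∑ v, ∑ a ∈ univ.erase v, ∑ b ∈ (univ.erase v).erase a,
          (if v ∈ T ∧ a ∈ T ∧ b ∈ T then f v a b else 0) := by
    intro T _
    have hT1 : ∀ (g : V → ℝ), ∑ v ∈ T, g v = ∑ v, if v ∈ T then g v else 0 := by
      intro g; rw [Finset.sum_ite_mem, Finset.univ_inter]
    have hT2 : ∀ (v : V) (g : V → ℝ),
        ∑ a ∈ T.erase v, g a = ∑ a ∈ univ.erase v, if a ∈ T then g a else 0 := by
      intro v g
      rw [Finset.sum_ite_mem]
      congr 1
      ext x; simp [and_comm]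
    have hT3 : ∀ (v a : V) (g : V → ℝ),
        ∑ b ∈ (T.erase v).erase a, g b
          = ∑ b ∈ (univ.erase v).erase a, if b ∈ T then g b else 0 := by
      intro v a g
      rw [Finset.sum_ite_mem]
      congr 1
      ext x; simp [and_comm, and_assoc]
    rw [hT1]
    refine Finset.sum_congr rfl fun v _ => ?_
    by_cases hv : v ∈ T
    · simp only [hv, if_true, true_and]
      rw [hT2 v]
      refine Finset.sum_congr rfl fun a _ => ?_
      by_cases haT : a ∈ T
      · simp only [haT, if_true, true_and]
        exact hT3 v a _
      · simp [haT]
    · simp [hv]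
  rw [Finset.sum_congr rfl step1, Finset.sum_comm]
  refine Finset.sum_congr rfl fun v _ => ?_
  rw [Finset.sum_comm]
  refine Finset.sum_congr rfl fun a ha => ?_
  rw [Finset.sum_comm]
  refine Finset.sum_congr rfl fun b hb => ?_
  have hav : a ≠ v := (Finset.mem_erase.mp ha).1
  have hba : b ≠ a := (Finset.mem_erase.mp hb).1
  have hbv : b ≠ v := (Finset.mem_erase.mp (Finset.mem_of_mem_erase hb)).1
  rw [← Finset.sum_filter, filter_mem_triple hav.symm hbv.symm hba.symm, Finset.sum_singleton]


lemma erase_pair_left {a b : V} (hab : a ≠ b) : ({a, b} : Finset V).erase a = {b} :=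
  Finset.erase_insert (by simp [hab])

lemma erase_pair_right {a b : V} (hab : a ≠ b) : ({a, b} : Finset V).erase b = {a} := by
  ext x
  simp only [Finset.mem_erase, Finset.mem_insert, Finset.mem_singleton]
  constructor
  · rintro ⟨hx, rfl|rfl⟩
    · rfl
    · exact absurd rfl hx
  · rintro rfl
    exact ⟨hab, Or.inl rfl⟩

lemma erase_triple_1 {p q r : V} (hpq : p ≠ q) (hpr : p ≠ r) :
    ({p, q, r} : Finset V).erase p = {q, r} :=
  Finset.erase_insert (by simp [hpq, hpr])

lemma erase_triple_2 {p q r : V} (hpq : p ≠ q) (hqr : q ≠ r) :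
    ({p, q, r} : Finset V).erase q = {p, r} := by
  ext x
  simp only [Finset.mem_erase, Finset.mem_insert, Finset.mem_singleton]
  constructor
  · rintro ⟨hx, rfl|rfl|rfl⟩
    · exact Or.inl rfl
    · exact absurd rfl hx
    · exact Or.inr rfl
  · rintro (rfl|rfl)
    · exact ⟨hpq, Or.inl rfl⟩
    · exact ⟨hqr.symm, Or.inr (Or.inr rfl)⟩

lemma erase_triple_3 {p q r : V} (hpr : p ≠ r) (hqr : q ≠ r) :
    ({p, q, r} : Finset V).erase r = {p, q} := by
  ext x
  simp only [Finset.mem_erase, Finset.mem_insert, Finset.mem_singleton]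
  constructor
  · rintro ⟨hx, rfl|rfl|rfl⟩
    · exact Or.inl rfl
    · exact Or.inr rfl
    · exact absurd rfl hx
  · rintro (rfl|rfl)
    · exact ⟨hpr, Or.inl rfl⟩
    · exact ⟨hqr, Or.inr (Or.inl rfl)⟩

lemma Q_triple (y : V → V → ℝ) {p q r : V} (hpq : p ≠ q) (hpr : p ≠ r) (hqr : q ≠ r) :
    (∑ v ∈ ({p, q, r} : Finset V), ∑ a ∈ ({p, q, r} : Finset V).erase v,
        ∑ b ∈ (({p, q, r} : Finset V).erase v).erase a, y v a * y v b)
      = 2 * (y p q * y p r + y q p * y q r + y r p * y r q) := by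
  rw [Finset.sum_insert (by simp [hpq, hpr]), Finset.sum_insert (by simp [hqr]),
    Finset.sum_singleton, erase_triple_1 hpq hpr, erase_triple_2 hpq hqr,
    erase_triple_3 hpr hqr]
  rw [Finset.sum_insert (by simp [hqr]), Finset.sum_singleton,
    Finset.sum_insert (by simp [hpr]), Finset.sum_singleton,
    Finset.sum_insert (by simp [hpq]), Finset.sum_singleton]
  rw [erase_pair_left hqr, erase_pair_right hqr, erase_pair_left hpr, erase_pair_right hpr,
    erase_pair_left hpq, erase_pair_right hpq]
  rw [Finset.sum_singleton, Finset.sum_singleton, Finset.sum_singleton,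
    Finset.sum_singleton, Finset.sum_singleton, Finset.sum_singleton]
  ring

lemma edgesIn_triple' (G : SimpleGraph V) {p q r : V}
    (hpq : p ≠ q) (hpr : p ≠ r) (hqr : q ≠ r) :
    edgesIn G {p, q, r} = (if G.Adj p q then 1 else 0) + (if G.Adj p r then 1 else 0)
      + (if G.Adj q r then 1 else 0) := edgesIn_triple G hpq hpr hqr

/-- value of Q on a triple, as a function of the number of edges, for triangle-free G -/
lemma Q_value (G : SimpleGraph V) (hG : G.CliqueFree 3) (x₁ x₂ : ℝ)
    {p q r : V} (hpq : p ≠ q) (hpr : p ≠ r) (hqr : q ≠ r) :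
    2 * ((if G.Adj p q then x₂ else x₁) * (if G.Adj p r then x₂ else x₁)
      + (if G.Adj q p then x₂ else x₁) * (if G.Adj q r then x₂ else x₁)
      + (if G.Adj r p then x₂ else x₁) * (if G.Adj r q then x₂ else x₁))
    = ∑ k ∈ Finset.range 3, if edgesIn G {p, q, r} = k then
        (if k = 0 then 6 * x₁ ^ 2 else if k = 1 then 2 * x₁ ^ 2 + 4 * (x₁ * x₂)
          else 2 * x₂ ^ 2 + 4 * (x₁ * x₂)) else 0 := by
  have hiq : G.Adj q p ↔ G.Adj p q := G.adj_comm q p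
  have hir : G.Adj r p ↔ G.Adj p r := G.adj_comm r p
  have hirq : G.Adj r q ↔ G.Adj q r := G.adj_comm r q
  rw [edgesIn_triple' G hpq hpr hqr]
  by_cases b1 : G.Adj p q <;> by_cases b2 : G.Adj p r <;> by_cases b3 : G.Adj q r
  · exact absurd ((SimpleGraph.is3Clique_triple_iff).mpr ⟨b1, b2, b3⟩)
      (hG {p, q, r})
  all_goals
    simp only [b1, b2, b3, hiq, hir, hirq, if_true, if_false, Finset.sum_range_succ,
      Finset.sum_range_zero, if_pos, if_neg, not_false_iff]
  all_goals norm_num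
  all_goals ring

lemma sum_Q_value (G : SimpleGraph V) (hG : G.CliqueFree 3) (x₁ x₂ : ℝ) :
    ∑ T ∈ (univ : Finset V).powersetCard 3,
      (∑ v ∈ T, ∑ a ∈ T.erase v, ∑ b ∈ (T.erase v).erase a,
        (if G.Adj v a then x₂ else x₁) * (if G.Adj v b then x₂ else x₁))
    = ((((univ : Finset V).powersetCard 3).filter (fun S => edgesIn G S = 0)).card : ℝ)
        * (6 * x₁ ^ 2)
      + ((((univ : Finset V).powersetCard 3).filter (fun S => edgesIn G S = 1)).card : ℝ)
        * (2 * x₁ ^ 2 + 4 * (x₁ * x₂))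
      + ((((univ : Finset V).powersetCard 3).filter (fun S => edgesIn G S = 2)).card : ℝ)
        * (2 * x₂ ^ 2 + 4 * (x₁ * x₂)) := by
  have step : ∀ T ∈ (univ : Finset V).powersetCard 3,
      (∑ v ∈ T, ∑ a ∈ T.erase v, ∑ b ∈ (T.erase v).erase a,
        (if G.Adj v a then x₂ else x₁) * (if G.Adj v b then x₂ else x₁))
      = ∑ k ∈ Finset.range 3, if edgesIn G T = k then
          (if k = 0 then 6 * x₁ ^ 2 else if k = 1 then 2 * x₁ ^ 2 + 4 * (x₁ * x₂)
            else 2 * x₂ ^ 2 + 4 * (x₁ * x₂)) else 0 := by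
    intro T hT
    have hc : T.card = 3 := (Finset.mem_powersetCard.mp hT).2
    obtain ⟨p, q, r, hpq, hpr, hqr, rfl⟩ := Finset.card_eq_three.mp hc
    rw [Q_triple _ hpq hpr hqr, Q_value G hG x₁ x₂ hpq hpr hqr]
  rw [Finset.sum_congr rfl step, Finset.sum_comm]
  have inner : ∀ k ∈ Finset.range 3,
      (∑ T ∈ (univ : Finset V).powersetCard 3, if edgesIn G T = k then
          (if k = 0 then 6 * x₁ ^ 2 else if k = 1 then 2 * x₁ ^ 2 + 4 * (x₁ * x₂)
            else 2 * x₂ ^ 2 + 4 * (x₁ * x₂)) else 0)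
      = ((((univ : Finset V).powersetCard 3).filter (fun S => edgesIn G S = k)).card : ℝ)
          * (if k = 0 then 6 * x₁ ^ 2 else if k = 1 then 2 * x₁ ^ 2 + 4 * (x₁ * x₂)
            else 2 * x₂ ^ 2 + 4 * (x₁ * x₂)) := by
    intro k _
    rw [← Finset.sum_filter, Finset.sum_const, nsmul_eq_mul]
  rw [Finset.sum_congr rfl inner]
  rw [Finset.sum_range_succ, Finset.sum_range_succ, Finset.sum_range_succ,
    Finset.sum_range_zero]
  norm_num

lemma sum_pairs_eq (s : Finset V) (g : V → ℝ) :
    ∑ a ∈ s, ∑ b ∈ s.erase a, g a * g b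
      = (∑ a ∈ s, g a) ^ 2 - ∑ a ∈ s, (g a) ^ 2 := by
  have h : ∀ a ∈ s, (∑ b ∈ s.erase a, g a * g b) = (∑ b ∈ s, g a * g b) - g a * g a := by
    intro a ha
    rw [← Finset.add_sum_erase s _ ha]
    ring
  rw [Finset.sum_congr rfl h, Finset.sum_sub_distrib, sq, Finset.sum_mul_sum]
  congr 1
  exact Finset.sum_congr rfl fun a _ => (sq (g a)).symm

lemma A_lower_bound (G : SimpleGraph V) (x₁ x₂ : ℝ) :
    -(((Fintype.card V * (Fintype.card V - 1) : ℕ)) : ℝ) * (x₁ ^ 2 + x₂ ^ 2)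
      ≤ ∑ v, ∑ a ∈ univ.erase v, ∑ b ∈ (univ.erase v).erase a,
          (if G.Adj v a then x₂ else x₁) * (if G.Adj v b then x₂ else x₁) := by
  have hy : ∀ v a : V, ((if G.Adj v a then x₂ else x₁)) ^ 2 ≤ x₁ ^ 2 + x₂ ^ 2 := by
    intro v a
    by_cases h : G.Adj v a <;> simp [h] <;> nlinarith [sq_nonneg x₁, sq_nonneg x₂]
  have key : ∀ v : V, -((Fintype.card V - 1 : ℕ) : ℝ) * (x₁ ^ 2 + x₂ ^ 2)
      ≤ ∑ a ∈ univ.erase v, ∑ b ∈ (univ.erase v).erase a,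
          (if G.Adj v a then x₂ else x₁) * (if G.Adj v b then x₂ else x₁) := by
    intro v
    rw [sum_pairs_eq]
    have h1 : ∑ a ∈ univ.erase v, ((if G.Adj v a then x₂ else x₁)) ^ 2
        ≤ ((Fintype.card V - 1 : ℕ) : ℝ) * (x₁ ^ 2 + x₂ ^ 2) := by
      calc ∑ a ∈ univ.erase v, ((if G.Adj v a then x₂ else x₁)) ^ 2
          ≤ ∑ a ∈ univ.erase v, (x₁ ^ 2 + x₂ ^ 2) :=
            Finset.sum_le_sum fun a _ => hy v a
        _ = ((univ.erase v).card : ℝ) * (x₁ ^ 2 + x₂ ^ 2) := by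
            rw [Finset.sum_const, nsmul_eq_mul]
        _ = ((Fintype.card V - 1 : ℕ) : ℝ) * (x₁ ^ 2 + x₂ ^ 2) := by
            rw [Finset.card_erase_of_mem (Finset.mem_univ v), Finset.card_univ]
    nlinarith [sq_nonneg (∑ a ∈ univ.erase v, (if G.Adj v a then x₂ else x₁))]
  calc -(((Fintype.card V * (Fintype.card V - 1) : ℕ)) : ℝ) * (x₁ ^ 2 + x₂ ^ 2)
      = ∑ _v : V, -((Fintype.card V - 1 : ℕ) : ℝ) * (x₁ ^ 2 + x₂ ^ 2) := by
        rw [Finset.sum_const, nsmul_eq_mul, Finset.card_univ]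
        push_cast
        ring
    _ ≤ _ := Finset.sum_le_sum fun v _ => key v

lemma card_filter_coe {V' : Type*} [DecidableEq V'] (s : Finset (Finset V')) (p : Set V' → Prop) :
    ((do let a ← s; pure ((a : Finset V') : Set V') : Finset (Set V')).filter p).card
      = (s.filter (fun t : Finset V' => p (t : Set V'))).card := by
  show ((Finset.sup s fun a : Finset V' => ({(a : Set V')} : Finset (Set V'))).filter p).card = _
  rw [Finset.sup_singleton_apply, Finset.filter_image,
    Finset.card_image_of_injective _ Finset.coe_injective]

lemma inducedDensity_eq_aux (G : SimpleGraph V) (H : SimpleGraph (Fin 3)) (k : ℕ)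
    (hH : ∀ S : Finset V, S.card = 3 →
      (Nonempty (H ≃g G.induce (S : Set V)) ↔ edgesIn G S = k)) :
    inducedDensity H G
      = ((((univ : Finset V).powersetCard 3).filter (fun S => edgesIn G S = k)).card : ℝ) /
        (((univ : Finset V).powersetCard 3).card : ℝ) := by
  have hfil : ((univ : Finset V).powersetCard 3).filter
      (fun S : Finset V => Nonempty (H ≃g G.induce (S : Set V)))
      = ((univ : Finset V).powersetCard 3).filter (fun S : Finset V => edgesIn G S = k) :=
    Finset.filter_congr fun S hS => by
      simpa using hH S (Finset.mem_powersetCard.mp hS).2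
  unfold inducedDensity
  rw [Fintype.card_fin, card_filter_coe, hfil]

lemma key_ineq (G : SimpleGraph V) (hG : G.CliqueFree 3) (hn : 3 ≤ Fintype.card V)
    (x₁ x₂ : ℝ) :
    0 ≤ inducedDensity (⊥ : SimpleGraph (Fin 3)) G * x₁ ^ 2
        + inducedDensity path3ᶜ G * (x₁ ^ 2 / 3 + 2 * (x₁ * x₂) / 3)
        + inducedDensity path3 G * (2 * (x₁ * x₂) / 3 + x₂ ^ 2 / 3)
        + (x₁ ^ 2 + x₂ ^ 2) / ((Fintype.card V : ℝ) - 2) := by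
  set n := Fintype.card V with hn_def
  set C := ((univ : Finset V).powersetCard 3).card with hC_def
  set N₀ := (((univ : Finset V).powersetCard 3).filter (fun S => edgesIn G S = 0)).card
  set N₁ := (((univ : Finset V).powersetCard 3).filter (fun S => edgesIn G S = 1)).card
  set N₂ := (((univ : Finset V).powersetCard 3).filter (fun S => edgesIn G S = 2)).card
  have hCn : C = n.choose 3 := by
    rw [hC_def, Finset.card_powersetCard, Finset.card_univ]
  have hCpos : 0 < C := by
    rw [hCn]; exact Nat.choose_pos hn
  have h6C : C * 6 = n * (n - 1) * (n - 2) := by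
    have h1 : n.descFactorial 3 = 6 * n.choose 3 := by
      rw [Nat.descFactorial_eq_factorial_mul_choose]; norm_num [Nat.factorial]
    have h2 : n.descFactorial 3 = (n - 2) * ((n - 1) * (n * 1)) := by
      simp [Nat.descFactorial]
    rw [hCn, Nat.mul_comm, ← h1, h2]
    ring
  have hCpos' : (0 : ℝ) < (C : ℝ) := by exact_mod_cast hCpos
  have hn3 : (3 : ℝ) ≤ (n : ℝ) := by exact_mod_cast hn
  have h6C' : (C : ℝ) * 6 = (n : ℝ) * ((n : ℝ) - 1) * ((n : ℝ) - 2) := by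
    have := h6C
    have h1 : ((n - 1 : ℕ) : ℝ) = (n : ℝ) - 1 := by
      rw [Nat.cast_sub (by omega)]; norm_num
    have h2 : ((n - 2 : ℕ) : ℝ) = (n : ℝ) - 2 := by
      rw [Nat.cast_sub (by omega)]; norm_num
    calc ((C : ℕ) : ℝ) * 6 = ((C * 6 : ℕ) : ℝ) := by push_cast; ring
      _ = ((n * (n - 1) * (n - 2) : ℕ) : ℝ) := by rw [h6C]
      _ = (n : ℝ) * ((n : ℝ) - 1) * ((n : ℝ) - 2) := by push_cast [h1, h2]; ring
  have hd0 : inducedDensity (⊥ : SimpleGraph (Fin 3)) G = (N₀ : ℝ) / (C : ℝ) :=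
    inducedDensity_eq_aux G _ 0 fun S hS => iso_bot_iff G hS
  have hd1 : inducedDensity path3ᶜ G = (N₁ : ℝ) / (C : ℝ) :=
    inducedDensity_eq_aux G _ 1 fun S hS => iso_path3c_iff G hS
  have hd2 : inducedDensity path3 G = (N₂ : ℝ) / (C : ℝ) :=
    inducedDensity_eq_aux G _ 2 fun S hS => iso_path3_iff G hS
  have hE : -(((n * (n - 1) : ℕ)) : ℝ) * (x₁ ^ 2 + x₂ ^ 2)
      ≤ (N₀ : ℝ) * (6 * x₁ ^ 2) + (N₁ : ℝ) * (2 * x₁ ^ 2 + 4 * (x₁ * x₂))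
        + (N₂ : ℝ) * (2 * x₂ ^ 2 + 4 * (x₁ * x₂)) := by
    rw [← sum_Q_value G hG x₁ x₂, sum_exchange]
    exact A_lower_bound G x₁ x₂
  have hnn : ((n * (n - 1) : ℕ) : ℝ) = (n : ℝ) * ((n : ℝ) - 1) := by
    rw [Nat.cast_mul, Nat.cast_sub (by omega)]; norm_num
  rw [hd0, hd1, hd2]
  have hq : (N₀ : ℝ) / (C : ℝ) * x₁ ^ 2
      + (N₁ : ℝ) / (C : ℝ) * (x₁ ^ 2 / 3 + 2 * (x₁ * x₂) / 3)
      + (N₂ : ℝ) / (C : ℝ) * (2 * (x₁ * x₂) / 3 + x₂ ^ 2 / 3)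
      = ((N₀ : ℝ) * (6 * x₁ ^ 2) + (N₁ : ℝ) * (2 * x₁ ^ 2 + 4 * (x₁ * x₂))
        + (N₂ : ℝ) * (2 * x₂ ^ 2 + 4 * (x₁ * x₂))) / ((C : ℝ) * 6) := by
    field_simp
    ring
  have heps : (x₁ ^ 2 + x₂ ^ 2) / ((n : ℝ) - 2)
      = ((n : ℝ) * ((n : ℝ) - 1) * (x₁ ^ 2 + x₂ ^ 2)) / ((C : ℝ) * 6) := by
    rw [h6C', div_eq_div_iff (by linarith) (by nlinarith)]
    ring
  rw [hq, heps, ← add_div]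
  apply div_nonneg
  · nlinarith [hE]
  · linarith
end auxvars

/-- If `(p₀,p₁,p₂) ∈ Δ_TF(K̄₃,P̄₃,P₃)`, then the matrix
`p₀·[[1,0],[0,0]] + p₁·[[1/3,1/3],[1/3,0]] + p₂·[[0,1/3],[1/3,1/3]]`
is positive semidefinite. -/
theorem triangle_free_profile_psd (p₀ p₁ p₂ : ℝ)
    (hmem : memDeltaClass triangleFreeClass (ms := fun _ => 3)
        ![(⊥ : SimpleGraph (Fin 3)), path3ᶜ, path3] ![p₀, p₁, p₂]) :
    (profileMatrix p₀ p₁ p₂).PosSemidef := by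
  obtain ⟨m, Gs, htf, hm, hd⟩ := hmem
  have hd0 : Filter.Tendsto (fun j => inducedDensity (⊥ : SimpleGraph (Fin 3)) (Gs j))
      Filter.atTop (nhds p₀) := by simpa using hd 0
  have hd1 : Filter.Tendsto (fun j => inducedDensity path3ᶜ (Gs j))
      Filter.atTop (nhds p₁) := by simpa using hd 1
  have hd2 : Filter.Tendsto (fun j => inducedDensity path3 (Gs j))
      Filter.atTop (nhds p₂) := by simpa using hd 2
  have hquad : ∀ x₁ x₂ : ℝ, 0 ≤ p₀ * x₁ ^ 2 + p₁ * (x₁ ^ 2 / 3 + 2 * (x₁ * x₂) / 3)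
      + p₂ * (2 * (x₁ * x₂) / 3 + x₂ ^ 2 / 3) := by
    intro x₁ x₂
    have hm' : Filter.Tendsto (fun j => (m j : ℝ)) Filter.atTop Filter.atTop :=
      tendsto_natCast_atTop_atTop.comp hm
    have hden : Filter.Tendsto (fun j => (m j : ℝ) - 2) Filter.atTop Filter.atTop := by
      simpa [sub_eq_add_neg] using Filter.tendsto_atTop_add_const_right Filter.atTop (-2) hm'
    have heps : Filter.Tendsto (fun j => (x₁ ^ 2 + x₂ ^ 2) / ((m j : ℝ) - 2))
        Filter.atTop (nhds 0) := Filter.Tendsto.div_atTop tendsto_const_nhds hden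
    have hF : Filter.Tendsto (fun j =>
        inducedDensity (⊥ : SimpleGraph (Fin 3)) (Gs j) * x₁ ^ 2
          + inducedDensity path3ᶜ (Gs j) * (x₁ ^ 2 / 3 + 2 * (x₁ * x₂) / 3)
          + inducedDensity path3 (Gs j) * (2 * (x₁ * x₂) / 3 + x₂ ^ 2 / 3)
          + (x₁ ^ 2 + x₂ ^ 2) / ((m j : ℝ) - 2)) Filter.atTop
        (nhds (p₀ * x₁ ^ 2 + p₁ * (x₁ ^ 2 / 3 + 2 * (x₁ * x₂) / 3)
          + p₂ * (2 * (x₁ * x₂) / 3 + x₂ ^ 2 / 3) + 0)) :=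
      (((hd0.mul_const _).add (hd1.mul_const _)).add (hd2.mul_const _)).add heps
    have hev : ∀ᶠ j in Filter.atTop,
        0 ≤ inducedDensity (⊥ : SimpleGraph (Fin 3)) (Gs j) * x₁ ^ 2
          + inducedDensity path3ᶜ (Gs j) * (x₁ ^ 2 / 3 + 2 * (x₁ * x₂) / 3)
          + inducedDensity path3 (Gs j) * (2 * (x₁ * x₂) / 3 + x₂ ^ 2 / 3)
          + (x₁ ^ 2 + x₂ ^ 2) / ((m j : ℝ) - 2) := by
      filter_upwards [hm.eventually_ge_atTop 3] with j hj
      have h := key_ineq (Gs j) (htf j) (by rw [Fintype.card_fin]; exact hj) x₁ x₂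
      rw [Fintype.card_fin] at h
      exact h
    have hlim := ge_of_tendsto hF hev
    linarith [hlim]
  rw [Matrix.posSemidef_iff_dotProduct_mulVec]
  constructor
  · show Matrix.conjTranspose (profileMatrix p₀ p₁ p₂) = profileMatrix p₀ p₁ p₂
    ext i j
    fin_cases i <;> fin_cases j <;>
      simp [profileMatrix, Matrix.conjTranspose_apply, Matrix.add_apply, Matrix.smul_apply]
  · intro x
    have hx := hquad (x 0) (x 1)
    have hcalc : dotProduct (star x) ((profileMatrix p₀ p₁ p₂).mulVec x)
        = p₀ * (x 0) ^ 2 + p₁ * ((x 0) ^ 2 / 3 + 2 * (x 0 * x 1) / 3)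
          + p₂ * (2 * (x 0 * x 1) / 3 + (x 1) ^ 2 / 3) := by
      simp [profileMatrix, dotProduct, Matrix.mulVec, Fin.sum_univ_two,
        Matrix.add_apply, Matrix.smul_apply]
      ring
    rw [hcalc]
    exact hx
end
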